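/- arXiv:1808.06522 — 9 statements merged into one kernel-verified Lean document; each statement's English description precedes it below -/
import Mathlib

section
/- For real numbers a, b with b > 0 and |a| < b, the integral ∫₀^∞ cosh(ax)/cosh(bx) dx equals (π/(2b))·sec(πa/(2b)). -/
open Real MeasureTheory Set

section aux
variable (a b : ℝ)

private noncomputable def gfun (x : ℝ) : ℝ := Real.exp ((a+b)*x) / (1 + Real.exp (2*b*x))

private lemma g_cont : Continuous (gfun a b) := by
  apply Continuous.div (by fun_prop) (by fun_prop)
  intro x; positivity

private lemma g_nonneg (x : ℝ) : 0 ≤ gfun a b x := by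
  unfold gfun; positivity

private lemma g_int_Ioi (hb : 0 < b) (ha : |a| < b) : IntegrableOn (gfun a b) (Ioi (0:ℝ)) := by
  have hab : 0 < b - a := by cases abs_lt.mp ha; linarith
  refine Integrable.mono' (exp_neg_integrableOn_Ioi 0 hab) ((g_cont a b).aestronglyMeasurable.restrict) ?_
  filter_upwards [ae_restrict_mem measurableSet_Ioi] with x hx
  rw [Real.norm_eq_abs, abs_of_nonneg (g_nonneg a b x)]
  unfold gfun
  rw [div_le_iff₀ (by positivity)]
  have heq : Real.exp (-(b-a)*x) * (1 + Real.exp (2*b*x)) = Real.exp (-(b-a)*x) + Real.exp ((a+b)*x) := by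
    rw [mul_add, mul_one, ← Real.exp_add]
    congr 2
    ring
  rw [heq]
  have := Real.exp_pos (-(b-a)*x)
  linarith

private lemma g_int_Iic (hb : 0 < b) (ha : |a| < b) : IntegrableOn (gfun a b) (Iic (0:ℝ)) := by
  have hab : 0 < a + b := by cases abs_lt.mp ha; linarith
  rw [← Measure.map_neg_eq_self (volume : Measure ℝ)]
  have m : MeasurableEmbedding fun x : ℝ => -x := (Homeomorph.neg ℝ).measurableEmbedding
  rw [m.integrableOn_map_iff]
  simp_rw [Function.comp_def, neg_preimage, neg_Iic, neg_zero]
  rw [integrableOn_Ici_iff_integrableOn_Ioi]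
  refine Integrable.mono' (exp_neg_integrableOn_Ioi 0 hab) ?_ ?_
  · exact ((g_cont a b).comp continuous_neg).aestronglyMeasurable.restrict
  · filter_upwards [ae_restrict_mem measurableSet_Ioi] with x hx
    rw [Real.norm_eq_abs, abs_of_nonneg (g_nonneg a b _)]
    unfold gfun
    rw [div_le_iff₀ (by positivity)]
    have : (a+b) * (-x) = -(a+b)*x := by ring
    rw [this]
    nlinarith [Real.exp_pos (-(a+b)*x), Real.exp_pos (2*b*(-x))]

private lemma g_integrable (hb : 0 < b) (ha : |a| < b) : Integrable (gfun a b) := by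
  rw [← integrableOn_univ, ← Iic_union_Ioi (a := (0:ℝ))]
  exact (g_int_Iic a b hb ha).union (g_int_Ioi a b hb ha)

private lemma g_add_identity (hb : 0 < b) (x : ℝ) :
    gfun a b x + gfun a b (-x) = Real.cosh (a*x) / Real.cosh (b*x) := by
  unfold gfun
  rw [Real.cosh_eq, Real.cosh_eq]
  have e1 : Real.exp ((a+b)*x) = Real.exp (a*x) * Real.exp (b*x) := by
    rw [← Real.exp_add]; congr 1; ring
  have e2 : Real.exp ((a+b)*(-x)) = (Real.exp (a*x) * Real.exp (b*x))⁻¹ := by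
    rw [← Real.exp_add, ← Real.exp_neg]; congr 1; ring
  have e3 : Real.exp (2*b*x) = Real.exp (b*x) * Real.exp (b*x) := by
    rw [← Real.exp_add]; congr 1; ring
  have e4 : Real.exp (2*b*(-x)) = (Real.exp (b*x) * Real.exp (b*x))⁻¹ := by
    rw [← Real.exp_add, ← Real.exp_neg]; congr 1; ring
  have e5 : Real.exp (-(a*x)) = (Real.exp (a*x))⁻¹ := Real.exp_neg _
  have e6 : Real.exp (-(b*x)) = (Real.exp (b*x))⁻¹ := Real.exp_neg _
  rw [e1, e2, e3, e4, e5, e6]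
  have hA := Real.exp_pos (a*x)
  have hB := Real.exp_pos (b*x)
  have h1 : (0:ℝ) < 1 + Real.exp (b*x) * Real.exp (b*x) := by positivity
  have h2 : (0:ℝ) < 1 + (Real.exp (b*x) * Real.exp (b*x))⁻¹ := by positivity
  have h3 : (0:ℝ) < Real.exp (b*x) + (Real.exp (b*x))⁻¹ := by positivity
  field_simp
  ring

end aux


private lemma beta_real (s : ℝ) (h0 : 0 < s) (h1 : s < 1) :
    ∫ t in (0:ℝ)..1, t^(s-1) * (1-t)^(-s) = π / Real.sin (π*s) := by
  have hs : 0 < (s:ℂ).re := by simpa using h0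
  have ht : 0 < ((1:ℂ)-s).re := by
    simp only [Complex.sub_re, Complex.one_re, Complex.ofReal_re]
    linarith
  have h := Complex.Gamma_mul_Gamma_eq_betaIntegral hs ht
  have hbeta : Complex.betaIntegral s (1-s)
      = ((∫ t in (0:ℝ)..1, t^(s-1) * (1-t)^(-s) : ℝ) : ℂ) := by
    rw [Complex.betaIntegral, ← intervalIntegral.integral_ofReal]
    refine intervalIntegral.integral_congr fun x hx => ?_
    rw [uIcc_of_le zero_le_one] at hx
    obtain ⟨hx0, hx1⟩ := hx
    rw [Complex.ofReal_mul, Complex.ofReal_cpow hx0,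
      Complex.ofReal_cpow (by linarith : (0:ℝ) ≤ 1-x)]
    push_cast
    ring
  have hG : Complex.Gamma s * Complex.Gamma (1-s)
      = ((Real.Gamma s * Real.Gamma (1-s) : ℝ) : ℂ) := by
    rw [Complex.ofReal_mul, ← Complex.Gamma_ofReal, ← Complex.Gamma_ofReal]
    push_cast
    ring_nf
  rw [hG, hbeta] at h
  rw [show (s:ℂ) + (1 - s) = 1 by ring, Complex.Gamma_one, one_mul] at h
  have := Complex.ofReal_inj.mp h
  rw [← this, Real.Gamma_mul_Gamma_one_sub]

theorem cosh_div_cosh_integral (a b : ℝ) (hb : 0 < b) (ha : |a| < b) :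
    ∫ x in Set.Ioi (0:ℝ), Real.cosh (a * x) / Real.cosh (b * x)
      = (π / (2 * b)) * (1 / Real.cos (π * a / (2 * b))) := by
  obtain ⟨ha1, ha2⟩ := abs_lt.mp ha
  set s : ℝ := (a+b)/(2*b) with hs_def
  have hs0 : 0 < s := div_pos (by linarith) (by linarith)
  have hs1 : s < 1 := by rw [div_lt_one (by positivity)]; linarith
  set φ : ℝ → ℝ := fun x => (1 + Real.exp (-(2*b*x)))⁻¹ with hφ_def
  set φd : ℝ → ℝ := fun x => 2*b*Real.exp (-(2*b*x)) / (1 + Real.exp (-(2*b*x)))^2 with hφd_def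
  have hDpos : ∀ x : ℝ, (0:ℝ) < 1 + Real.exp (-(2*b*x)) := fun x => by positivity
  -- derivative
  have hderiv : ∀ x : ℝ, HasDerivAt φ (φd x) x := by
    intro x
    have h1 : HasDerivAt (fun y : ℝ => -(2*b*y)) (-(2*b)) x := by
      simpa [mul_assoc] using ((hasDerivAt_id x).const_mul (-(2*b)))
    have h2 := h1.exp
    have h3 := (h2.const_add 1).inv (ne_of_gt (hDpos x))
    convert h3 using 1
    show 2*b*Real.exp (-(2*b*x)) / (1 + Real.exp (-(2*b*x)))^2 = _
    field_simp
    all_goals rfl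
  -- injectivity
  have hmono : StrictMono φ := by
    intro x y hxy
    simp only [hφ_def]
    have : Real.exp (-(2*b*y)) < Real.exp (-(2*b*x)) := by
      apply Real.exp_lt_exp.mpr; nlinarith
    rw [inv_lt_inv₀ (hDpos x) (hDpos y)]
    linarith
  -- image
  have himage : φ '' Set.univ = Set.Ioo (0:ℝ) 1 := by
    ext t
    simp only [Set.image_univ, Set.mem_range, Set.mem_Ioo]
    constructor
    · rintro ⟨x, rfl⟩
      constructor
      · positivity
      · rw [inv_lt_one_iff₀]
        right
        have := Real.exp_pos (-(2*b*x))
        linarith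
    · rintro ⟨ht0, ht1⟩
      refine ⟨-Real.log ((1-t)/t) / (2*b), ?_⟩
      have hlt : (0:ℝ) < (1-t)/t := div_pos (by linarith) ht0
      simp only [hφ_def]
      rw [show -(2*b*(-Real.log ((1-t)/t) / (2*b))) = Real.log ((1-t)/t) by field_simp,
        Real.exp_log hlt]
      rw [inv_eq_iff_eq_inv, eq_comm, inv_eq_iff_eq_inv]
      field_simp
      ring
  -- change of variables
  have hCoV := integral_image_eq_integral_abs_deriv_smul (f := φ) (f' := φd)
      MeasurableSet.univ (fun x _ => (hderiv x).hasDerivWithinAt)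
      (hmono.injective.injOn) (fun t => t^(s-1) * (1-t)^(-s))
  rw [himage, Measure.restrict_univ] at hCoV
  -- pointwise identity for the substituted integrand
  have hpt : ∀ x : ℝ, |φd x| • ((φ x)^(s-1) * (1-φ x)^(-s)) = 2*b* gfun a b x := by
    intro x
    set E := Real.exp (-(2*b*x)) with hE_def
    have hE : 0 < E := Real.exp_pos _
    have hD : (0:ℝ) < 1 + E := by positivity
    have habs : |φd x| = 2*b*E/(1+E)^2 := by
      rw [hφd_def]; exact abs_of_nonneg (by positivity)
    have hφx : φ x = (1+E)⁻¹ := rfl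
    have h1φ : 1 - φ x = E/(1+E) := by rw [hφx]; field_simp; ring
    rw [smul_eq_mul, habs, hφx, h1φ]
    have r1 : ((1+E)⁻¹)^(s-1) = (1+E)^(1-s) := by
      rw [Real.inv_rpow hD.le, ← Real.rpow_neg hD.le, neg_sub]
    have r2 : (E/(1+E))^(-s) = E^(-s) / (1+E)^(-s) := Real.div_rpow hE.le hD.le _
    have r3 : (1+E)^(1-s) / (1+E)^(-s) = 1+E := by
      rw [← Real.rpow_sub hD]
      norm_num
    have r4 : E * E^(-s) = Real.exp ((a-b)*x) := by
      rw [hE_def, ← Real.exp_mul, ← Real.exp_add]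
      congr 1
      rw [hs_def]
      field_simp
      ring
    have hQ : (0:ℝ) < (1+E)^(-s) := Real.rpow_pos_of_pos hD _
    rw [r1, r2]
    calc 2*b*E/(1+E)^2 * ((1+E)^(1-s) * (E^(-s)/(1+E)^(-s)))
        = 2*b*(E*E^(-s)) * ((1+E)^(1-s)/(1+E)^(-s)) / (1+E)^2 := by ring
      _ = 2*b*Real.exp ((a-b)*x) * (1+E) / (1+E)^2 := by rw [r3, r4]
      _ = 2*b*Real.exp ((a-b)*x) / (1+E) := by
          field_simp
      _ = 2*b* gfun a b x := by
          unfold gfun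
          rw [hE_def, show Real.exp ((a+b)*x) = Real.exp ((a-b)*x) * Real.exp (2*b*x) by
            rw [← Real.exp_add]; congr 1; ring, Real.exp_neg]
          have h2b := Real.exp_pos (2*b*x)
          field_simp
          ring
  -- pull the constant out
  have hconst : (∫ x, |φd x| • ((φ x)^(s-1) * (1-φ x)^(-s)))
      = (2*b) * ∫ x, gfun a b x := by
    simp_rw [hpt]
    exact integral_const_mul _ _
  -- identify the full-line integral with the half-line cosh integral
  have ha' : |(-a)| < b := by rwa [abs_neg]
  have hneg : ∀ x : ℝ, gfun a b (-x) = gfun (-a) b x := by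
    intro x
    unfold gfun
    rw [show (a+b)*(-x) = -((a+b)*x) by ring, Real.exp_neg,
        show 2*b*(-x) = -(2*b*x) by ring, Real.exp_neg,
        show Real.exp ((-a+b)*x) = Real.exp (2*b*x) / Real.exp ((a+b)*x) by
          rw [← Real.exp_sub]; congr 1; ring]
    have p1 := Real.exp_pos ((a+b)*x)
    have p2 := Real.exp_pos (2*b*x)
    field_simp
    ring
  have hsplit : (∫ x, gfun a b x)
      = ∫ x in Set.Ioi (0:ℝ), Real.cosh (a * x) / Real.cosh (b * x) := by
    rw [← intervalIntegral.integral_Iic_add_Ioi (g_int_Iic a b hb ha) (g_int_Ioi a b hb ha)]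
    have h2 : ∫ x in Set.Iic (0:ℝ), gfun a b x = ∫ x in Set.Ioi (0:ℝ), gfun (-a) b x := by
      have h3 := integral_comp_neg_Ioi (0:ℝ) (gfun a b)
      rw [neg_zero] at h3
      rw [← h3]
      exact setIntegral_congr_fun measurableSet_Ioi fun x _ => hneg x
    rw [h2, ← integral_add (g_int_Ioi (-a) b hb ha') (g_int_Ioi a b hb ha)]
    refine setIntegral_congr_fun measurableSet_Ioi fun x _ => ?_
    rw [← hneg x, add_comm]
    exact g_add_identity a b hb x
  -- beta evaluation
  have hbeta := beta_real s hs0 hs1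
  rw [intervalIntegral.integral_of_le zero_le_one, integral_Ioc_eq_integral_Ioo] at hbeta
  have hfin : π / Real.sin (π * s)
      = 2*b * ∫ x in Set.Ioi (0:ℝ), Real.cosh (a * x) / Real.cosh (b * x) := by
    rw [← hbeta, hCoV, hconst, hsplit]
  rw [show π * s = π * a / (2*b) + π/2 by rw [hs_def]; field_simp,
    Real.sin_add_pi_div_two] at hfin
  have hb' : (2*b) ≠ 0 := by positivity
  have hI : (∫ x in Set.Ioi (0:ℝ), Real.cosh (a * x) / Real.cosh (b * x))
      = (π / Real.cos (π * a / (2*b))) / (2*b) := by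
    rw [eq_div_iff hb']
    linarith [hfin]
  rw [hI]
  ring
end

section
/- For a real number a with |a| < π/2, the integral ∫₀^∞ cos(2ax)/cosh(πx) dx equals (1/2)·sech(a). -/
open Real MeasureTheory Set

noncomputable def rcF (a : ℝ) (x : ℝ) : ℂ :=
  Complex.exp (-(2 * a * x) * Complex.I) / (Real.cosh (π * x) : ℂ)

lemma rc_subst_range :
    Set.range (fun x : ℝ => (1 + Real.exp (2 * π * x))⁻¹) = Set.Ioo (0:ℝ) 1 := by
  ext t
  constructor
  · rintro ⟨x, rfl⟩
    have hE : 0 < Real.exp (2 * π * x) := Real.exp_pos _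
    constructor
    · positivity
    · rw [inv_lt_one_iff₀]; right; linarith
  · rintro ⟨ht0, ht1⟩
    refine ⟨Real.log (t⁻¹ - 1) / (2 * π), ?_⟩
    have hπ : (0:ℝ) < π := Real.pi_pos
    have h1 : (1:ℝ) < t⁻¹ := (one_lt_inv_iff₀).2 ⟨ht0, ht1⟩
    have : Real.exp (2 * π * (Real.log (t⁻¹ - 1) / (2 * π))) = t⁻¹ - 1 := by
      rw [mul_div_cancel₀ _ (by positivity), Real.exp_log (by linarith)]
    show (1 + Real.exp (2 * π * (Real.log (t⁻¹ - 1) / (2 * π))))⁻¹ = t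
    rw [this]
    field_simp
    ring

lemma rc_deriv (x : ℝ) :
    HasDerivAt (fun x : ℝ => (1 + Real.exp (2 * π * x))⁻¹)
      (-(2 * π * Real.exp (2 * π * x)) / (1 + Real.exp (2 * π * x)) ^ 2) x := by
  have h1 : HasDerivAt (fun x : ℝ => 1 + Real.exp (2 * π * x))
      (2 * π * Real.exp (2 * π * x)) x := by
    have := (Real.hasDerivAt_exp (2 * π * x)).comp x
      ((hasDerivAt_id x).const_mul (2 * π))
    simpa [mul_comm] using (this.const_add 1)
  exact h1.inv (by positivity)

lemma rc_inj : Set.InjOn (fun x : ℝ => (1 + Real.exp (2 * π * x))⁻¹) Set.univ := by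
  intro x _ y _ h
  have hπ : (0:ℝ) < π := Real.pi_pos
  simp only at h
  have hx : (0:ℝ) < 1 + Real.exp (2 * π * x) := by positivity
  have hy : (0:ℝ) < 1 + Real.exp (2 * π * y) := by positivity
  have := inv_injective h
  have hE : Real.exp (2 * π * x) = Real.exp (2 * π * y) := by linarith
  have h2 := Real.exp_injective hE
  exact mul_left_cancel₀ (by positivity : (2*π:ℝ) ≠ 0) h2

lemma rc_pointwise (a x : ℝ) :
    |(-(2 * π * Real.exp (2 * π * x)) / (1 + Real.exp (2 * π * x)) ^ 2)| •
      (((((1 + Real.exp (2 * π * x))⁻¹ : ℝ) : ℂ)) ^ ((1/2 + (a/π) * Complex.I) - 1) *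
        (1 - (((1 + Real.exp (2 * π * x))⁻¹ : ℝ) : ℂ)) ^ ((1 - (1/2 + (a/π) * Complex.I)) - 1))
      = (π : ℂ) * rcF a x := by
  have hπ : (0:ℝ) < π := Real.pi_pos
  have hπ' : (π:ℂ) ≠ 0 := Complex.ofReal_ne_zero.mpr hπ.ne'
  set E := Real.exp (2 * π * x) with hE_def
  have hE : 0 < E := Real.exp_pos _
  have h1E : (0:ℝ) < 1 + E := by linarith
  set t : ℝ := (1 + E)⁻¹ with ht_def
  have ht : 0 < t := by positivity
  have ht1 : t < 1 := by
    rw [ht_def, inv_lt_one_iff₀]; right; linarith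
  have h1t : 0 < 1 - t := by linarith
  have h1t_eq : 1 - t = E * t := by
    rw [ht_def]; field_simp; ring
  -- absolute value
  have habs : |(-(2 * π * E) / (1 + E) ^ 2)| = 2 * π * E / (1 + E) ^ 2 := by
    rw [abs_div, abs_neg, abs_of_pos (by positivity), abs_of_pos (by positivity)]
  -- cpow as exp
  have hcp1 : ((t:ℂ)) ^ ((1/2 + (a/π) * Complex.I) - 1)
      = Complex.exp ((Real.log t : ℂ) * ((1/2 + (a/π) * Complex.I) - 1)) := by
    rw [Complex.cpow_def_of_ne_zero (Complex.ofReal_ne_zero.mpr ht.ne'),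
      Complex.ofReal_log ht.le]
  have hcast : (1 : ℂ) - (t:ℂ) = ((1 - t : ℝ) : ℂ) := by push_cast; ring
  have hcp2 : ((1:ℂ) - (t:ℂ)) ^ ((1 - (1/2 + (a/π) * Complex.I)) - 1)
      = Complex.exp ((Real.log (1 - t) : ℂ) * ((1 - (1/2 + (a/π) * Complex.I)) - 1)) := by
    rw [hcast, Complex.cpow_def_of_ne_zero (Complex.ofReal_ne_zero.mpr h1t.ne'),
      Complex.ofReal_log h1t.le]
  set L := Real.log (1 + E) with hL_def
  have hlogt : Real.log t = -L := by rw [ht_def, Real.log_inv]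
  have hlog1t : Real.log (1 - t) = 2 * π * x - L := by
    rw [h1t_eq, Real.log_mul hE.ne' ht.ne', hlogt, hE_def, Real.log_exp]; ring
  rw [hcp1, hcp2, ← Complex.exp_add, hlogt, hlog1t]
  have hexpo : ((-L : ℝ) : ℂ) * ((1/2 + (a/π) * Complex.I) - 1)
      + ((2 * π * x - L : ℝ) : ℂ) * ((1 - (1/2 + (a/π) * Complex.I)) - 1)
      = (L : ℂ) + (-(π * x : ℝ) : ℂ) + (-(2 * a * x) : ℝ) * Complex.I := by
    push_cast
    field_simp
    ring
  rw [hexpo, Complex.exp_add, Complex.exp_add, ← Complex.ofReal_neg, ← Complex.ofReal_exp, ← Complex.ofReal_exp,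
    hL_def, Real.exp_log h1E]
  rw [Complex.real_smul, habs, rcF]
  have hkey : (2 * π * E / (1 + E) ^ 2) * ((1 + E) * Real.exp (-(π * x)))
      = π / Real.cosh (π * x) := by
    have hu : 0 < Real.exp (π * x) := Real.exp_pos _
    have hEu : E = Real.exp (π * x) * Real.exp (π * x) := by
      rw [hE_def, ← Real.exp_add]; ring_nf
    have hcosh : Real.cosh (π * x) = (Real.exp (π * x) + Real.exp (-(π * x))) / 2 :=
      Real.cosh_eq _
    rw [hEu, hcosh, Real.exp_neg]
    have hch : 0 < Real.exp (π*x) + (Real.exp (π*x))⁻¹ := by positivity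
    field_simp
    ring
  have hexparg : ((-(2 * a * x) : ℝ) : ℂ) * Complex.I = -(2 * (a:ℂ) * (x:ℂ)) * Complex.I := by
    push_cast; ring
  rw [hexparg]
  have hch' : (Real.cosh (π * x) : ℂ) ≠ 0 :=
    Complex.ofReal_ne_zero.mpr (Real.cosh_pos _).ne'
  rw [show ((2 * π * E / (1 + E) ^ 2 : ℝ) : ℂ) *
      (((1 + E : ℝ) : ℂ) * ((Real.exp (-(π * x)) : ℝ) : ℂ) *
        Complex.exp (-(2 * ↑a * ↑x) * Complex.I))
      = ((2 * π * E / (1 + E) ^ 2 * ((1 + E) * Real.exp (-(π * x))) : ℝ) : ℂ) *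
        Complex.exp (-(2 * ↑a * ↑x) * Complex.I) by push_cast; ring, hkey]
  push_cast
  field_simp

theorem ramanujan_cos_div_cosh_integral (a : ℝ) (ha : |a| < π / 2) :
    ∫ x in Set.Ioi (0:ℝ), Real.cos (2 * a * x) / Real.cosh (π * x)
      = (1 / 2) * (1 / Real.cosh a) := by
  have hπ : (0:ℝ) < π := Real.pi_pos
  set s : ℂ := 1/2 + (a/π) * Complex.I with hs_def
  have hs_re : s.re = 1/2 := by simp [hs_def]
  have h1s_re : (1 - s).re = 1/2 := by simp [hs_def]; norm_num
  -- Beta value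
  have hsin : Complex.sin (π * s) = (Real.cosh a : ℂ) := by
    have : (π : ℂ) * s = π/2 + a * Complex.I := by
      have hπ' : (π:ℂ) ≠ 0 := Complex.ofReal_ne_zero.mpr hπ.ne'
      rw [hs_def]; field_simp
    rw [this, Complex.sin_add]
    simp [Complex.sin_pi_div_two, Complex.cos_pi_div_two, Complex.cos_mul_I,
      Complex.ofReal_cosh]
  have hBval : Complex.betaIntegral s (1 - s) = (π : ℂ) / (Real.cosh a : ℂ) := by
    have h := Complex.Gamma_mul_Gamma_eq_betaIntegral
      (by rw [hs_re]; norm_num : 0 < s.re) (by rw [h1s_re]; norm_num : 0 < (1-s).re)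
    rw [Complex.Gamma_mul_Gamma_one_sub] at h
    have h2 : s + (1 - s) = 1 := by ring
    rw [h2, Complex.Gamma_one, one_mul] at h
    rw [← h, hsin]
  -- Beta integral as a set integral over Ioo 0 1
  set g : ℝ → ℂ := fun t => ((t:ℝ):ℂ) ^ (s-1) * (1 - ((t:ℝ):ℂ)) ^ ((1-s)-1) with hg_def
  have hBset : Complex.betaIntegral s (1 - s) = ∫ t in Set.Ioo (0:ℝ) 1, g t := by
    rw [Complex.betaIntegral, intervalIntegral.integral_of_le zero_le_one,
      MeasureTheory.integral_Ioc_eq_integral_Ioo]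
  set f : ℝ → ℝ := fun x => (1 + Real.exp (2 * π * x))⁻¹ with hf_def
  set f' : ℝ → ℝ := fun x => -(2 * π * Real.exp (2 * π * x)) / (1 + Real.exp (2 * π * x)) ^ 2
    with hf'_def
  have himg : f '' Set.univ = Set.Ioo (0:ℝ) 1 := by rw [Set.image_univ, hf_def, rc_subst_range]
  have hderiv : ∀ x ∈ Set.univ, HasDerivWithinAt f (f' x) Set.univ x :=
    fun x _ => (rc_deriv x).hasDerivWithinAt
  have hpt : ∀ x : ℝ, |f' x| • g (f x) = (π:ℂ) * rcF a x := by
    intro x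
    have := rc_pointwise a x
    simpa [hf_def, hf'_def, hg_def, hs_def] using this
  have hchange : ∫ t in Set.Ioo (0:ℝ) 1, g t = ∫ x : ℝ, (π:ℂ) * rcF a x := by
    rw [← himg,
      MeasureTheory.integral_image_eq_integral_abs_deriv_smul MeasurableSet.univ hderiv rc_inj g,
      MeasureTheory.setIntegral_univ]
    exact integral_congr_ae (Filter.Eventually.of_forall hpt)
  -- integrability of rcF
  have hbeta_int : IntegrableOn g (Set.Ioo (0:ℝ) 1) := by
    have hb := Complex.betaIntegral_convergent
      (by rw [hs_re]; norm_num : 0 < s.re) (by rw [h1s_re]; norm_num : 0 < (1-s).re)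
    rw [intervalIntegrable_iff_integrableOn_Ioc_of_le zero_le_one] at hb
    exact hb.mono_set Set.Ioo_subset_Ioc_self
  have hFint : Integrable (rcF a) := by
    have h1 : IntegrableOn (fun x => |f' x| • g (f x)) Set.univ :=
      (MeasureTheory.integrableOn_image_iff_integrableOn_abs_deriv_smul MeasurableSet.univ
        hderiv rc_inj g).mp (himg ▸ hbeta_int)
    rw [MeasureTheory.integrableOn_univ] at h1
    have h2 : Integrable (fun x => (π:ℂ) * rcF a x) :=
      h1.congr (Filter.Eventually.of_forall hpt)
    have h3 := h2.const_mul ((π:ℂ)⁻¹)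
    have hπ' : (π:ℂ) ≠ 0 := Complex.ofReal_ne_zero.mpr hπ.ne'
    refine h3.congr (Filter.Eventually.of_forall fun x => ?_)
    field_simp
  -- value of the full-line complex integral
  have hπ' : (π:ℂ) ≠ 0 := Complex.ofReal_ne_zero.mpr hπ.ne'
  have hFval : ∫ x : ℝ, rcF a x = ((1 / Real.cosh a : ℝ) : ℂ) := by
    have h1 : (π:ℂ) * ∫ x : ℝ, rcF a x = (π:ℂ) / (Real.cosh a : ℂ) := by
      rw [← MeasureTheory.integral_const_mul, ← hchange, ← hBset, hBval]
    have hch : (Real.cosh a : ℂ) ≠ 0 := Complex.ofReal_ne_zero.mpr (Real.cosh_pos a).ne'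
    have h2 : (π:ℂ) * ∫ x : ℝ, rcF a x = (π:ℂ) * ((1 / Real.cosh a : ℝ) : ℂ) := by
      rw [h1]; push_cast; field_simp
    exact mul_left_cancel₀ hπ' h2
  -- pass to real parts
  have hre : ∀ x : ℝ, (rcF a x).re = Real.cos (2*a*x) / Real.cosh (π*x) := by
    intro x
    rw [rcF, Complex.div_ofReal_re]
    congr 1
    rw [show (-(2*(a:ℂ)*(x:ℂ)) * Complex.I) = ((-(2*a*x):ℝ):ℂ) * Complex.I by push_cast; ring,
      Complex.exp_ofReal_mul_I_re, Real.cos_neg]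
  have hreal : ∫ x : ℝ, Real.cos (2*a*x) / Real.cosh (π*x) = 1 / Real.cosh a := by
    have h1 := integral_re hFint
    simp only [RCLike.re_to_complex] at h1
    rw [hFval] at h1
    simp only [Complex.ofReal_re] at h1
    calc ∫ x : ℝ, Real.cos (2*a*x) / Real.cosh (π*x)
        = ∫ x : ℝ, (rcF a x).re := by
          exact integral_congr_ae (Filter.Eventually.of_forall fun x => (hre x).symm)
      _ = 1 / Real.cosh a := h1
  -- evenness
  have heven : ∀ x : ℝ, Real.cos (2*a*|x|) / Real.cosh (π*|x|)
      = Real.cos (2*a*x) / Real.cosh (π*x) := by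
    intro x
    rcases abs_choice x with h | h <;> rw [h] <;>
      simp [mul_neg, Real.cos_neg, Real.cosh_neg]
  have h2 := integral_comp_abs (f := fun y => Real.cos (2*a*y) / Real.cosh (π*y))
  simp only [heven] at h2
  rw [hreal] at h2
  linarith
end

section
/- For a real number a with 0 < |a| < 1, the integral ∫₀^∞ (sinh(ax)/sinh(x))² dx equals (1/2)·(1 − aπ·cot(aπ)). -/
open Real MeasureTheory Set intervalIntegral
open scoped Topology

noncomputable section

local notation "I" => Complex.I

lemma int_ne_real (a : ℝ) (ha0 : a ≠ 0) (ha : |a| < 1) (n : ℤ) : a ≠ (n : ℝ) := by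
  rcases eq_or_ne n 0 with rfl | hn
  · simpa using ha0
  · intro h
    have h1 : (1:ℝ) ≤ |(n:ℝ)| := by
      have := Int.one_le_abs hn
      calc (1:ℝ) ≤ (|n| : ℤ) := by exact_mod_cast this
        _ = |(n:ℝ)| := by push_cast; ring
    rw [h] at ha; linarith

lemma J_eq (a : ℝ) (ha0 : a ≠ 0) (ha : |a| < 1) (n : ℤ) :
    (∫ x in (-π)..π, Complex.exp (-(n * I * x)) * Complex.cos (a * x))
      = Complex.exp (π * I * n) * Complex.sin (a * π) * (1/((a:ℂ) - n) + 1/((a:ℂ) + n)) := by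
  have hans : ((a:ℂ) - n) ≠ 0 := by
    intro h
    exact int_ne_real a ha0 ha n (by exact_mod_cast sub_eq_zero.mp h)
  have hanp : ((a:ℂ) + n) ≠ 0 := by
    intro h
    have : (a:ℂ) = ((-n : ℤ) : ℂ) := by push_cast; linear_combination h
    exact int_ne_real a ha0 ha (-n) (by exact_mod_cast this)
  have hc1 : (I * ((a:ℂ) - n)) ≠ 0 := mul_ne_zero Complex.I_ne_zero hans
  have hc2 : (-(I * ((a:ℂ) + n))) ≠ 0 := neg_ne_zero.mpr (mul_ne_zero Complex.I_ne_zero hanp)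
  have key : ∀ x : ℝ, Complex.exp (-(n * I * x)) * Complex.cos (a * x)
      = (Complex.exp ((I * ((a:ℂ) - n)) * x) + Complex.exp ((-(I * ((a:ℂ) + n))) * x)) / 2 := by
    intro x
    rw [Complex.cos, ← mul_div_assoc, mul_add, ← Complex.exp_add, ← Complex.exp_add]
    ring_nf
  rw [intervalIntegral.integral_congr (fun x _ => key x)]
  rw [intervalIntegral.integral_div]
  have hint : ∀ c : ℂ, IntervalIntegrable (fun x : ℝ => Complex.exp (c * x)) volume (-π) π :=
    fun c => (Continuous.intervalIntegrable (by fun_prop) _ _)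
  rw [intervalIntegral.integral_add (hint _) (hint _)]
  rw [integral_exp_mul_complex hc1, integral_exp_mul_complex hc2]
  set e := Complex.exp (π * I * n) with he
  have he0 : e ≠ 0 := Complex.exp_ne_zero _
  have he2 : e * e = 1 := by
    rw [he, ← Complex.exp_add]
    have : (π:ℂ) * I * n + π * I * n = n * (2 * π * I) := by ring
    rw [this, Complex.exp_int_mul_two_pi_mul_I]
  have hei : e⁻¹ = e := by
    field_simp
    linear_combination -he2
  have E1 : Complex.exp ((I * ((a:ℂ) - n)) * π) = Complex.exp ((a:ℂ) * π * I) * e := by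
    rw [← hei, he, ← Complex.exp_neg, ← Complex.exp_add]; congr 1; push_cast; ring
  have E2 : Complex.exp ((I * ((a:ℂ) - n)) * (-π:ℝ)) = Complex.exp (-((a:ℂ) * π * I)) * e := by
    rw [he, ← Complex.exp_add]; congr 1; push_cast; ring
  have E3 : Complex.exp ((-(I * ((a:ℂ) + n))) * π) = Complex.exp (-((a:ℂ) * π * I)) * e := by
    rw [← hei, he, ← Complex.exp_neg, ← Complex.exp_add]; congr 1; push_cast; ring
  have E4 : Complex.exp ((-(I * ((a:ℂ) + n))) * (-π:ℝ)) = Complex.exp ((a:ℂ) * π * I) * e := by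
    rw [he, ← Complex.exp_add]; congr 1; push_cast; ring
  have hIne : I ≠ 0 := Complex.I_ne_zero
  have hs2 : Complex.sin ((a:ℂ) * π)
      = (Complex.exp ((a:ℂ) * π * I) - Complex.exp (-((a:ℂ) * π * I))) / (2 * I) := by
    rw [Complex.sin]
    field_simp
    linear_combination (Complex.exp (-((a:ℂ) * π * I)) - Complex.exp ((a:ℂ) * π * I)) * Complex.I_sq
  rw [E1, E2, E3, E4, hs2]
  field_simp
  ring

end

noncomputable section
local notation "I" => Complex.I

lemma hasSum_int_cot (a : ℝ) (ha0 : a ≠ 0) (ha : |a| < 1) :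
    HasSum (fun n : ℤ => (a * Real.sin (a*π) / π) / (a^2 - (n:ℝ)^2)) (Real.cos (a*π)) := by
  haveI : Fact (0 < 2*π) := ⟨by positivity⟩
  have hπ : (π:ℝ) ≠ 0 := pi_ne_zero
  set g : ℝ → ℂ := fun x : ℝ => Complex.cos (a*x) with hg
  have hcont : Continuous (AddCircle.liftIco (2*π) (-π) g) := by
    apply AddCircle.liftIco_continuous
    · show Complex.cos _ = Complex.cos _
      have h1 : -π + 2*π = π := by ring
      rw [h1]
      push_cast
      rw [show ((a:ℂ) * (-(π:ℂ))) = -((a:ℂ) * π) by ring, Complex.cos_neg]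
    · exact (Complex.continuous_cos.comp (by fun_prop)).continuousOn
  set F : C(AddCircle (2*π), ℂ) := ⟨_, hcont⟩ with hF
  have hcoeff : ∀ n : ℤ, fourierCoeff (⇑F) n
      = Complex.exp (π * I * n) * (((a * Real.sin (a*π) / π : ℝ) : ℂ) / ((a:ℂ)^2 - (n:ℂ)^2)) := by
    intro n
    have hans : ((a:ℂ) - n) ≠ 0 := by
      intro h
      exact int_ne_real a ha0 ha n (by exact_mod_cast sub_eq_zero.mp h)
    have hanp : ((a:ℂ) + n) ≠ 0 := by
      intro h
      have : (a:ℂ) = ((-n : ℤ) : ℂ) := by push_cast; linear_combination h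
      exact int_ne_real a ha0 ha (-n) (by exact_mod_cast this)
    show fourierCoeff (AddCircle.liftIco (2*π) (-π) g) n = _
    rw [fourierCoeff_liftIco_eq g n, fourierCoeffOn_eq_integral]
    have hker : ∀ x : ℝ, x ∈ Set.uIcc (-π) (-π + 2*π) →
        (fourier (-n) (x : AddCircle ((-π + 2*π) - (-π)))) • g x
          = Complex.exp (-(n * I * x)) * Complex.cos (a * x) := by
      intro x _
      rw [fourier_coe_apply, smul_eq_mul]
      congr 1
      congr 1
      field_simp [Complex.ofReal_ne_zero.mpr hπ]
      push_cast; ring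
    rw [intervalIntegral.integral_congr hker]
    have h1 : -π + 2*π = π := by rw [neg_add_eq_sub]; ring
    rw [h1, J_eq a ha0 ha n]
    have h2 : (π - -π) = 2*π := by ring
    rw [h2, Complex.real_smul]
    have hπc : (π:ℂ) ≠ 0 := Complex.ofReal_ne_zero.mpr hπ
    have han2 : ((a:ℂ)^2 - (n:ℂ)^2) ≠ 0 := by
      rw [show ((a:ℂ)^2 - (n:ℂ)^2) = ((a:ℂ) - n) * ((a:ℂ) + n) by ring]
      exact mul_ne_zero hans hanp
    push_cast
    field_simp
    ring
  have habs : ∀ n : ℤ, ‖Complex.exp (π * I * n)‖ = 1 := by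
    intro n
    rw [Complex.norm_exp]
    norm_num
  have ha2 : a^2 < 1 := by
    have := abs_lt.mp ha
    nlinarith [this.1, this.2]
  have hsum : Summable (fourierCoeff (⇑F)) := by
    apply Summable.of_norm_bounded_eventually
      (g := fun n : ℤ => (|a * Real.sin (a*π) / π| / (1 - a^2)) * (1/(n:ℝ)^2))
    · exact ((summable_one_div_int_pow.mpr one_lt_two).mul_left _)
    · rw [Filter.eventually_cofinite]
      apply Set.Finite.subset (Set.finite_singleton (0:ℤ))
      intro n hn
      simp only [Set.mem_setOf_eq, Set.mem_singleton_iff] at *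
      by_contra hn0
      apply hn
      have h1n : (1:ℝ) ≤ (n:ℝ)^2 := by
        have := Int.one_le_abs hn0
        have h2 : (1:ℝ) ≤ |(n:ℝ)| := by exact_mod_cast (by exact_mod_cast this : (1:ℤ) ≤ |n|)
        nlinarith [abs_nonneg (n:ℝ), sq_abs (n:ℝ)]
      rw [hcoeff n, norm_mul]
      have habs1 : ‖Complex.exp (π * I * n)‖ = 1 := habs n
      rw [habs1, one_mul]
      rw [show ((a:ℂ)^2 - (n:ℂ)^2) = (((a^2 - (n:ℝ)^2 : ℝ)) : ℂ) by push_cast; ring]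
      rw [norm_div, Complex.norm_real, Complex.norm_real]
      have hpos : 0 < (n:ℝ)^2 - a^2 := by nlinarith
      have h1a2 : 0 < 1 - a^2 := by nlinarith
      rw [Real.norm_eq_abs, Real.norm_eq_abs, abs_sub_comm, abs_of_pos hpos]
      have hge : (1 - a^2) * (n:ℝ)^2 ≤ (n:ℝ)^2 - a^2 := by nlinarith
      have step : |a * Real.sin (a*π) / π| / ((n:ℝ)^2 - a^2)
          ≤ |a * Real.sin (a*π) / π| / ((1 - a^2) * (n:ℝ)^2) := by
        rw [div_le_div_iff₀ hpos (by positivity)]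
        nlinarith [abs_nonneg (a * Real.sin (a*π) / π)]
      refine step.trans (le_of_eq ?_)
      rw [div_mul_div_comm, mul_one]
  have hpt := has_pointwise_sum_fourier_series_of_summable hsum (((-π : ℝ) : AddCircle (2*π)))
  have hx0 : F (((-π : ℝ) : AddCircle (2*π))) = ((Real.cos (a*π) : ℝ) : ℂ) := by
    show AddCircle.liftIco (2*π) (-π) g _ = _
    rw [AddCircle.liftIco_coe_apply (by constructor <;> [exact le_refl _; linarith [pi_pos]])]
    show Complex.cos _ = _
    rw [Complex.ofReal_cos]
    push_cast
    rw [show ((a:ℂ) * -(π:ℂ)) = -((a:ℂ)*π) by ring, Complex.cos_neg]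
  have hterm : ∀ n : ℤ, fourierCoeff (⇑F) n • fourier n (((-π : ℝ) : AddCircle (2*π)))
      = (((a * Real.sin (a*π) / π) / (a^2 - (n:ℝ)^2) : ℝ) : ℂ) := by
    intro n
    rw [hcoeff n, fourier_coe_apply, smul_eq_mul]
    have hπc : (π:ℂ) ≠ 0 := Complex.ofReal_ne_zero.mpr hπ
    have hexp : Complex.exp (2 * (π:ℂ) * I * n * (((-π : ℝ)) : ℂ) / (((2 * π : ℝ)) : ℂ))
        = (Complex.exp (π * I * n))⁻¹ := by
      rw [← Complex.exp_neg]
      congr 1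
      push_cast
      field_simp [hπc]
    rw [hexp]
    rw [mul_comm (Complex.exp (π * I * n)) _, mul_assoc,
      mul_inv_cancel₀ (Complex.exp_ne_zero _), mul_one]
    push_cast
    ring
  rw [hx0] at hpt
  rw [funext hterm] at hpt
  exact Complex.hasSum_ofReal.mp hpt

end

lemma sin_api_ne (a : ℝ) (ha0 : a ≠ 0) (ha : |a| < 1) : Real.sin (a * π) ≠ 0 := by
  have h := abs_lt.mp ha
  have hπ := pi_pos
  rw [Ne, Real.sin_eq_zero_iff_of_lt_of_lt (by nlinarith) (by nlinarith)]
  exact mul_ne_zero ha0 pi_ne_zero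

lemma hasSum_nat_cot (a : ℝ) (ha0 : a ≠ 0) (ha : |a| < 1) :
    HasSum (fun n : ℕ => a^2 / (((n:ℝ)+1)^2 - a^2))
      ((1 - a * π * (Real.cos (a*π) / Real.sin (a*π))) / 2) := by
  have hπ := pi_pos
  have hsin : Real.sin (a*π) ≠ 0 := sin_api_ne a ha0 ha
  have ha2 : a^2 < 1 := by
    have h := abs_lt.mp ha
    nlinarith [h.1, h.2]
  set K := a * Real.sin (a*π) / π with hK
  have hK0 : K ≠ 0 := div_ne_zero (mul_ne_zero ha0 hsin) pi_ne_zero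
  have h2 := (hasSum_int_cot a ha0 ha).nat_add_neg
  have h2' : HasSum (fun n : ℕ => 2*K / (a^2 - (n:ℝ)^2)) (Real.cos (a*π) + K / a^2) := by
    convert h2 using 2 with n
    · push_cast
      ring
    · norm_num [hK]
  have h3 : HasSum (fun n : ℕ => 2*K / (a^2 - ((n:ℝ)+1)^2))
      (Real.cos (a*π) + K/a^2 - 2*K/a^2) := by
    have h4 : HasSum (fun n : ℕ => (fun m : ℕ => 2*K / (a^2 - (m:ℝ)^2)) (n+1))
        (Real.cos (a*π) + K/a^2 - 2*K/a^2) := by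
      apply (hasSum_nat_add_iff (f := fun m : ℕ => 2*K / (a^2 - (m:ℝ)^2)) 1).mpr
      rw [Finset.sum_range_one]
      convert h2' using 1
      · rfl
      norm_num
    convert h4 using 2 with n
    push_cast
    ring
  have h5 := h3.mul_left (-(a^2)/(2*K))
  have hterm : (fun n : ℕ => -(a^2)/(2*K) * (2*K / (a^2 - ((n:ℝ)+1)^2)))
      = fun n : ℕ => a^2 / (((n:ℝ)+1)^2 - a^2) := by
    funext n
    have hne : a^2 - ((n:ℝ)+1)^2 ≠ 0 := by
      have h1 : (1:ℝ) ≤ ((n:ℝ)+1)^2 := by nlinarith [Nat.cast_nonneg (α := ℝ) n]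
      nlinarith
    have h2K : (2*K) ≠ 0 := mul_ne_zero two_ne_zero hK0
    calc -(a^2)/(2*K) * (2*K / (a^2 - ((n:ℝ)+1)^2))
        = (2*K) * -(a^2) / ((2*K) * (a^2 - ((n:ℝ)+1)^2)) := by
          rw [div_mul_div_comm, mul_comm (-(a^2)) (2*K)]
      _ = -(a^2) / (a^2 - ((n:ℝ)+1)^2) := mul_div_mul_left _ _ h2K
      _ = a^2 / (((n:ℝ)+1)^2 - a^2) := by
          rw [show a^2 - ((n:ℝ)+1)^2 = -((((n:ℝ)+1)^2 - a^2)) by ring]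
          exact neg_div_neg_eq _ _
  rw [hterm] at h5
  convert h5 using 1
  · rfl
  rw [hK]
  field_simp
  ring

noncomputable section

lemma integral_exp_neg_mul_Ioi' {c : ℝ} (hc : 0 < c) :
    ∫ x in Set.Ioi (0:ℝ), Real.exp (-c*x) = 1/c := by
  have h := Real.integral_rpow_mul_exp_neg_mul_Ioi (by norm_num : (0:ℝ) < 1) hc
  simp only [sub_self, Real.rpow_zero, one_mul, Real.rpow_one, Real.Gamma_one, mul_one] at h
  simpa only [neg_mul] using h

variable (a : ℝ)

def gg (n : ℕ) (x : ℝ) : ℝ :=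
  2*((n:ℝ)+1) * (Real.cosh (2*a*x) - 1) * Real.exp (-(2*((n:ℝ)+1))*x)

lemma gg_eq (n : ℕ) (x : ℝ) : gg a n x
    = ((n:ℝ)+1) * (Real.exp (-(2*((n:ℝ)+1)-2*a)*x) + Real.exp (-(2*((n:ℝ)+1)+2*a)*x)
        - 2 * Real.exp (-(2*((n:ℝ)+1))*x)) := by
  rw [gg, Real.cosh_eq,
    show -(2*((n:ℝ)+1)-2*a)*x = 2*a*x + (-(2*((n:ℝ)+1))*x) by ring, Real.exp_add,
    show -(2*((n:ℝ)+1)+2*a)*x = -(2*a*x) + (-(2*((n:ℝ)+1))*x) by ring, Real.exp_add]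
  ring

lemma gg_nonneg (n : ℕ) (x : ℝ) : 0 ≤ gg a n x := by
  rw [gg]
  have h1 : 1 ≤ Real.cosh (2*a*x) := Real.one_le_cosh _
  apply mul_nonneg (mul_nonneg (by positivity) (by linarith)) (Real.exp_pos _).le

variable {a}

lemma gg_integrable (ha' : |a| < 1) (n : ℕ) : IntegrableOn (gg a n) (Set.Ioi (0:ℝ)) := by
  have h := abs_lt.mp ha'
  have hn1 : (1:ℝ) ≤ (n:ℝ)+1 := by
    have := Nat.cast_nonneg (α := ℝ) n; linarith
  have h1 : (0:ℝ) < 2*((n:ℝ)+1)-2*a := by linarith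
  have h2 : (0:ℝ) < 2*((n:ℝ)+1)+2*a := by linarith
  have h3 : (0:ℝ) < 2*((n:ℝ)+1) := by linarith
  have : IntegrableOn (fun x : ℝ => ((n:ℝ)+1) * (Real.exp (-(2*((n:ℝ)+1)-2*a)*x)
      + Real.exp (-(2*((n:ℝ)+1)+2*a)*x) - 2 * Real.exp (-(2*((n:ℝ)+1))*x))) (Set.Ioi (0:ℝ)) := by
    apply Integrable.const_mul
    exact ((exp_neg_integrableOn_Ioi 0 h1).add (exp_neg_integrableOn_Ioi 0 h2)).sub
      ((exp_neg_integrableOn_Ioi 0 h3).const_mul 2)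
  exact this.congr_fun (fun x _ => (gg_eq a n x).symm) measurableSet_Ioi

lemma gg_integral (ha0 : a ≠ 0) (ha' : |a| < 1) (n : ℕ) :
    ∫ x in Set.Ioi (0:ℝ), gg a n x = a^2 / (((n:ℝ)+1)^2 - a^2) := by
  have h := abs_lt.mp ha'
  have hn1 : (1:ℝ) ≤ (n:ℝ)+1 := by
    have := Nat.cast_nonneg (α := ℝ) n; linarith
  have h1 : (0:ℝ) < 2*((n:ℝ)+1)-2*a := by linarith
  have h2 : (0:ℝ) < 2*((n:ℝ)+1)+2*a := by linarith
  have h3 : (0:ℝ) < 2*((n:ℝ)+1) := by linarith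
  rw [setIntegral_congr_fun measurableSet_Ioi (fun x _ => gg_eq a n x)]
  rw [MeasureTheory.integral_const_mul]
  have hint1 : IntegrableOn (fun x : ℝ => Real.exp (-(2*((n:ℝ)+1)-2*a)*x)) (Set.Ioi (0:ℝ)) :=
    exp_neg_integrableOn_Ioi 0 h1
  have hint2 : IntegrableOn (fun x : ℝ => Real.exp (-(2*((n:ℝ)+1)+2*a)*x)) (Set.Ioi (0:ℝ)) :=
    exp_neg_integrableOn_Ioi 0 h2
  have hint3 : IntegrableOn (fun x : ℝ => Real.exp (-(2*((n:ℝ)+1))*x)) (Set.Ioi (0:ℝ)) :=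
    exp_neg_integrableOn_Ioi 0 h3
  have hadd : IntegrableOn (fun x : ℝ => Real.exp (-(2*((n:ℝ)+1)-2*a)*x)
      + Real.exp (-(2*((n:ℝ)+1)+2*a)*x)) (Set.Ioi (0:ℝ)) := hint1.add hint2
  rw [MeasureTheory.integral_sub hadd (hint3.const_mul 2)]
  rw [MeasureTheory.integral_add hint1 hint2]
  rw [MeasureTheory.integral_const_mul]
  rw [integral_exp_neg_mul_Ioi' h1, integral_exp_neg_mul_Ioi' h2, integral_exp_neg_mul_Ioi' h3]
  have hne : ((n:ℝ)+1)^2 - a^2 ≠ 0 := by nlinarith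
  have hA : (n:ℝ) + 1 - a ≠ 0 := (by linarith : (0:ℝ) < (n:ℝ) + 1 - a).ne'
  have hB : (n:ℝ) + 1 + a ≠ 0 := (by linarith : (0:ℝ) < (n:ℝ) + 1 + a).ne'
  field_simp
  ring

lemma gg_hasSum (ha0 : a ≠ 0) (ha' : |a| < 1) {x : ℝ} (hx : 0 < x) :
    HasSum (fun n : ℕ => gg a n x) ((Real.sinh (a*x) / Real.sinh x)^2) := by
  set r := Real.exp (-(2*x)) with hr
  have hr0 : 0 < r := Real.exp_pos _
  have hr1 : r < 1 := by
    rw [hr, Real.exp_lt_one_iff]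
    linarith
  have hrn : ‖r‖ < 1 := by rw [Real.norm_eq_abs, abs_of_pos hr0]; exact hr1
  have hG1 := hasSum_coe_mul_geometric_of_norm_lt_one (𝕜 := ℝ) hrn
  have hG2 := hasSum_geometric_of_norm_lt_one (ξ := r) hrn
  have hG := hG1.add hG2
  set c := 2 * (Real.cosh (2*a*x) - 1) * r with hc
  have hG3 := hG.mul_left c
  have hterm : (fun n : ℕ => c * ((n:ℝ) * r^n + r^n)) = fun n : ℕ => gg a n x := by
    funext n
    rw [gg, hc, hr]
    rw [show -(2*((n:ℝ)+1))*x = (n:ℕ) * (-(2*x)) + (-(2*x)) by push_cast; ring,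
      Real.exp_add, Real.exp_nat_mul]
    ring
  rw [hterm] at hG3
  convert hG3 using 1
  · rfl
  have h1r : 1 - r ≠ 0 := by linarith
  have hsx : Real.sinh x = Real.exp x * (1-r) / 2 := by
     rw [Real.sinh_eq, hr]
     rw [show -x = -(2*x) + x by ring, Real.exp_add]
     ring
  have hch : Real.cosh (2*a*x) - 1 = 2 * Real.sinh (a*x)^2 := by
    rw [show 2*a*x = 2*(a*x) by ring, Real.cosh_two_mul, Real.cosh_sq]
    ring
  have hrx : r * Real.exp x ^ 2 = 1 := by
    rw [hr, sq, ← Real.exp_add, ← Real.exp_add]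
    rw [show -(2*x) + (x + x) = 0 by ring, Real.exp_zero]
  have hsx0 : Real.sinh x ≠ 0 := by
    rw [hsx]
    positivity
  have hgeo : r/(1-r)^2 + (1-r)⁻¹ = 1/(1-r)^2 := by field_simp; ring
  rw [hc, hch, hsx, hgeo]
  have hex : Real.exp x ≠ 0 := (Real.exp_pos x).ne'
  field_simp
  linear_combination -hrx

end

theorem sinh_ratio_sq_integral (a : ℝ) (ha0 : a ≠ 0) (ha : |a| < 1) :
    ∫ x in Set.Ioi (0:ℝ), (Real.sinh (a * x) / Real.sinh x) ^ 2
      = (1 / 2) * (1 - a * π * (Real.cos (a * π) / Real.sin (a * π))) := by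
  have hS := hasSum_nat_cot a ha0 ha
  have hval : ∀ n : ℕ, ∫ x in Set.Ioi (0:ℝ), ‖gg a n x‖ = a^2/(((n:ℝ)+1)^2 - a^2) := by
    intro n
    rw [setIntegral_congr_fun measurableSet_Ioi
      (fun x _ => Real.norm_of_nonneg (gg_nonneg a n x))]
    exact gg_integral ha0 ha n
  have hsum : Summable (fun n : ℕ => ∫ x in Set.Ioi (0:ℝ), ‖gg a n x‖) := by
    rw [funext hval]
    exact hS.summable
  have hcongr : ∀ x ∈ Set.Ioi (0:ℝ),
      (Real.sinh (a*x)/Real.sinh x)^2 = ∑' n : ℕ, gg a n x :=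
    fun x hx => ((gg_hasSum ha0 ha hx).tsum_eq).symm
  rw [setIntegral_congr_fun measurableSet_Ioi hcongr]
  rw [← MeasureTheory.integral_tsum_of_summable_integral_norm
    (fun n => gg_integrable ha n) hsum]
  rw [tsum_congr (fun n => gg_integral ha0 ha n)]
  rw [hS.tsum_eq]
  ring
end

section
/- For real numbers a, b, c with b > 0 and |a| + |c| < b, the integral ∫₀^∞ sinh(ax)·cosh(cx)/sinh(bx) dx equals (π/(4b))·[tan(π(a+c)/(2b)) + tan(π(a−c)/(2b))] = (π/(2b))·sin(aπ/b)/(cos(cπ/b) + cos(aπ/b)). -/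
open Real MeasureTheory Filter Set Topology
open scoped ENNReal NNReal

lemma sq_shift_summable : Summable (fun n : ℕ => (1:ℝ) / ((n:ℝ)+1)^2) := by
  have := Real.summable_one_div_nat_pow.mpr (le_refl 2)
  simpa using (summable_nat_add_iff 1).mpr this

lemma aux_summable {r : ℝ} (hr : 0 ≤ r) (hr1 : r < 1) :
    Summable (fun n : ℕ => 2 * r / (((n:ℝ)+1)^2 - r^2)) := by
  apply Summable.of_nonneg_of_le (fun n => ?_) (fun n => ?_)
      (sq_shift_summable.mul_left (2 * r / (1 - r^2)))
  · have h1 : (0:ℝ) < ((n:ℝ)+1)^2 - r^2 := by nlinarith [Nat.cast_nonneg (α := ℝ) n]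
    positivity
  · have h0 : (0:ℝ) < 1 - r^2 := by nlinarith
    have h2 : (1 - r^2) * ((n:ℝ)+1)^2 ≤ ((n:ℝ)+1)^2 - r^2 := by
      nlinarith [Nat.cast_nonneg (α := ℝ) n, sq_nonneg ((n:ℝ)*r), sq_nonneg r, mul_nonneg (mul_nonneg (Nat.cast_nonneg (α := ℝ) n) (Nat.cast_nonneg (α := ℝ) n)) (sq_nonneg r), mul_nonneg (Nat.cast_nonneg (α := ℝ) n) (sq_nonneg r)]
    have h3 : (0:ℝ) < (1 - r^2) * ((n:ℝ)+1)^2 := by positivity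
    rw [div_mul_div_comm, mul_one]
    exact div_le_div_of_nonneg_left (by positivity) h3 h2 |>.trans_eq (by ring_nf)

example : True := trivial

lemma cot_pf {x : ℝ} (hx0 : 0 < x) (hx1 : x < 1) :
    HasSum (fun n : ℕ => 2*x/(x^2 - ((n:ℝ)+1)^2))
      (π * Real.cos (π*x) / Real.sin (π*x) - 1/x) := by
  set r : ℝ := (x+1)/2 with hrdef
  have hxr : x < r := by rw [hrdef]; linarith
  have hr0 : 0 < r := by rw [hrdef]; linarith
  have hr1 : r < 1 := by rw [hrdef]; linarith
  set s : Set ℝ := Ioo (0:ℝ) r with hsdef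
  have hsub : ∀ y ∈ s, 0 < y ∧ y < 1 := fun y hy => ⟨hy.1, lt_trans hy.2 hr1⟩
  set f : ℕ → ℝ → ℝ := fun n y => 2*y/(y^2 - ((n:ℝ)+1)^2) with hfdef
  -- summability of f · y for y ∈ (0,1)
  have hsummf : ∀ y : ℝ, 0 < y → y < 1 → Summable (fun n => f n y) := by
    intro y hy0 hy1
    have := (aux_summable hy0.le hy1).neg
    refine this.congr fun n => ?_
    simp only [hfdef]
    rw [show y^2 - ((n:ℝ)+1)^2 = -((((n:ℝ)+1)^2 - y^2)) from by ring, div_neg]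
  -- derivative of each partial log-sum
  have hderiv : ∀ N : ℕ, ∀ y ∈ s, HasDerivAt
      (fun y => Real.log y + ∑ n ∈ Finset.range N, Real.log (1 - y^2/((n:ℝ)+1)^2))
      (1/y + ∑ n ∈ Finset.range N, f n y) y := by
    intro N y hy
    obtain ⟨hy0, hy1⟩ := hsub y hy
    have h1 : HasDerivAt Real.log (1/y) y := by
      simpa [one_div] using Real.hasDerivAt_log hy0.ne'
    have h2 : HasDerivAt (fun y => ∑ n ∈ Finset.range N, Real.log (1 - y^2/((n:ℝ)+1)^2))
        (∑ n ∈ Finset.range N, f n y) y := by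
      apply HasDerivAt.fun_sum
      intro n _
      have hc : ((n:ℝ)+1) ≠ 0 := by positivity
      have hcsq : y^2 < ((n:ℝ)+1)^2 := by nlinarith [Nat.cast_nonneg (α := ℝ) n]
      have hne : 1 - y^2/((n:ℝ)+1)^2 ≠ 0 := by
        have : 0 < 1 - y^2/((n:ℝ)+1)^2 := by
          rw [sub_pos, div_lt_one (by positivity)]; exact hcsq
        exact this.ne'
      have hu : HasDerivAt (fun y : ℝ => 1 - y^2/((n:ℝ)+1)^2) (-(2*y/((n:ℝ)+1)^2)) y := by
        have := ((hasDerivAt_pow 2 y).div_const (((n:ℝ)+1)^2)).const_sub 1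
        simpa using this
      have h5 := (Real.hasDerivAt_log hne).comp y hu
      have hne2 : y^2 - ((n:ℝ)+1)^2 ≠ 0 := by nlinarith
      have heq : (1 - y^2/((n:ℝ)+1)^2)⁻¹ * (-(2*y/((n:ℝ)+1)^2)) = f n y := by
        simp only [hfdef]
        rw [show 1 - y^2/((n:ℝ)+1)^2 = -((y^2 - ((n:ℝ)+1)^2)/((n:ℝ)+1)^2) from by
          field_simp; ring]
        rw [inv_neg, inv_div, neg_mul, mul_neg, neg_neg, div_mul_div_comm,
          div_eq_div_iff (mul_ne_zero hne2 (by positivity)) hne2]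
        ring
      rw [← heq]
      exact h5
    simpa using h1.fun_add h2
  -- pointwise convergence to log (sin (π y)) - log π
  have hpt : ∀ y ∈ s, Tendsto
      (fun N => Real.log y + ∑ n ∈ Finset.range N, Real.log (1 - y^2/((n:ℝ)+1)^2))
      atTop (𝓝 (Real.log (Real.sin (π*y)) - Real.log π)) := by
    intro y hy
    obtain ⟨hy0, hy1⟩ := hsub y hy
    have hsin : 0 < Real.sin (π*y) :=
      Real.sin_pos_of_pos_of_lt_pi (by positivity) (by nlinarith [Real.pi_pos])
    have hfacpos : ∀ n : ℕ, 0 < 1 - y^2/((n:ℝ)+1)^2 := by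
      intro n
      rw [sub_pos, div_lt_one (by positivity)]
      nlinarith [Nat.cast_nonneg (α := ℝ) n]
    have hlog : Tendsto (fun N : ℕ =>
        Real.log (π * y * ∏ j ∈ Finset.range N, ((1:ℝ) - y^2/((j:ℝ)+1)^2)))
        atTop (𝓝 (Real.log (Real.sin (π*y)))) :=
      ((Real.continuousAt_log hsin.ne').tendsto).comp (Real.tendsto_euler_sin_prod y)
    have heq : ∀ N : ℕ, Real.log (π * y * ∏ j ∈ Finset.range N, ((1:ℝ) - y^2/((j:ℝ)+1)^2))
        = Real.log π + (Real.log y + ∑ n ∈ Finset.range N, Real.log (1 - y^2/((n:ℝ)+1)^2)) := by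
      intro N
      have hprodpos : (0:ℝ) < ∏ j ∈ Finset.range N, ((1:ℝ) - y^2/((j:ℝ)+1)^2) :=
        Finset.prod_pos fun j _ => hfacpos j
      rw [mul_assoc, Real.log_mul Real.pi_ne_zero (by positivity),
        Real.log_mul hy0.ne' hprodpos.ne',
        Real.log_prod fun j _ => (hfacpos j).ne']
    simp_rw [heq] at hlog
    have := hlog.sub (tendsto_const_nhds : Tendsto (fun _ : ℕ => Real.log π) atTop _)
    simpa using this
  -- uniform convergence of derivatives
  have hU : TendstoUniformlyOn (fun N y => ∑ n ∈ Finset.range N, f n y)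
      (fun y => ∑' n, f n y) atTop s := by
    apply tendstoUniformlyOn_tsum_nat (aux_summable hr0.le hr1)
    intro n y hy
    obtain ⟨hy0, hyr⟩ := hy
    have hy1 : y < 1 := lt_trans hyr hr1
    have hc2 : y^2 < ((n:ℝ)+1)^2 := by nlinarith [Nat.cast_nonneg (α := ℝ) n]
    have hr2 : r^2 < ((n:ℝ)+1)^2 := by nlinarith [Nat.cast_nonneg (α := ℝ) n]
    rw [hfdef]
    rw [Real.norm_eq_abs, abs_div, abs_of_pos (by positivity : (0:ℝ) < 2*y),
      abs_of_neg (by nlinarith : y^2 - ((n:ℝ)+1)^2 < 0), neg_sub]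
    exact div_le_div₀ (by positivity) (by linarith) (by linarith) (by nlinarith)
  have hunif : TendstoLocallyUniformlyOn
      (fun N y => 1/y + ∑ n ∈ Finset.range N, f n y)
      (fun y => 1/y + ∑' n, f n y) atTop s := by
    apply TendstoUniformlyOn.tendstoLocallyUniformlyOn
    rw [Metric.tendstoUniformlyOn_iff] at hU ⊢
    intro ε hε
    filter_upwards [hU ε hε] with N hN y hy
    simpa [dist_add_left] using hN y hy
  have hx_s : x ∈ s := ⟨hx0, hxr⟩
  have hD : HasDerivAt (fun y => Real.log (Real.sin (π*y)) - Real.log π)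
      (1/x + ∑' n, f n x) x :=
    hasDerivAt_of_tendstoLocallyUniformlyOn isOpen_Ioo hunif
      (Filter.Eventually.of_forall hderiv) hpt hx_s
  have hsin : 0 < Real.sin (π*x) :=
    Real.sin_pos_of_pos_of_lt_pi (by positivity) (by nlinarith [Real.pi_pos])
  have hD2 : HasDerivAt (fun y => Real.log (Real.sin (π*y)) - Real.log π)
      (π * Real.cos (π*x) / Real.sin (π*x)) x := by
    have h1 : HasDerivAt (fun y : ℝ => π*y) π x := by
      simpa using (hasDerivAt_id x).const_mul π
    have h2 : HasDerivAt (fun y => Real.sin (π*y)) (Real.cos (π*x) * π) x :=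
      (Real.hasDerivAt_sin (π*x)).comp x h1
    have h3 := (Real.hasDerivAt_log hsin.ne').comp x h2
    have h4 := h3.sub_const (Real.log π)
    convert h4 using 1
    · rfl
    · rfl
    · rfl
    ring
  have hkey : 1/x + ∑' n, f n x = π * Real.cos (π*x) / Real.sin (π*x) := hD.unique hD2
  have hs2 : Summable (fun n => f n x) := hsummf x hx0 hx1
  have : ∑' n, f n x = π * Real.cos (π*x) / Real.sin (π*x) - 1/x := by linarith
  exact this ▸ hs2.hasSum

lemma tan_pf_pos {t : ℝ} (h0 : 0 < t) (h2 : t < 1) :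
    HasSum (fun n : ℕ => 2*t/((2*(n:ℝ)+1)^2 - t^2)) (π/2 * Real.tan (π*t/2)) := by
  set f : ℕ → ℝ := fun m => 2*t/(t^2 - ((m:ℝ)+1)^2) with hf
  have ht : t ≠ 0 := h0.ne'
  have hsinX : 0 < Real.sin (π*t/2) :=
    Real.sin_pos_of_pos_of_lt_pi (by positivity) (by nlinarith [Real.pi_pos])
  have hcosX : 0 < Real.cos (π*t/2) := by
    apply Real.cos_pos_of_mem_Ioo
    constructor <;> nlinarith [Real.pi_pos]
  have hsin2 : 0 < Real.sin (π*t) :=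
    Real.sin_pos_of_pos_of_lt_pi (by positivity) (by nlinarith [Real.pi_pos])
  have hodd : HasSum (fun n : ℕ => f (2*n+1))
      (π/2 * (Real.cos (π*t/2)/Real.sin (π*t/2)) - 1/t) := by
    have C := (cot_pf (x := t/2) (by linarith) (by linarith)).mul_left (1/2)
    have hterm : (fun n : ℕ => (1/2) * (2*(t/2)/((t/2)^2 - ((n:ℝ)+1)^2)))
        = fun n : ℕ => f (2*n+1) := by
      funext n
      simp only [hf]
      have hD1 : (t/2)^2 - ((n:ℝ)+1)^2 ≠ 0 := by
        have : (t/2)^2 < ((n:ℝ)+1)^2 := by nlinarith [Nat.cast_nonneg (α := ℝ) n]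
        intro hcon; nlinarith
      have h4D1 : 4*((t/2)^2 - ((n:ℝ)+1)^2) ≠ 0 :=
        mul_ne_zero (by norm_num) hD1
      push_cast
      rw [show t^2 - (2*(n:ℝ)+1+1)^2 = 4*((t/2)^2 - ((n:ℝ)+1)^2) from by ring,
        show (1:ℝ)/2 * (2*(t/2)/((t/2)^2 - ((n:ℝ)+1)^2))
          = (1/2 * (2*(t/2)))/((t/2)^2 - ((n:ℝ)+1)^2) from by ring,
        div_eq_div_iff hD1 h4D1]
      ring
    rw [hterm] at C
    convert C using 1
    · rfl
    rw [show π*(t/2) = π*t/2 from by ring]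
    field_simp
  have hA := cot_pf h0 h2
  have hse : Summable (fun n : ℕ => f (2*n)) :=
    hA.summable.comp_injective (fun a b hab => by omega)
  have heo := HasSum.even_add_odd hse.hasSum hodd
  have hEq : ∑' n : ℕ, f (2*n) = (π * Real.cos (π*t) / Real.sin (π*t) - 1/t)
      - (π/2 * (Real.cos (π*t/2)/Real.sin (π*t/2)) - 1/t) := by
    have := heo.unique hA
    linarith
  have hev : HasSum (fun n : ℕ => f (2*n))
      (π * Real.cos (π*t) / Real.sin (π*t) - π/2 * (Real.cos (π*t/2)/Real.sin (π*t/2))) := by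
    have h3 := hse.hasSum
    rw [hEq] at h3
    convert h3 using 1
    ring
  have hgoal := hev.neg
  have hterm2 : (fun n : ℕ => -(f (2*n))) = fun n : ℕ => 2*t/((2*(n:ℝ)+1)^2 - t^2) := by
    funext n
    simp only [hf]
    push_cast
    rw [show (t^2 - (2*(n:ℝ)+1)^2) = -((2*(n:ℝ)+1)^2 - t^2) from by ring, div_neg, neg_neg]
  rw [hterm2] at hgoal
  convert hgoal using 1
  · rfl
  rw [Real.tan_eq_sin_div_cos, show π*t = 2*(π*t/2) from by ring,
    Real.sin_two_mul, Real.cos_two_mul]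
  field_simp
  linear_combination Real.sin_sq_add_cos_sq (π*t/2)

lemma tan_pf {t : ℝ} (h1 : -1 < t) (h2 : t < 1) :
    HasSum (fun n : ℕ => 2*t/((2*(n:ℝ)+1)^2 - t^2)) (π/2 * Real.tan (π*t/2)) := by
  rcases lt_trichotomy t 0 with hneg | rfl | hpos
  · have hp := (tan_pf_pos (t := -t) (by linarith) (by linarith)).neg
    have hterm : (fun n : ℕ => -(2*(-t)/((2*(n:ℝ)+1)^2 - (-t)^2)))
        = fun n : ℕ => 2*t/((2*(n:ℝ)+1)^2 - t^2) := by
      funext n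
      rw [show ((-t)^2 : ℝ) = t^2 from by ring, ← neg_div, show -(2*(-t)) = 2*t from by ring]
    rw [hterm] at hp
    convert hp using 1
    · rfl
    rw [show π*(-t)/2 = -(π*t/2) from by ring, Real.tan_neg]
    ring
  · simpa using hasSum_zero
  · exact tan_pf_pos hpos h2

lemma Jval {b s : ℝ} (hb : 0 < b) (hs : |s| < b) :
    HasSum (fun n : ℕ => 1/((2*(n:ℝ)+1)*b - s) - 1/((2*(n:ℝ)+1)*b + s))
      (π/(2*b) * Real.tan (π*s/(2*b))) := by
  have hb0 : b ≠ 0 := hb.ne'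
  obtain ⟨hs1, hs2⟩ := abs_lt.mp hs
  have h1 : -1 < s/b := by rw [neg_lt, ← neg_div, div_lt_one hb]; linarith
  have h2 : s/b < 1 := by rw [div_lt_one hb]; exact hs2
  have hT := (tan_pf h1 h2).mul_left (1/b)
  have hterm : (fun n : ℕ => (1/b) * (2*(s/b)/((2*(n:ℝ)+1)^2 - (s/b)^2)))
      = fun n : ℕ => 1/((2*(n:ℝ)+1)*b - s) - 1/((2*(n:ℝ)+1)*b + s) := by
    funext n
    have hA : 0 < (2*(n:ℝ)+1)*b - s := by nlinarith [Nat.cast_nonneg (α := ℝ) n]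
    have hB : 0 < (2*(n:ℝ)+1)*b + s := by nlinarith [Nat.cast_nonneg (α := ℝ) n]
    have hkey : (1:ℝ)/((2*(n:ℝ)+1)*b - s) - 1/((2*(n:ℝ)+1)*b + s)
        = 2*s/(((2*(n:ℝ)+1)*b - s)*((2*(n:ℝ)+1)*b + s)) := by
      rw [div_sub_div _ _ hA.ne' hB.ne']
      congr 1
      ring
    rw [hkey, show (2*(n:ℝ)+1)^2 - (s/b)^2
        = ((2*(n:ℝ)+1)*b - s)*((2*(n:ℝ)+1)*b + s)/b^2 from by field_simp; ring]
    rw [div_div_eq_mul_div]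
    field_simp
  rw [hterm] at hT
  convert hT using 1
  · rfl
  rw [show π*(s/b)/2 = π*s/(2*b) from by rw [← mul_div_assoc, div_div, mul_comm b 2]]
  ring

lemma exp_int {γ : ℝ} (hγ : 0 < γ) :
    IntegrableOn (fun x : ℝ => Real.exp (-(γ*x))) (Ioi (0:ℝ)) ∧
      ∫ x in Ioi (0:ℝ), Real.exp (-(γ*x)) = 1/γ := by
  constructor
  · simpa [neg_mul] using exp_neg_integrableOn_Ioi 0 hγ
  · have h := integral_comp_mul_left_Ioi (fun u => Real.exp (-u)) 0 hγ
    simp only [mul_zero] at h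
    rw [h, integral_exp_neg_Ioi]
    simp [smul_eq_mul, one_div, Real.exp_zero]

lemma sinh_div_sinh_integral {b : ℝ} (hb : 0 < b) {s : ℝ} (hs0 : 0 ≤ s) (hsb : s < b) :
    IntegrableOn (fun x => Real.sinh (s*x) / Real.sinh (b*x)) (Ioi (0:ℝ)) ∧
    ∫ x in Ioi (0:ℝ), Real.sinh (s*x) / Real.sinh (b*x)
      = π/(2*b) * Real.tan (π*s/(2*b)) := by
  set α : ℕ → ℝ := fun n => (2*(n:ℝ)+1)*b - s with hα
  set β : ℕ → ℝ := fun n => (2*(n:ℝ)+1)*b + s with hβ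
  have hα0 : ∀ n, 0 < α n := fun n => by
    simp only [hα]; nlinarith [Nat.cast_nonneg (α := ℝ) n]
  have hβ0 : ∀ n, 0 < β n := fun n => by
    simp only [hβ]; nlinarith [Nat.cast_nonneg (α := ℝ) n]
  have hαβ : ∀ n, α n ≤ β n := fun n => by simp only [hα, hβ]; linarith
  set f : ℕ → ℝ → ℝ := fun n x => Real.exp (-(α n * x)) - Real.exp (-(β n * x)) with hfd
  have hptsum : ∀ x ∈ Ioi (0:ℝ), HasSum (fun n => f n x)
      (Real.sinh (s*x)/Real.sinh (b*x)) := by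
    intro x hx
    have hx0 : (0:ℝ) < x := hx
    have hr1 : Real.exp (-(2*b*x)) < 1 := Real.exp_lt_one_iff.mpr (by nlinarith)
    have hr0 : (0:ℝ) ≤ Real.exp (-(2*b*x)) := (Real.exp_pos _).le
    have hC := (hasSum_geometric_of_lt_one hr0 hr1).mul_left
      ((Real.exp (s*x) - Real.exp (-(s*x))) * Real.exp (-(b*x)))
    have hterm : (fun n : ℕ => (Real.exp (s*x) - Real.exp (-(s*x))) * Real.exp (-(b*x))
        * (Real.exp (-(2*b*x)))^n) = fun n => f n x := by
      funext n
      simp only [hfd, hα, hβ]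
      rw [← Real.exp_nat_mul, sub_mul, sub_mul, ← Real.exp_add, ← Real.exp_add,
        ← Real.exp_add, ← Real.exp_add]
      congr 1 <;> · congr 1; ring
    rw [hterm] at hC
    have hsinhb : 0 < Real.sinh (b*x) := Real.sinh_pos_iff.mpr (by positivity)
    have h1mr : 1 - Real.exp (-(2*b*x)) = 2 * Real.sinh (b*x) * Real.exp (-(b*x)) := by
      rw [Real.sinh_eq, show 2 * ((Real.exp (b*x) - Real.exp (-(b*x)))/2) * Real.exp (-(b*x))
          = Real.exp (b*x) * Real.exp (-(b*x)) - Real.exp (-(b*x)) * Real.exp (-(b*x)) from by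
        ring, ← Real.exp_add, ← Real.exp_add, show b*x + -(b*x) = 0 from by ring,
        show -(b*x) + -(b*x) = -(2*b*x) from by ring, Real.exp_zero]
    convert hC using 1
    · rfl
    rw [show Real.exp (s*x) - Real.exp (-(s*x)) = 2 * Real.sinh (s*x) from by
      rw [Real.sinh_eq]; ring, h1mr]
    rw [mul_inv, ← mul_assoc]
    field_simp [hsinhb.ne']
  have hint : ∀ n, IntegrableOn (fun x => f n x) (Ioi (0:ℝ)) := fun n =>
    ((exp_int (hα0 n)).1.sub (exp_int (hβ0 n)).1)
  have hintval : ∀ n, ∫ x in Ioi (0:ℝ), f n x = 1/α n - 1/β n := by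
    intro n
    simp only [hfd]
    rw [integral_sub (exp_int (hα0 n)).1 (exp_int (hβ0 n)).1,
      (exp_int (hα0 n)).2, (exp_int (hβ0 n)).2]
  have hnn : ∀ n, ∀ x ∈ Ioi (0:ℝ), 0 ≤ f n x := by
    intro n x hx
    have hx0 : (0:ℝ) < x := hx
    simp only [hfd, sub_nonneg]
    exact Real.exp_le_exp.mpr (by nlinarith [hαβ n])
  have hposI : ∀ n, 0 ≤ 1/α n - 1/β n := by
    intro n
    have := one_div_le_one_div_of_le (hα0 n) (hαβ n)
    linarith
  have hsummint : Summable (fun n => 1/α n - 1/β n) := by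
    have hbs : 0 < b - s := by linarith
    apply Summable.of_nonneg_of_le hposI (fun n => ?_)
      (sq_shift_summable.mul_left (2*s/((b-s)^2)))
    have hαn : (b-s)*((n:ℝ)+1) ≤ α n := by
      simp only [hα]; nlinarith [Nat.cast_nonneg (α := ℝ) n]
    have hβn : (b-s)*((n:ℝ)+1) ≤ β n := le_trans hαn (hαβ n)
    have hd0 : (0:ℝ) < (b-s)*((n:ℝ)+1) := by positivity
    have hprod : ((b-s)*((n:ℝ)+1))^2 ≤ α n * β n := by
      rw [sq]
      exact mul_le_mul hαn hβn hd0.le (hα0 n).le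
    have hc1 : 1/α n - 1/β n = 2*s/(α n * β n) := by
      field_simp [(hα0 n).ne', (hβ0 n).ne']
      simp only [hα, hβ]
      ring
    rw [hc1]
    calc 2*s/(α n * β n) ≤ 2*s/(((b-s)*((n:ℝ)+1))^2) :=
          div_le_div_of_nonneg_left (by positivity) (by positivity) hprod
      _ = 2*s/((b-s)^2) * (1/((n:ℝ)+1)^2) := by
          rw [mul_pow, div_mul_eq_div_div, mul_one_div]
  have hmeas : ∀ n, AEStronglyMeasurable (fun x => f n x)
      (volume.restrict (Ioi (0:ℝ))) := fun n =>
    (Continuous.aestronglyMeasurable (by fun_prop))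
  have hofr : ∀ n, ∫⁻ x in Ioi (0:ℝ), (‖f n x‖₊ : ℝ≥0∞)
      = ∫⁻ x in Ioi (0:ℝ), ENNReal.ofReal (f n x) := by
    intro n
    apply lintegral_congr_ae
    filter_upwards [ae_restrict_mem measurableSet_Ioi] with x hx
    exact Real.enorm_eq_ofReal (hnn n x hx)
  have hlint : ∀ n, ∫⁻ x in Ioi (0:ℝ), ‖f n x‖₊ = ENNReal.ofReal (1/α n - 1/β n) := by
    intro n
    rw [hofr n, ← MeasureTheory.ofReal_integral_eq_lintegral_ofReal (hint n)
      ((ae_restrict_iff' measurableSet_Ioi).2 (Filter.Eventually.of_forall (hnn n))),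
      hintval n]
  have htotal : (∑' (n : ℕ), ∫⁻ x in Ioi (0:ℝ), (‖f n x‖₊ : ℝ≥0∞)) ≠ ⊤ := by
    simp_rw [hlint]
    rw [← ENNReal.ofReal_tsum_of_nonneg hposI hsummint]
    exact ENNReal.ofReal_ne_top
  have hswap := MeasureTheory.integral_tsum hmeas htotal
  have hcongr : ∫ x in Ioi (0:ℝ), Real.sinh (s*x)/Real.sinh (b*x)
      = ∫ x in Ioi (0:ℝ), ∑' n, f n x :=
    setIntegral_congr_fun measurableSet_Ioi (fun x hx => ((hptsum x hx).tsum_eq).symm)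
  have hJ := Jval hb (abs_lt.mpr ⟨by linarith, hsb⟩)
  constructor
  · have hmeasF : AEStronglyMeasurable (fun x => Real.sinh (s*x)/Real.sinh (b*x))
        (volume.restrict (Ioi (0:ℝ))) := by
      apply ContinuousOn.aestronglyMeasurable _ measurableSet_Ioi
      apply ContinuousOn.div (by fun_prop) (by fun_prop)
      intro x hx
      have hx0 : (0:ℝ) < x := hx
      exact (Real.sinh_pos_iff.mpr (by positivity : (0:ℝ) < b*x)).ne'
    refine ⟨hmeasF, ?_⟩
    have key : ∫⁻ x in Ioi (0:ℝ), (‖Real.sinh (s*x)/Real.sinh (b*x)‖₊ : ℝ≥0∞)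
        = ∑' (n : ℕ), ∫⁻ x in Ioi (0:ℝ), (‖f n x‖₊ : ℝ≥0∞) := by
      have hstep : ∀ x ∈ Ioi (0:ℝ), (‖Real.sinh (s*x)/Real.sinh (b*x)‖₊ : ℝ≥0∞)
          = ∑' (n : ℕ), ENNReal.ofReal (f n x) := by
        intro x hx
        have hx0 : (0:ℝ) < x := hx
        have h1 : 0 ≤ Real.sinh (s*x) := Real.sinh_nonneg_iff.mpr (by positivity)
        have h2 : 0 < Real.sinh (b*x) := Real.sinh_pos_iff.mpr (by positivity)
        rw [← enorm_eq_nnnorm, Real.enorm_eq_ofReal (div_nonneg h1 h2.le), ← (hptsum x hx).tsum_eq,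
          ENNReal.ofReal_tsum_of_nonneg (fun n => hnn n x hx) (hptsum x hx).summable]
      calc ∫⁻ x in Ioi (0:ℝ), (‖Real.sinh (s*x)/Real.sinh (b*x)‖₊ : ℝ≥0∞)
          = ∫⁻ x in Ioi (0:ℝ), ∑' (n : ℕ), ENNReal.ofReal (f n x) := by
            apply lintegral_congr_ae
            filter_upwards [ae_restrict_mem measurableSet_Ioi] with x hx
            exact hstep x hx
        _ = ∑' (n : ℕ), ∫⁻ x in Ioi (0:ℝ), ENNReal.ofReal (f n x) :=
            lintegral_tsum (fun n =>
              ((by fun_prop : Measurable fun x => f n x).ennreal_ofReal).aemeasurable)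
        _ = ∑' (n : ℕ), ∫⁻ x in Ioi (0:ℝ), (‖f n x‖₊ : ℝ≥0∞) :=
            tsum_congr (fun n => (hofr n).symm)
    show HasFiniteIntegral _ _
    rw [show HasFiniteIntegral (fun x => Real.sinh (s*x)/Real.sinh (b*x))
        (volume.restrict (Ioi (0:ℝ)))
      = (∫⁻ x in Ioi (0:ℝ), (‖Real.sinh (s*x)/Real.sinh (b*x)‖₊ : ℝ≥0∞) < ⊤) from rfl]
    rw [key]
    exact lt_top_iff_ne_top.mpr htotal
  · rw [hcongr, hswap]
    simp_rw [hintval]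
    exact hJ.tsum_eq

theorem sinh_cosh_div_sinh_integral (a b c : ℝ) (hb : 0 < b) (h : |a| + |c| < b)
    (hodd₁ : ∀ k : ℤ, (a + c) / b ≠ 2 * k + 1)
    (hodd₂ : ∀ k : ℤ, (a - c) / b ≠ 2 * k + 1) :
    (∫ x in Set.Ioi (0:ℝ), Real.sinh (a * x) * Real.cosh (c * x) / Real.sinh (b * x)
        = (π / (4 * b)) * (Real.tan (π * (a + c) / (2 * b))
            + Real.tan (π * (a - c) / (2 * b))))
    ∧ (∫ x in Set.Ioi (0:ℝ), Real.sinh (a * x) * Real.cosh (c * x) / Real.sinh (b * x)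
        = (π / (2 * b)) * (Real.sin (a * π / b)
            / (Real.cos (c * π / b) + Real.cos (a * π / b)))) := by
  have hb0 : b ≠ 0 := hb.ne'
  have hu : |a + c| < b := lt_of_le_of_lt (abs_add_le a c) h
  have hv : |a - c| < b := lt_of_le_of_lt (abs_sub a c) h
  have Ival : ∀ s : ℝ, |s| < b →
      IntegrableOn (fun x => Real.sinh (s*x) / Real.sinh (b*x)) (Ioi (0:ℝ)) ∧
      ∫ x in Ioi (0:ℝ), Real.sinh (s*x) / Real.sinh (b*x)
        = π/(2*b) * Real.tan (π*s/(2*b)) := by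
    intro s hs
    rcases le_or_gt 0 s with hpos | hneg
    · exact sinh_div_sinh_integral hb hpos (lt_of_abs_lt hs)
    · obtain ⟨hs1, hs2⟩ := abs_lt.mp hs
      obtain ⟨h1, h2⟩ := sinh_div_sinh_integral hb (neg_nonneg.mpr hneg.le)
        (show -s < b by linarith)
      have hfun : (fun x => Real.sinh (-s*x)/Real.sinh (b*x))
          = fun x => -(Real.sinh (s*x)/Real.sinh (b*x)) := by
        funext x
        rw [show -s*x = -(s*x) from by ring, Real.sinh_neg, neg_div]
      rw [hfun] at h1 h2
      constructor
      · have h3 := h1.neg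
        have h5 : (-fun x => -(Real.sinh (s*x)/Real.sinh (b*x)))
            = fun x => Real.sinh (s*x)/Real.sinh (b*x) := by
          funext x; simp
        rwa [h5] at h3
      · rw [integral_neg] at h2
        have h4 : ∫ x in Ioi (0:ℝ), Real.sinh (s*x)/Real.sinh (b*x)
            = - (π/(2*b) * Real.tan (π*(-s)/(2*b))) := by linarith
        rw [h4, show π*(-s)/(2*b) = -(π*s/(2*b)) from by ring, Real.tan_neg]
        ring
  obtain ⟨hIu, hVu⟩ := Ival (a+c) hu
  obtain ⟨hIv, hVv⟩ := Ival (a-c) hv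
  have hsplit : ∫ x in Ioi (0:ℝ), Real.sinh (a*x) * Real.cosh (c*x) / Real.sinh (b*x)
      = ∫ x in Ioi (0:ℝ), ((1:ℝ)/2 * (Real.sinh ((a+c)*x)/Real.sinh (b*x))
        + 1/2 * (Real.sinh ((a-c)*x)/Real.sinh (b*x))) := by
    apply setIntegral_congr_fun measurableSet_Ioi
    intro x _
    show Real.sinh (a*x) * Real.cosh (c*x) / Real.sinh (b*x)
      = (1:ℝ)/2 * (Real.sinh ((a+c)*x)/Real.sinh (b*x))
        + 1/2 * (Real.sinh ((a-c)*x)/Real.sinh (b*x))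
    have hnum : Real.sinh (a*x) * Real.cosh (c*x)
        = (Real.sinh ((a+c)*x) + Real.sinh ((a-c)*x))/2 := by
      rw [show (a+c)*x = a*x + c*x from by ring, show (a-c)*x = a*x - c*x from by ring,
        Real.sinh_add, Real.sinh_sub]
      ring
    rw [hnum]
    ring
  have hfirst : ∫ x in Ioi (0:ℝ), Real.sinh (a*x) * Real.cosh (c*x) / Real.sinh (b*x)
      = π/(4*b) * (Real.tan (π*(a+c)/(2*b)) + Real.tan (π*(a-c)/(2*b))) := by
    rw [hsplit, integral_add (hIu.const_mul _) (hIv.const_mul _),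
      integral_const_mul, integral_const_mul, hVu, hVv]
    ring
  refine ⟨hfirst, ?_⟩
  rw [hfirst]
  set X := π*(a+c)/(2*b) with hX
  set Y := π*(a-c)/(2*b) with hY
  have h2b : (2:ℝ)*b ≠ 0 := by positivity
  have hcos : ∀ (t : ℝ), (∀ k : ℤ, t / b ≠ 2 * k + 1) → Real.cos (π*t/(2*b)) ≠ 0 := by
    intro t hoddt hcon
    obtain ⟨k, hk⟩ := Real.cos_eq_zero_iff.mp hcon
    apply hoddt k
    have hk' : π*t*2 = (2*(k:ℝ)+1)*π*(2*b) := by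
      rw [div_eq_div_iff h2b two_ne_zero] at hk
      linarith [hk]
    have hk'' : π*(t*2) = π*((2*(k:ℝ)+1)*(2*b)) := by linear_combination hk'
    have h3 := mul_left_cancel₀ Real.pi_ne_zero hk''
    rw [div_eq_iff hb0]
    linear_combination h3/2
  have hcosX : Real.cos X ≠ 0 := hcos (a+c) hodd₁
  have hcosY : Real.cos Y ≠ 0 := hcos (a-c) hodd₂
  have hXY1 : a*π/b = X + Y := by rw [hX, hY]; field_simp; ring
  have hXY2 : c*π/b = X - Y := by rw [hX, hY]; field_simp; ring
  rw [hXY1, hXY2, Real.sin_add, Real.cos_sub, Real.cos_add,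
    Real.tan_eq_sin_div_cos, Real.tan_eq_sin_div_cos]
  field_simp
  ring
end

section
/- For real numbers a, b with b > 0 and |a| < b, the integral ∫₀^∞ sinh(ax)/cosh(bx) dx equals (π/(2b))·sec(πa/(2b)) − (1/b)·β((a+b)/(2b)), where β(x) = Σ_{k≥0} (−1)^k/(k+x) is the one-variable lower-case beta function. -/
open Real MeasureTheory Filter
open scoped Topology

/-- The one-variable lower-case beta function `β(x) = Σ_{k≥0} (−1)^k/(k+x)`,
defined as the limit of the partial sums of the (conditionally convergent) series. -/
noncomputable def betaFn (x : ℝ) : ℝ :=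
  limUnder atTop (fun N : ℕ => ∑ k ∈ Finset.range N, (-1 : ℝ) ^ k / (x + k))

/-! ### Auxiliary lemmas -/

lemma integrableOn_rpow_Ioo01 {p : ℝ} (hp : -1 < p) :
    IntegrableOn (fun t : ℝ => t ^ p) (Set.Ioo 0 1) := by
  have h := (intervalIntegral.intervalIntegrable_rpow' (a := 0) (b := 1) hp)
  rw [intervalIntegrable_iff_integrableOn_Ioc_of_le zero_le_one] at h
  exact h.mono_set Set.Ioo_subset_Ioc_self

lemma integral_rpow_Ioo01 {p : ℝ} (hp : -1 < p) :
    ∫ t in Set.Ioo (0:ℝ) 1, t ^ p = 1 / (p + 1) := by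
  rw [← MeasureTheory.integral_Ioc_eq_integral_Ioo,
    ← intervalIntegral.integral_of_le zero_le_one,
    integral_rpow (Or.inl hp)]
  rw [Real.one_rpow, Real.zero_rpow (by linarith)]
  ring

lemma continuousOn_core (x : ℝ) :
    ContinuousOn (fun t : ℝ => t ^ (x - 1) / (1 + t)) (Set.Ioo 0 1) := by
  apply ContinuousOn.div
  · exact ContinuousOn.rpow_const continuousOn_id fun t ht => Or.inl (ne_of_gt ht.1)
  · exact continuousOn_const.add continuousOn_id
  · intro t ht; have := ht.1; positivity

lemma integrableOn_core {x : ℝ} (hx : 0 < x) :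
    IntegrableOn (fun t : ℝ => t ^ (x - 1) / (1 + t)) (Set.Ioo 0 1) := by
  refine Integrable.mono (integrableOn_rpow_Ioo01 (by linarith : (-1:ℝ) < x - 1))
    ((continuousOn_core x).aestronglyMeasurable measurableSet_Ioo) ?_
  filter_upwards [ae_restrict_mem measurableSet_Ioo] with t ht
  have h1 : (0:ℝ) < t := ht.1
  have h2 : (0:ℝ) < t ^ (x - 1) := Real.rpow_pos_of_pos h1 _
  have h3 : (1:ℝ) ≤ 1 + t := by linarith
  rw [Real.norm_eq_abs, Real.norm_eq_abs, abs_div, abs_of_pos h2, abs_of_pos (by linarith : (0:ℝ) < 1 + t)]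
  calc t ^ (x-1) / (1 + t) ≤ t ^ (x-1) / 1 := by
        apply div_le_div_of_nonneg_left h2.le one_pos h3
    _ = t ^ (x-1) := div_one _

/-- The beta function as an integral. -/
lemma betaFn_eq_integral {x : ℝ} (hx : 0 < x) :
    betaFn x = ∫ t in Set.Ioo (0:ℝ) 1, t ^ (x - 1) / (1 + t) := by
  set J := ∫ t in Set.Ioo (0:ℝ) 1, t ^ (x - 1) / (1 + t) with hJdef
  have hJint := integrableOn_core hx
  have hexp : ∀ k : ℕ, (-1:ℝ) < x - 1 + k := by
    intro k
    have : (0:ℝ) ≤ k := Nat.cast_nonneg k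
    linarith
  have hpow : ∀ k : ℕ, IntegrableOn (fun t : ℝ => (-1:ℝ)^k * t ^ (x - 1 + k)) (Set.Ioo 0 1) :=
    fun k => (integrableOn_rpow_Ioo01 (hexp k)).const_mul _
  have hEcont : ∀ N : ℕ, ContinuousOn (fun t : ℝ => t ^ (x-1) * (-t)^N / (1+t)) (Set.Ioo 0 1) := by
    intro N
    apply ContinuousOn.div
    · exact (ContinuousOn.rpow_const continuousOn_id fun t ht => Or.inl (ne_of_gt ht.1)).mul
        ((continuousOn_id.neg).pow N)
    · exact continuousOn_const.add continuousOn_id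
    · intro t ht; have := ht.1; positivity
  have hEbound : ∀ N : ℕ, ∀ t ∈ Set.Ioo (0:ℝ) 1,
      ‖t ^ (x-1) * (-t)^N / (1+t)‖ ≤ ‖t ^ (x - 1 + N)‖ := by
    intro N t ht
    have h1 : (0:ℝ) < t := ht.1
    have h2 : (0:ℝ) < t ^ (x - 1) := Real.rpow_pos_of_pos h1 _
    have h4 : (0:ℝ) < t ^ (x - 1 + N) := Real.rpow_pos_of_pos h1 _
    have h5 : t ^ (x - 1 + (N:ℝ)) = t ^ (x-1) * t ^ N := by
      rw [Real.rpow_add h1, Real.rpow_natCast]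
    rw [Real.norm_eq_abs, Real.norm_eq_abs, abs_div, abs_mul, abs_pow, abs_neg,
      abs_of_pos h1, abs_of_pos h2, abs_of_pos (by linarith : (0:ℝ) < 1 + t), abs_of_pos h4, h5]
    calc t ^ (x-1) * t ^ N / (1 + t) ≤ t ^ (x-1) * t ^ N / 1 := by
          apply div_le_div_of_nonneg_left (by positivity) one_pos (by linarith)
      _ = t ^ (x-1) * t ^ N := div_one _
  have hE : ∀ N : ℕ, IntegrableOn (fun t : ℝ => t ^ (x-1) * (-t)^N / (1+t)) (Set.Ioo 0 1) := by
    intro N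
    refine Integrable.mono (integrableOn_rpow_Ioo01 (hexp N))
      ((hEcont N).aestronglyMeasurable measurableSet_Ioo) ?_
    filter_upwards [ae_restrict_mem measurableSet_Ioo] with t ht using hEbound N t ht
  have hptwise : ∀ N : ℕ, ∀ t ∈ Set.Ioo (0:ℝ) 1,
      t ^ (x-1) / (1+t) - t ^ (x-1) * (-t)^N / (1+t)
        = ∑ k ∈ Finset.range N, (-1:ℝ)^k * t ^ (x - 1 + k) := by
    intro N t ht
    have h1 : (0:ℝ) < t := ht.1
    have hne : (1:ℝ) + t ≠ 0 := by linarith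
    have hgeom : ∑ k ∈ Finset.range N, (-t)^k = (1 - (-t)^N)/(1+t) := by
      rw [geom_sum_eq (by intro h; linarith : (-t) ≠ 1)]
      rw [div_eq_div_iff (by intro h; apply hne; linarith [sub_eq_zero.mp h] ) hne]
      ring
    have : ∑ k ∈ Finset.range N, (-1:ℝ)^k * t ^ (x - 1 + k)
        = t ^ (x-1) * ∑ k ∈ Finset.range N, (-t)^k := by
      rw [Finset.mul_sum]
      refine Finset.sum_congr rfl fun k _ => ?_
      rw [neg_pow, Real.rpow_add h1, Real.rpow_natCast]
      ring
    rw [this, hgeom]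
    field_simp
  have key : ∀ N : ℕ, (∑ k ∈ Finset.range N, (-1:ℝ)^k / (x + k))
      = J - ∫ t in Set.Ioo (0:ℝ) 1, t ^ (x-1) * (-t)^N / (1+t) := by
    intro N
    rw [← MeasureTheory.integral_sub hJint (hE N),
      setIntegral_congr_fun measurableSet_Ioo (hptwise N),
      MeasureTheory.integral_finset_sum _ (fun k _ => hpow k)]
    refine Finset.sum_congr rfl fun k _ => ?_
    rw [MeasureTheory.integral_const_mul, integral_rpow_Ioo01 (hexp k), mul_one_div]
    congr 1
    ring
  have hbound : ∀ N : ℕ, ‖(∑ k ∈ Finset.range N, (-1:ℝ)^k / (x + k)) - J‖ ≤ 1 / (x + N) := by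
    intro N
    rw [key N]
    have : J - (∫ t in Set.Ioo (0:ℝ) 1, t ^ (x-1) * (-t)^N / (1+t)) - J
        = -(∫ t in Set.Ioo (0:ℝ) 1, t ^ (x-1) * (-t)^N / (1+t)) := by ring
    rw [this, norm_neg]
    have hle := MeasureTheory.norm_integral_le_of_norm_le
      ((integrableOn_rpow_Ioo01 (hexp N)).norm)
      (by filter_upwards [ae_restrict_mem measurableSet_Ioo] with t ht using hEbound N t ht)
    refine hle.trans ?_
    have : ∫ t in Set.Ioo (0:ℝ) 1, ‖t ^ (x - 1 + N)‖ = 1 / (x + N) := by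
      rw [setIntegral_congr_fun measurableSet_Ioo
        (fun t ht => by
          rw [Real.norm_eq_abs, abs_of_pos (Real.rpow_pos_of_pos ht.1 _)]),
        integral_rpow_Ioo01 (hexp N)]
      congr 1; ring
    rw [this]
  have hzero : Tendsto (fun N : ℕ => 1 / (x + N)) atTop (𝓝 0) := by
    simp only [one_div]
    exact Tendsto.inv_tendsto_atTop
      (tendsto_atTop_add_const_left _ x tendsto_natCast_atTop_atTop)
  have hT0 : Tendsto (fun N : ℕ => (∑ k ∈ Finset.range N, (-1:ℝ)^k / (x + k)) - J)
      atTop (𝓝 0) := squeeze_zero_norm hbound hzero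
  have hT : Tendsto (fun N : ℕ => ∑ k ∈ Finset.range N, (-1:ℝ)^k / (x + k)) atTop (𝓝 J) := by
    have := hT0.add_const J
    simpa using this
  exact hT.limUnder_eq

/-- Reflection formula for betaFn. -/
lemma inv_image_Ioo01 : (fun t : ℝ => t⁻¹) '' Set.Ioo 0 1 = Set.Ioi 1 := by
  ext s
  simp only [Set.mem_image, Set.mem_Ioo, Set.mem_Ioi]
  constructor
  · rintro ⟨t, ⟨h0, h1⟩, rfl⟩
    rw [lt_inv_comm₀ one_pos h0]
    simpa using h1
  · intro hs
    have hs0 : (0:ℝ) < s := by linarith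
    refine ⟨s⁻¹, ⟨by positivity, ?_⟩, inv_inv s⟩
    rw [inv_lt_comm₀ hs0 one_pos]
    simpa using hs

lemma inv_deriv_Ioo01 : ∀ t ∈ Set.Ioo (0:ℝ) 1,
    HasDerivWithinAt (fun t : ℝ => t⁻¹) (-(t^2)⁻¹) (Set.Ioo 0 1) t :=
  fun t ht => (hasDerivAt_inv (ne_of_gt ht.1)).hasDerivWithinAt

lemma inv_pointwise {u : ℝ} : ∀ t ∈ Set.Ioo (0:ℝ) 1,
    t ^ ((1-u)-1) / (1+t) = |-(t^2)⁻¹| • ((t⁻¹) ^ (u-1) / (1+t⁻¹)) := by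
  intro t ht
  have h1 : (0:ℝ) < t := ht.1
  have e1 : (t⁻¹) ^ (u-1) = t ^ (1-u) := by
    rw [Real.inv_rpow h1.le, ← Real.rpow_neg h1.le]
    congr 1; ring
  have e2 : t ^ ((1-u)-1) = t ^ (1-u) / t := by
    rw [Real.rpow_sub h1, Real.rpow_one]
  rw [smul_eq_mul, abs_neg, abs_inv, abs_of_pos (by positivity : (0:ℝ) < t^2), e1, e2]
  have ht2 : (0:ℝ) < 1 + t⁻¹ := by positivity
  field_simp
  ring

lemma integral_Ioi_one_eq {u : ℝ} (hu : 0 < u) (hu1 : u < 1) :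
    ∫ s in Set.Ioi (1:ℝ), s ^ (u-1) / (1+s)
      = ∫ t in Set.Ioo (0:ℝ) 1, t ^ ((1-u)-1) / (1+t) := by
  rw [← inv_image_Ioo01, integral_image_eq_integral_abs_deriv_smul measurableSet_Ioo
    inv_deriv_Ioo01 (fun a _ b _ h => inv_injective h)]
  exact (setIntegral_congr_fun measurableSet_Ioo inv_pointwise).symm

lemma integrableOn_core_Ioi {u : ℝ} (hu : 0 < u) (hu1 : u < 1) :
    IntegrableOn (fun s : ℝ => s ^ (u-1) / (1+s)) (Set.Ioi 1) := by
  rw [← inv_image_Ioo01, integrableOn_image_iff_integrableOn_abs_deriv_smul measurableSet_Ioo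
    inv_deriv_Ioo01 (fun a _ b _ h => inv_injective h)]
  exact (integrableOn_core (x := 1-u) (by linarith)).congr_fun inv_pointwise measurableSet_Ioo

lemma div_one_add_image_Ioi : (fun s : ℝ => s / (1+s)) '' Set.Ioi 0 = Set.Ioo 0 1 := by
  ext x
  simp only [Set.mem_image, Set.mem_Ioo, Set.mem_Ioi]
  constructor
  · rintro ⟨s, hs, rfl⟩
    have h1 : (0:ℝ) < 1 + s := by linarith
    exact ⟨by positivity, (div_lt_one h1).mpr (by linarith)⟩
  · rintro ⟨h0, h1⟩
    have h1x : (0:ℝ) < 1 - x := by linarith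
    refine ⟨x / (1-x), by positivity, ?_⟩
    field_simp
    ring

lemma div_one_add_deriv : ∀ s ∈ Set.Ioi (0:ℝ),
    HasDerivWithinAt (fun s : ℝ => s / (1+s)) (1/(1+s)^2) (Set.Ioi 0) s := by
  intro s hs
  have hs0 : (0:ℝ) < s := hs
  have hne : (1:ℝ) + s ≠ 0 := by positivity
  have h := (hasDerivAt_id s).div ((hasDerivAt_const s (1:ℝ)).add (hasDerivAt_id s)) hne
  simp only [id_eq, Pi.add_apply] at h
  have hval : (1*(1+s) - s*(0+1))/(1+s)^2 = 1/(1+s)^2 := by ring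
  rw [hval] at h
  exact h.hasDerivWithinAt

lemma div_one_add_injOn : Set.InjOn (fun s : ℝ => s / (1+s)) (Set.Ioi 0) := by
  intro a ha b hb h
  simp only [Set.mem_Ioi] at ha hb
  have hna : (1:ℝ) + a ≠ 0 := by positivity
  have hnb : (1:ℝ) + b ≠ 0 := by positivity
  field_simp at h
  linarith

lemma integral_Ioi_zero_eq_Gamma {u : ℝ} (hu : 0 < u) (hu1 : u < 1) :
    ∫ s in Set.Ioi (0:ℝ), s ^ (u-1) / (1+s) = Real.Gamma u * Real.Gamma (1-u) := by
  have h1u : 0 < 1 - u := by linarith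
  -- Step 1 : Gamma u * Gamma (1-u) equals the real Beta integral
  have hbeta : (Real.Gamma u * Real.Gamma (1-u) : ℝ)
      = ∫ x in (0:ℝ)..1, x^(u-1) * (1-x)^(-u) := by
    have hc := Complex.Gamma_mul_Gamma_eq_betaIntegral (s := (u:ℂ)) (t := ((1-u:ℝ):ℂ))
      (by simpa using hu) (by simpa using h1u)
    have hsum : (u:ℂ) + ((1-u:ℝ):ℂ) = 1 := by push_cast; ring
    rw [hsum, Complex.Gamma_one, one_mul] at hc
    have hreal : Complex.betaIntegral (u:ℂ) ((1-u:ℝ):ℂ)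
        = ((∫ x in (0:ℝ)..1, x^(u-1) * (1-x)^(-u) : ℝ) : ℂ) := by
      rw [Complex.betaIntegral, ← intervalIntegral.integral_ofReal]
      refine intervalIntegral.integral_congr fun x hx => ?_
      rw [Set.uIcc_of_le zero_le_one, Set.mem_Icc] at hx
      rw [Complex.ofReal_mul, Complex.ofReal_cpow hx.1,
        Complex.ofReal_cpow (by linarith [hx.2] : (0:ℝ) ≤ 1 - x)]
      push_cast
      have : (1:ℂ) - (u:ℂ) - 1 = -(u:ℂ) := by ring
      rw [this]
    rw [hreal] at hc
    have : ((Real.Gamma u * Real.Gamma (1-u) : ℝ) : ℂ)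
        = ((∫ x in (0:ℝ)..1, x^(u-1) * (1-x)^(-u) : ℝ) : ℂ) := by
      rw [Complex.ofReal_mul, ← Complex.Gamma_ofReal, ← Complex.Gamma_ofReal, hc]
    exact_mod_cast this
  rw [hbeta, intervalIntegral.integral_of_le zero_le_one,
    MeasureTheory.integral_Ioc_eq_integral_Ioo, ← div_one_add_image_Ioi,
    integral_image_eq_integral_abs_deriv_smul measurableSet_Ioi div_one_add_deriv
      div_one_add_injOn]
  refine setIntegral_congr_fun measurableSet_Ioi fun s hs => ?_
  have hs0 : (0:ℝ) < s := hs
  have hc : (0:ℝ) < 1 + s := by linarith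
  have h2 : 1 - s/(1+s) = 1/(1+s) := by field_simp; ring
  have e4 : ((1:ℝ)/(1+s)) ^ (-u) = (1+s) ^ u := by
    rw [one_div, Real.inv_rpow hc.le, ← Real.rpow_neg hc.le, neg_neg]
  rw [smul_eq_mul, h2, Real.div_rpow hs0.le hc.le, e4,
    abs_of_pos (by positivity : (0:ℝ) < 1/(1+s)^2)]
  have e3 : (1+s) ^ u = (1+s) ^ (u-1) * (1+s) := by
    rw [← Real.rpow_add_one hc.ne']
    congr 1; ring
  rw [e3]
  have hcu : (0:ℝ) < (1+s) ^ (u-1) := Real.rpow_pos_of_pos hc _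
  field_simp

/-- Reflection formula for betaFn. -/
lemma betaFn_reflect {u : ℝ} (hu : 0 < u) (hu1 : u < 1) :
    betaFn u + betaFn (1 - u) = π / Real.sin (π * u) := by
  have h1u : 0 < 1 - u := by linarith
  have hsplit : ∫ s in Set.Ioi (0:ℝ), s ^ (u-1) / (1+s)
      = (∫ t in Set.Ioo (0:ℝ) 1, t ^ (u-1) / (1+t))
        + ∫ s in Set.Ioi (1:ℝ), s ^ (u-1) / (1+s) := by
    rw [← Set.Ioc_union_Ioi_eq_Ioi (zero_le_one (α := ℝ))]
    rw [MeasureTheory.setIntegral_union (Set.Ioc_disjoint_Ioi le_rfl) measurableSet_Ioi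
      ((integrableOn_core hu).congr_set_ae MeasureTheory.Ioo_ae_eq_Ioc.symm)
      (integrableOn_core_Ioi hu hu1)]
    rw [MeasureTheory.integral_Ioc_eq_integral_Ioo]
  rw [betaFn_eq_integral hu, betaFn_eq_integral h1u, ← integral_Ioi_one_eq hu hu1,
    ← hsplit, integral_Ioi_zero_eq_Gamma hu hu1, Real.Gamma_mul_Gamma_one_sub]

theorem sinh_div_cosh_integral_beta (a b : ℝ) (hb : 0 < b) (ha : |a| < b)
    (hodd : ∀ k : ℤ, a / b ≠ 2 * k + 1) :
    ∫ x in Set.Ioi (0:ℝ), Real.sinh (a * x) / Real.cosh (b * x)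
      = (π / (2 * b)) * (1 / Real.cos (π * a / (2 * b)))
        - (1 / b) * betaFn ((a + b) / (2 * b)) := by
  obtain ⟨ha1, ha2⟩ := abs_lt.mp ha
  set u : ℝ := (b - a) / (2*b) with hu
  set v : ℝ := (a + b) / (2*b) with hv
  have h2b : (0:ℝ) < 2*b := by linarith
  have hu0 : 0 < u := div_pos (by linarith) h2b
  have hu1 : u < 1 := (div_lt_one h2b).mpr (by linarith)
  have hv0 : 0 < v := div_pos (by linarith) h2b
  have hv1 : v < 1 := (div_lt_one h2b).mpr (by linarith)
  have huv : 1 - v = u := by rw [hu, hv]; field_simp; ring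
  -- substitution x ↦ exp (-(2b) x)
  have himg : (fun x : ℝ => Real.exp (-(2*b)*x)) '' Set.Ioi 0 = Set.Ioo 0 1 := by
    ext t
    simp only [Set.mem_image, Set.mem_Ioi, Set.mem_Ioo]
    constructor
    · rintro ⟨x, hx, rfl⟩
      refine ⟨Real.exp_pos _, Real.exp_lt_one_iff.mpr (by nlinarith)⟩
    · rintro ⟨h0, h1⟩
      refine ⟨Real.log t / (-(2*b)), ?_, ?_⟩
      · exact div_pos_of_neg_of_neg (Real.log_neg h0 h1) (by linarith)
      · rw [show -(2*b) * (Real.log t / (-(2*b))) = Real.log t by field_simp]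
        exact Real.exp_log h0
  have hderiv : ∀ x ∈ Set.Ioi (0:ℝ), HasDerivWithinAt (fun x : ℝ => Real.exp (-(2*b)*x))
      (Real.exp (-(2*b)*x) * (-(2*b))) (Set.Ioi 0) x := by
    intro x hx
    have h := (((hasDerivAt_id x).const_mul (-(2*b))).exp)
    simp only [id_eq, mul_one] at h
    exact h.hasDerivWithinAt
  have hinj : Set.InjOn (fun x : ℝ => Real.exp (-(2*b)*x)) (Set.Ioi 0) := by
    intro x hx y hy h
    have := Real.exp_injective h
    have h2b' : -(2*b) ≠ 0 := by linarith
    exact mul_left_cancel₀ h2b' this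
  -- the pointwise identity
  have hpt2 : ∀ x ∈ Set.Ioi (0:ℝ),
      |Real.exp (-(2*b)*x) * (-(2*b))| •
          ((Real.exp (-(2*b)*x) ^ (u-1) - Real.exp (-(2*b)*x) ^ (v-1))
            / (1 + Real.exp (-(2*b)*x)))
        = (2*b) * (Real.sinh (a*x) / Real.cosh (b*x)) := by
    intro x hx
    have hx0 : (0:ℝ) < x := hx
    set A : ℝ := Real.exp (a*x) with hA
    set B : ℝ := Real.exp (b*x) with hB
    have hA0 : 0 < A := Real.exp_pos _
    have hB0 : 0 < B := Real.exp_pos _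
    have k2 : Real.exp (-(2*b)*x) ^ (u-1) = A * B := by
      rw [← Real.exp_mul, hA, hB, ← Real.exp_add]
      congr 1
      rw [hu]
      field_simp
      ring
    have k3 : Real.exp (-(2*b)*x) ^ (v-1) = B / A := by
      rw [← Real.exp_mul, hA, hB, ← Real.exp_sub]
      congr 1
      rw [hv]
      field_simp
      ring
    have k1 : Real.exp (-(2*b)*x) = 1/(B*B) := by
      rw [one_div, hB, ← Real.exp_add, ← Real.exp_neg]
      congr 1
      ring
    rw [smul_eq_mul, abs_mul, abs_of_pos (Real.exp_pos _), abs_neg,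
      abs_of_pos h2b, k2, k3, k1, Real.sinh_eq, Real.cosh_eq, Real.exp_neg, Real.exp_neg,
      ← hA, ← hB]
    have hBB : (1:ℝ) + 1/(B*B) ≠ 0 := by positivity
    have hcosh : B + B⁻¹ ≠ 0 := by positivity
    field_simp
  -- main computation
  have hmain : betaFn u - betaFn v
      = (2*b) * ∫ x in Set.Ioi (0:ℝ), Real.sinh (a*x) / Real.cosh (b*x) := by
    rw [betaFn_eq_integral hu0, betaFn_eq_integral hv0,
      ← MeasureTheory.integral_sub (integrableOn_core hu0) (integrableOn_core hv0),
      setIntegral_congr_fun measurableSet_Ioo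
        (fun t ht => (sub_div (t^(u-1)) (t^(v-1)) (1+t)).symm),
      ← himg,
      integral_image_eq_integral_abs_deriv_smul measurableSet_Ioi hderiv hinj,
      setIntegral_congr_fun measurableSet_Ioi hpt2,
      MeasureTheory.integral_const_mul]
  -- reflection
  have hrefl : betaFn v + betaFn u = π / Real.sin (π * v) := by
    rw [← huv]; exact betaFn_reflect hv0 hv1
  have hsin : Real.sin (π * v) = Real.cos (π * a / (2*b)) := by
    rw [show π * v = π * a / (2*b) + π/2 by rw [hv]; field_simp]
    exact Real.sin_add_pi_div_two _
  have hIval : ∫ x in Set.Ioi (0:ℝ), Real.sinh (a*x) / Real.cosh (b*x)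
      = (betaFn u - betaFn v) / (2*b) := by
    rw [hmain]; field_simp; congr 1; ext x; rw [mul_comm x b]
  rw [hIval]
  have hBu : betaFn u = π / Real.cos (π * a / (2*b)) - betaFn v := by
    rw [← hsin]; linarith [hrefl]
  rw [hBu]
  have hkey : ∀ X Y : ℝ, (X - Y - Y)/(2*b) = X/(2*b) - (1/b)*Y := by
    intro X Y
    field_simp
    ring
  rw [hkey (π / Real.cos (π * a / (2*b))) (betaFn v)]
  ring
end

section
/- For real numbers a, b with b > 0 and |a| < b, the integral ∫₀^∞ sinh(ax)/cosh(bx) dx equals (1/(2b))·[ψ((a+3b)/(4b)) − ψ((a+b)/(4b))] subtracted from (π/(2b))·sec(πa/(2b)); equivalently it equals (1/(2b))[ψ((3b+a)/(4b)) − ψ((b+a)/(4b))] with the secant term, where ψ is the digamma function. -/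
open Real MeasureTheory Set Filter Topology

/-- The digamma function `ψ(x) = Γ'(x)/Γ(x)`. -/
noncomputable def digammaFn (x : ℝ) : ℝ := deriv Real.Gamma x / Real.Gamma x


lemma summable_one_div_add_sq {x : ℝ} (hx : 0 < x) :
    Summable (fun n : ℕ => 1 / (x + n) ^ 2) := by
  have h1 : Summable (fun n : ℕ => 1 / ((n : ℝ) + 1) ^ 2) := by
    have := (summable_nat_add_iff (f := fun n : ℕ => 1 / (n : ℝ) ^ 2) 1).mpr
      (Real.summable_one_div_nat_pow.mpr one_lt_two)
    simpa using this
  set m : ℝ := min x 1 with hm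
  have hm0 : 0 < m := lt_min hx one_pos
  refine Summable.of_nonneg_of_le (fun n => by positivity) (fun n => ?_)
    (h1.mul_left (1 / m ^ 2))
  have hxn : 0 < x + n := by positivity
  have key : m * ((n : ℝ) + 1) ≤ x + n := by
    rcases min_cases x 1 with ⟨h, hle⟩ | ⟨h, hle⟩
    · rw [hm, h]; nlinarith [Nat.cast_nonneg (α := ℝ) n]
    · rw [hm, h]; nlinarith [Nat.cast_nonneg (α := ℝ) n]
  have h2 : (m * ((n : ℝ) + 1)) ^ 2 ≤ (x + n) ^ 2 := by
    apply pow_le_pow_left₀ (by positivity) key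
  rw [div_mul_div_comm, one_mul]
  apply one_div_le_one_div_of_le (by positivity)
  calc m ^ 2 * ((n:ℝ)+1) ^ 2 = (m * ((n:ℝ)+1))^2 := by ring
  _ ≤ (x+n)^2 := h2

lemma summable_diff_inv {x y : ℝ} (hx : 0 < x) (hy : 0 < y) :
    Summable (fun n : ℕ => 1 / (x + n) - 1 / (y + n)) := by
  apply Summable.of_abs
  set m : ℝ := min x y with hm
  have hm0 : 0 < m := lt_min hx hy
  refine Summable.of_nonneg_of_le (fun n => abs_nonneg _) (fun n => ?_)
    ((summable_one_div_add_sq hm0).mul_left |y - x|)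
  have hxn : 0 < x + (n:ℝ) := by positivity
  have hyn : 0 < y + (n:ℝ) := by positivity
  have hmn : 0 < m + (n:ℝ) := by positivity
  have h1 : 1 / (x + (n:ℝ)) - 1 / (y + n) = (y - x) / ((x + n) * (y + n)) := by
    field_simp
    ring
  have hprod : (m + (n:ℝ)) ^ 2 ≤ (x+n)*(y+n) := by
    have h1 : m + (n:ℝ) ≤ x + n := by simp [hm, min_le_left]
    have h2 : m + (n:ℝ) ≤ y + n := by simp [hm, min_le_right]
    nlinarith
  rw [h1, abs_div, abs_of_pos (show (0:ℝ) < (x+n)*(y+n) by positivity)]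
  calc |y - x| / ((x+n)*(y+n)) ≤ |y - x| / (m + (n:ℝ))^2 := by gcongr
  _ = |y - x| * (1 / (m + (n:ℝ))^2) := by ring

lemma digamma_eq_deriv_log {x : ℝ} (hx : 0 < x) :
    deriv (fun y => Real.log (Real.Gamma y)) x = digammaFn x := by
  rw [deriv.log (Real.differentiableAt_Gamma (fun m => by
      have := Nat.cast_nonneg (α := ℝ) m; intro h; linarith))
    (Real.Gamma_pos_of_pos hx).ne', digammaFn]

lemma deriv_log_Gamma_add_one {x : ℝ} (hx : 0 < x) :
    deriv (fun y => Real.log (Real.Gamma y)) (x + 1)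
      = deriv (fun y => Real.log (Real.Gamma y)) x + 1 / x := by
  have hder : ∀ {t : ℝ}, 0 < t → DifferentiableAt ℝ (fun y => Real.log (Real.Gamma y)) t := by
    intro t ht
    refine ((Real.differentiableAt_Gamma ?_).log (Real.Gamma_ne_zero ?_)) <;>
      exact fun m => by have := Nat.cast_nonneg (α := ℝ) m; intro h; linarith
  rw [← deriv_comp_add_const (fun y => Real.log (Real.Gamma y)) 1 x, one_div, ← Real.deriv_log,
    ← deriv_add (hder hx) (Real.differentiableAt_log hx.ne')]
  apply Filter.EventuallyEq.deriv_eq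
  filter_upwards [eventually_gt_nhds hx] with t ht
  simp only [Real.Gamma_add_one ht.ne',
    Real.log_mul ht.ne' (Real.Gamma_pos_of_pos ht).ne', add_comm]
  rfl

lemma digammaFn_add_one {x : ℝ} (hx : 0 < x) :
    digammaFn (x + 1) = digammaFn x + 1 / x := by
  rw [← digamma_eq_deriv_log hx, ← digamma_eq_deriv_log (by linarith),
    deriv_log_Gamma_add_one hx]

lemma digammaFn_mono {s t : ℝ} (hs : 0 < s) (hst : s ≤ t) :
    digammaFn s ≤ digammaFn t := by
  have ht : 0 < t := lt_of_lt_of_le hs hst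
  have hder : ∀ {r : ℝ}, 0 < r → DifferentiableAt ℝ (fun y => Real.log (Real.Gamma y)) r := by
    intro r hr
    refine ((Real.differentiableAt_Gamma ?_).log (Real.Gamma_ne_zero ?_)) <;>
      exact fun m => by have := Nat.cast_nonneg (α := ℝ) m; intro h; linarith
  rcases eq_or_lt_of_le hst with rfl | h
  · exact le_refl _
  · rw [← digamma_eq_deriv_log hs, ← digamma_eq_deriv_log ht]
    have hc := Real.convexOn_log_Gamma
    calc deriv (Real.log ∘ Real.Gamma) s
        ≤ slope (Real.log ∘ Real.Gamma) s t :=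
          hc.deriv_le_slope (mem_Ioi.mpr hs) (mem_Ioi.mpr ht) h (hder hs)
      _ ≤ deriv (Real.log ∘ Real.Gamma) t :=
          hc.slope_le_deriv (mem_Ioi.mpr hs) (mem_Ioi.mpr ht) h (hder ht)

lemma tendsto_one_div_add_nat {m : ℝ} (hm : 0 < m) :
    Filter.Tendsto (fun N : ℕ => 1 / (m + N)) Filter.atTop (𝓝 0) := by
  simp only [one_div]
  apply Filter.Tendsto.inv_tendsto_atTop
  exact Filter.tendsto_atTop_add_const_left _ m tendsto_natCast_atTop_atTop

lemma digamma_hasSum {x y : ℝ} (hx : 0 < x) (hy : 0 < y) (h1 : y ≤ x + 1) (h2 : x ≤ y + 1) :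
    HasSum (fun n : ℕ => 1 / (x + n) - 1 / (y + n)) (digammaFn y - digammaFn x) := by
  have hsum : Summable (fun n : ℕ => 1 / (x + n) - 1 / (y + n)) := summable_diff_inv hx hy
  have hpart : ∀ N : ℕ, ∑ n ∈ Finset.range N, (1 / (x + n) - 1 / (y + n))
      = (digammaFn y - digammaFn x) - (digammaFn (y + N) - digammaFn (x + N)) := by
    intro N
    induction N with
    | zero => simp
    | succ N ih =>
      rw [Finset.sum_range_succ, ih]
      have e1 : y + (N + 1 : ℕ) = (y + N) + 1 := by push_cast; ring
      have e2 : x + (N + 1 : ℕ) = (x + N) + 1 := by push_cast; ring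
      rw [e1, e2, digammaFn_add_one (by positivity), digammaFn_add_one (by positivity)]
      ring
  set m : ℝ := min x y with hm
  have hm0 : 0 < m := lt_min hx hy
  have hbound : ∀ N : ℕ, |digammaFn (y + N) - digammaFn (x + N)| ≤ 1 / (m + N) := by
    intro N
    have hxN : (0:ℝ) < x + N := by positivity
    have hyN : (0:ℝ) < y + N := by positivity
    have hmx : 1 / (x + (N:ℝ)) ≤ 1 / (m + N) := by
      apply one_div_le_one_div_of_le (by positivity)
      have : m ≤ x := min_le_left _ _
      linarith
    have hmy : 1 / (y + (N:ℝ)) ≤ 1 / (m + N) := by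
      apply one_div_le_one_div_of_le (by positivity)
      have : m ≤ y := min_le_right _ _
      linarith
    rcases le_total x y with hxy | hxy
    · rw [abs_of_nonneg (by
        have := digammaFn_mono hxN (by linarith : x + (N:ℝ) ≤ y + N); linarith)]
      have hup : digammaFn (y + N) ≤ digammaFn (x + N) + 1 / (x + N) := by
        rw [← digammaFn_add_one hxN]
        exact digammaFn_mono hyN (by linarith)
      calc digammaFn (y + N) - digammaFn (x + N) ≤ 1 / (x + (N:ℝ)) := by linarith
        _ ≤ 1 / (m + N) := hmx
    · rw [abs_sub_comm, abs_of_nonneg (by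
        have := digammaFn_mono hyN (by linarith : y + (N:ℝ) ≤ x + N); linarith)]
      have hup : digammaFn (x + N) ≤ digammaFn (y + N) + 1 / (y + N) := by
        rw [← digammaFn_add_one hyN]
        exact digammaFn_mono hxN (by linarith)
      calc digammaFn (x + N) - digammaFn (y + N) ≤ 1 / (y + (N:ℝ)) := by linarith
        _ ≤ 1 / (m + N) := hmy
  have hG0 : Filter.Tendsto (fun N : ℕ => digammaFn (y + N) - digammaFn (x + N))
      Filter.atTop (𝓝 0) := by
    apply squeeze_zero_norm hbound (tendsto_one_div_add_nat hm0)
  have hlim : Filter.Tendsto (fun N : ℕ => ∑ n ∈ Finset.range N, (1 / (x + n) - 1 / (y + n)))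
      Filter.atTop (𝓝 (digammaFn y - digammaFn x)) := by
    simp only [hpart]
    simpa using (tendsto_const_nhds (x := digammaFn y - digammaFn x)).sub hG0
  have := tendsto_nhds_unique hsum.hasSum.tendsto_sum_nat hlim
  exact this ▸ hsum.hasSum


lemma digamma_reflection {t : ℝ} (h0 : 0 < t) (h1 : t < 1) :
    digammaFn (1 - t) - digammaFn t = π * Real.cos (π * t) / Real.sin (π * t) := by
  have h1t : 0 < 1 - t := by linarith
  have hsin : 0 < Real.sin (π * t) :=
    Real.sin_pos_of_pos_of_lt_pi (by positivity) (by nlinarith [Real.pi_pos])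
  have hdiff : ∀ {r : ℝ}, 0 < r → DifferentiableAt ℝ Real.Gamma r := fun {r} hr =>
    Real.differentiableAt_Gamma (fun m => by have := Nat.cast_nonneg (α := ℝ) m; intro h; linarith)
  set G := Real.Gamma t with hG
  set G1 := Real.Gamma (1 - t) with hG1
  set dt := deriv Real.Gamma t with hdt
  set d1 := deriv Real.Gamma (1 - t) with hd1
  have hGpos : 0 < G := Real.Gamma_pos_of_pos h0
  have hG1pos : 0 < G1 := Real.Gamma_pos_of_pos h1t
  -- derivative of LHS of reflection formula
  have hinner : HasDerivAt (fun s : ℝ => Real.Gamma (1 - s)) (-d1) t := by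
    have h := HasDerivAt.comp t (hdiff h1t).hasDerivAt
      ((hasDerivAt_id t).const_sub 1)
    simpa [Function.comp_def] using h
  have hf : HasDerivAt (fun s : ℝ => Real.Gamma s * Real.Gamma (1 - s))
      (dt * G1 + G * (-d1)) t := (hdiff h0).hasDerivAt.mul hinner
  -- derivative of RHS of reflection formula
  have hsinD : HasDerivAt (fun s : ℝ => Real.sin (π * s)) (Real.cos (π * t) * π) t := by
    have h := HasDerivAt.comp t (Real.hasDerivAt_sin (π * t))
      ((hasDerivAt_id t).const_mul π)
    simpa [Function.comp_def] using h
  have hg : HasDerivAt (fun s : ℝ => π / Real.sin (π * s))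
      (π * (-(Real.cos (π * t) * π) / (Real.sin (π * t)) ^ 2)) t := by
    have h := (hsinD.inv hsin.ne').const_mul π
    simpa [div_eq_mul_inv] using h
  have heq : (fun s : ℝ => Real.Gamma s * Real.Gamma (1 - s))
      = fun s : ℝ => π / Real.sin (π * s) := funext Real.Gamma_mul_Gamma_one_sub
  have hderiv_eq : dt * G1 + G * (-d1)
      = π * (-(Real.cos (π * t) * π) / (Real.sin (π * t)) ^ 2) := by
    rw [← hf.deriv, ← hg.deriv, heq]
  have hGG : G * G1 = π / Real.sin (π * t) := Real.Gamma_mul_Gamma_one_sub t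
  show d1 / G1 - dt / G = π * Real.cos (π * t) / Real.sin (π * t)
  have hpi : (0:ℝ) < π := Real.pi_pos
  field_simp at hderiv_eq hGG ⊢
  apply mul_right_cancel₀ hsin.ne'
  linear_combination (-1 : ℝ) * hderiv_eq - π * Real.cos (π * t) * hGG

lemma integral_exp_neg_mul_Ioi_zero {c : ℝ} (hc : 0 < c) :
    ∫ x in Ioi (0:ℝ), Real.exp (-(c * x)) = 1 / c := by
  have h := integral_comp_mul_left_Ioi (fun y => Real.exp (-y)) 0 hc
  simp only [mul_zero] at h
  calc ∫ x in Ioi (0:ℝ), Real.exp (-(c * x)) = c⁻¹ • ∫ x in Ioi (0:ℝ), Real.exp (-x) := h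
  _ = 1 / c := by rw [integral_exp_neg_Ioi_zero]; simp [one_div]

lemma integrable_exp_neg_mul {c : ℝ} (hc : 0 < c) :
    IntegrableOn (fun x => Real.exp (-(c * x))) (Ioi (0:ℝ)) := by
  simpa [neg_mul] using exp_neg_integrableOn_Ioi 0 hc

section main
variable {a b : ℝ}

lemma sinh_cosh_pointwise (hb : 0 < b) {x : ℝ} (hx : 0 < x) :
    HasSum (fun n : ℕ => (-1:ℝ)^n * (Real.exp (-(((2*n+1)*b - a) * x))
        - Real.exp (-(((2*n+1)*b + a) * x))))
      (Real.sinh (a*x) / Real.cosh (b*x)) := by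
  set r : ℝ := Real.exp (-(2*b*x)) with hrdef
  have hr01 : 0 < r := Real.exp_pos _
  have hrlt : r < 1 := by
    rw [hrdef, Real.exp_lt_one_iff]
    nlinarith
  have hgeo : HasSum (fun n : ℕ => (-r)^n) (1 - (-r))⁻¹ :=
    hasSum_geometric_of_norm_lt_one (by rw [norm_neg, Real.norm_eq_abs, abs_of_pos hr01]; exact hrlt)
  have hS := ((hgeo.mul_left (Real.exp (-((b-a)*x)))).sub
    (hgeo.mul_left (Real.exp (-((b+a)*x)))))
  have hfun : ∀ n : ℕ, Real.exp (-((b-a)*x)) * (-r)^n - Real.exp (-((b+a)*x)) * (-r)^n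
      = (-1:ℝ)^n * (Real.exp (-(((2*n+1)*b - a) * x)) - Real.exp (-(((2*n+1)*b + a) * x))) := by
    intro n
    have hrn : (-r)^n = (-1:ℝ)^n * r^n := by rw [neg_pow]
    have hrn2 : r^n = Real.exp ((n:ℝ) * (-(2*b*x))) := by
      rw [Real.exp_nat_mul]
    have h1 : Real.exp (-((b-a)*x)) * r^n = Real.exp (-(((2*n+1)*b - a) * x)) := by
      rw [hrn2, ← Real.exp_add]; ring_nf
    have h2 : Real.exp (-((b+a)*x)) * r^n = Real.exp (-(((2*n+1)*b + a) * x)) := by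
      rw [hrn2, ← Real.exp_add]; ring_nf
    rw [hrn, ← h1, ← h2]; ring
  have hval : Real.exp (-((b-a)*x)) * (1 - (-r))⁻¹ - Real.exp (-((b+a)*x)) * (1 - (-r))⁻¹
      = Real.sinh (a*x) / Real.cosh (b*x) := by
    rw [Real.sinh_eq, Real.cosh_eq, sub_neg_eq_add]
    have E1 : Real.exp (-((b-a)*x)) = Real.exp (a*x) * (Real.exp (b*x))⁻¹ := by
      rw [← Real.exp_neg, ← Real.exp_add]; congr 1; ring
    have E2 : Real.exp (-((b+a)*x)) = (Real.exp (a*x))⁻¹ * (Real.exp (b*x))⁻¹ := by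
      simp only [← Real.exp_neg, ← Real.exp_add]; congr 1; ring
    have E3 : r = (Real.exp (b*x))⁻¹ * (Real.exp (b*x))⁻¹ := by
      simp only [← Real.exp_neg, ← Real.exp_add, hrdef]; congr 1; ring
    have E4 : Real.exp (-(a*x)) = (Real.exp (a*x))⁻¹ := Real.exp_neg _
    have E5 : Real.exp (-(b*x)) = (Real.exp (b*x))⁻¹ := Real.exp_neg _
    rw [E1, E2, E3, E4, E5]
    have hu := Real.exp_ne_zero (a*x)
    have hv := Real.exp_ne_zero (b*x)
    have hden : 1 + (Real.exp (b*x))⁻¹ * (Real.exp (b*x))⁻¹ ≠ 0 := by positivity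
    field_simp
  rw [← hval]
  exact (funext hfun) ▸ hS

lemma c1_pos (hb : 0 < b) (ha : |a| < b) (n : ℕ) : 0 < (2*(n:ℝ)+1)*b - a := by
  have h := abs_lt.mp ha
  have hn : (0:ℝ) ≤ (n:ℝ) := Nat.cast_nonneg n
  nlinarith

lemma c2_pos (hb : 0 < b) (ha : |a| < b) (n : ℕ) : 0 < (2*(n:ℝ)+1)*b + a := by
  have h := abs_lt.mp ha
  have hn : (0:ℝ) ≤ (n:ℝ) := Nat.cast_nonneg n
  nlinarith

lemma hasSum_integral_sinh_cosh (hb : 0 < b) (ha : |a| < b) :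
    HasSum (fun n : ℕ => (-1:ℝ)^n * (1/((2*(n:ℝ)+1)*b - a) - 1/((2*(n:ℝ)+1)*b + a)))
      (∫ x in Ioi (0:ℝ), Real.sinh (a*x) / Real.cosh (b*x)) := by
  have habs := abs_lt.mp ha
  set F : ℕ → ℝ → ℝ := fun n x => (-1:ℝ)^n * (Real.exp (-(((2*(n:ℝ)+1)*b - a) * x))
      - Real.exp (-(((2*(n:ℝ)+1)*b + a) * x))) with hF
  have hint : ∀ n : ℕ, IntegrableOn (F n) (Ioi (0:ℝ)) := fun n =>
    ((integrable_exp_neg_mul (c1_pos hb ha n)).sub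
      (integrable_exp_neg_mul (c2_pos hb ha n))).const_mul _
  have hp : 0 < (b - a)/(2*b) := by apply div_pos (by linarith) (by linarith)
  have hq : 0 < (b + a)/(2*b) := by apply div_pos (by linarith) (by linarith)
  have hc1 : ∀ n : ℕ, 2*b*((b - a)/(2*b) + n) = (2*(n:ℝ)+1)*b - a := by
    intro n; field_simp; ring
  have hc2 : ∀ n : ℕ, 2*b*((b + a)/(2*b) + n) = (2*(n:ℝ)+1)*b + a := by
    intro n; field_simp; ring
  have hval : ∀ n : ℕ, 1/((2*(n:ℝ)+1)*b - a) - 1/((2*(n:ℝ)+1)*b + a)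
      = 1/(2*b) * (1/((b - a)/(2*b) + n) - 1/((b + a)/(2*b) + n)) := by
    intro n
    simp only [mul_sub, div_mul_div_comm, one_mul]
    rw [hc1 n, hc2 n]
  have hnormval : ∀ n : ℕ, (∫ x in Ioi (0:ℝ), ‖F n x‖)
      = |1/((2*(n:ℝ)+1)*b - a) - 1/((2*(n:ℝ)+1)*b + a)| := by
    intro n
    have h1 := c1_pos hb ha n
    have h2 := c2_pos hb ha n
    rcases le_total 0 a with hsgn | hsgn
    · have hcc : (2*(n:ℝ)+1)*b - a ≤ (2*(n:ℝ)+1)*b + a := by linarith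
      have heq : ∀ x ∈ Ioi (0:ℝ), ‖F n x‖
          = Real.exp (-(((2*(n:ℝ)+1)*b - a) * x)) - Real.exp (-(((2*(n:ℝ)+1)*b + a) * x)) := by
        intro x hx
        rw [hF]
        simp only [norm_mul, norm_pow, norm_neg, norm_one, one_pow, one_mul, Real.norm_eq_abs]
        rw [abs_of_nonneg]
        have : ((2*(n:ℝ)+1)*b - a) * x ≤ ((2*(n:ℝ)+1)*b + a) * x :=
          mul_le_mul_of_nonneg_right hcc (le_of_lt hx)
        have := Real.exp_le_exp.mpr (neg_le_neg this)
        linarith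
      rw [setIntegral_congr_fun measurableSet_Ioi heq,
        integral_sub (integrable_exp_neg_mul h1) (integrable_exp_neg_mul h2),
        integral_exp_neg_mul_Ioi_zero h1, integral_exp_neg_mul_Ioi_zero h2,
        abs_of_nonneg]
      have := one_div_le_one_div_of_le h1 hcc
      linarith
    · have hcc : (2*(n:ℝ)+1)*b + a ≤ (2*(n:ℝ)+1)*b - a := by linarith
      have heq : ∀ x ∈ Ioi (0:ℝ), ‖F n x‖
          = Real.exp (-(((2*(n:ℝ)+1)*b + a) * x)) - Real.exp (-(((2*(n:ℝ)+1)*b - a) * x)) := by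
        intro x hx
        rw [hF]
        simp only [norm_mul, norm_pow, norm_neg, norm_one, one_pow, one_mul, Real.norm_eq_abs]
        rw [abs_sub_comm, abs_of_nonneg]
        have : ((2*(n:ℝ)+1)*b + a) * x ≤ ((2*(n:ℝ)+1)*b - a) * x :=
          mul_le_mul_of_nonneg_right hcc (le_of_lt hx)
        have := Real.exp_le_exp.mpr (neg_le_neg this)
        linarith
      rw [setIntegral_congr_fun measurableSet_Ioi heq,
        integral_sub (integrable_exp_neg_mul h2) (integrable_exp_neg_mul h1),
        integral_exp_neg_mul_Ioi_zero h2, integral_exp_neg_mul_Ioi_zero h1,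
        abs_sub_comm, abs_of_nonneg]
      have := one_div_le_one_div_of_le h2 hcc
      linarith
  have hnorm : Summable (fun n : ℕ => ∫ x in Ioi (0:ℝ), ‖F n x‖) := by
    have hs : Summable (fun n : ℕ => |1/(2*b) * (1/((b - a)/(2*b) + n) - 1/((b + a)/(2*b) + n))|) :=
      ((summable_diff_inv hp hq).mul_left (1/(2*b))).abs
    apply Summable.congr hs
    intro n
    rw [hnormval n, hval n]
  have hkey := MeasureTheory.hasSum_integral_of_summable_integral_norm hint hnorm
  have hptInt : (∫ x in Ioi (0:ℝ), ∑' n, F n x)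
      = ∫ x in Ioi (0:ℝ), Real.sinh (a*x) / Real.cosh (b*x) := by
    apply setIntegral_congr_fun measurableSet_Ioi
    intro x hx
    exact (sinh_cosh_pointwise hb hx).tsum_eq
  have hintF : ∀ n : ℕ, (∫ x in Ioi (0:ℝ), F n x)
      = (-1:ℝ)^n * (1/((2*(n:ℝ)+1)*b - a) - 1/((2*(n:ℝ)+1)*b + a)) := by
    intro n
    rw [hF]
    simp only
    rw [integral_const_mul,
      integral_sub (integrable_exp_neg_mul (c1_pos hb ha n))
        (integrable_exp_neg_mul (c2_pos hb ha n)),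
      integral_exp_neg_mul_Ioi_zero (c1_pos hb ha n),
      integral_exp_neg_mul_Ioi_zero (c2_pos hb ha n)]
  rw [← hptInt]
  exact (funext hintF) ▸ hkey

end main


lemma csc_identity {u : ℝ} (h1 : Real.sin u ≠ 0) (h2 : Real.cos u ≠ 0) :
    π / Real.sin (2*u) = π * Real.cos u / Real.sin u - π * Real.cos (2*u) / Real.sin (2*u) := by
  rw [Real.sin_two_mul, Real.cos_two_mul]
  field_simp
  ring

set_option maxHeartbeats 1000000 in
theorem sinh_div_cosh_integral_digamma (a b : ℝ) (hb : 0 < b) (ha : |a| < b)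
    (hodd : ∀ k : ℤ, a / b ≠ 2 * k + 1) :
    ∫ x in Set.Ioi (0:ℝ), Real.sinh (a * x) / Real.cosh (b * x)
      = (π / (2 * b)) * (1 / Real.cos (π * a / (2 * b)))
        - (1 / (2 * b)) * (digammaFn ((a + 3 * b) / (4 * b))
            - digammaFn ((a + b) / (4 * b))) := by
  clear hodd
  have habs := abs_lt.mp ha
  set p : ℝ := (b - a) / (2 * b) with hpdef
  set q : ℝ := (b + a) / (2 * b) with hqdef
  have hp0 : 0 < p := div_pos (by linarith) (by linarith)
  have hq0 : 0 < q := div_pos (by linarith) (by linarith)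
  have hpq : p + q = 1 := by rw [hpdef, hqdef]; field_simp; ring
  have hp1 : p < 1 := by linarith
  have hq1 : q < 1 := by linarith
  set g : ℕ → ℝ := fun n => 1 / (p + n) - 1 / (q + n) with hgdef
  -- the integral as an alternating series
  have hI0 := hasSum_integral_sinh_cosh hb ha
  have hvals : ∀ n : ℕ, (-1:ℝ)^n * (1/((2*(n:ℝ)+1)*b - a) - 1/((2*(n:ℝ)+1)*b + a))
      = 1/(2*b) * ((-1)^n * g n) := by
    intro n
    have h1 := c1_pos hb ha n
    have h2 := c2_pos hb ha n
    have hc1 : 2*b*(p + n) = (2*(n:ℝ)+1)*b - a := by rw [hpdef]; field_simp; ring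
    have hc2 : 2*b*(q + n) = (2*(n:ℝ)+1)*b + a := by rw [hqdef]; field_simp; ring
    rw [hgdef]
    simp only
    rw [← hc1, ← hc2]
    have hpn : p + (n:ℝ) ≠ 0 := by positivity
    have hqn : q + (n:ℝ) ≠ 0 := by positivity
    field_simp
  rw [funext hvals] at hI0
  -- digamma series
  have hD3 : HasSum g (digammaFn q - digammaFn p) :=
    digamma_hasSum hp0 hq0 (by linarith) (by linarith)
  have hD2' : HasSum (fun n : ℕ => 1 / (q/2 + 1/2 + n) - 1 / (p/2 + 1/2 + n))
      (digammaFn (p/2 + 1/2) - digammaFn (q/2 + 1/2)) :=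
    digamma_hasSum (by linarith) (by linarith) (by linarith) (by linarith)
  have hD2f : ∀ n : ℕ, 1 / (q/2 + 1/2 + n) - 1 / (p/2 + 1/2 + n) = -2 * g (2*n + 1) := by
    intro n
    rw [hgdef]
    simp only
    have hcast : ((2*n+1 : ℕ) : ℝ) = 2*(n:ℝ)+1 := by push_cast; ring
    rw [hcast]
    have d1 : q/2 + 1/2 + (n:ℝ) ≠ 0 := by positivity
    have d2 : p/2 + 1/2 + (n:ℝ) ≠ 0 := by positivity
    have d3 : p + (2*(n:ℝ)+1) ≠ 0 := by positivity
    have d4 : q + (2*(n:ℝ)+1) ≠ 0 := by positivity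
    field_simp
    ring
  have hD2 : HasSum (fun n : ℕ => -2 * g (2*n + 1))
      (digammaFn (p/2 + 1/2) - digammaFn (q/2 + 1/2)) := (funext hD2f) ▸ hD2'
  -- split the alternating series into even and odd parts
  have heven : HasSum (fun k : ℕ => (-1:ℝ)^(2*k) * g (2*k) - g (2*k)) 0 := by
    have : (fun k : ℕ => (-1:ℝ)^(2*k) * g (2*k) - g (2*k)) = fun _ => (0:ℝ) := by
      funext k
      rw [pow_mul, neg_one_sq, one_pow, one_mul, sub_self]
    rw [this]
    exact hasSum_zero
  have hoddS : HasSum (fun k : ℕ => (-1:ℝ)^(2*k+1) * g (2*k+1) - g (2*k+1))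
      (digammaFn (p/2 + 1/2) - digammaFn (q/2 + 1/2)) := by
    have : (fun k : ℕ => (-1:ℝ)^(2*k+1) * g (2*k+1) - g (2*k+1))
        = fun k : ℕ => -2 * g (2*k+1) := by
      funext k
      rw [pow_succ, pow_mul, neg_one_sq, one_pow, one_mul]
      ring
    rw [this]
    exact hD2
  have hsplit : HasSum (fun n : ℕ => (-1:ℝ)^n * g n - g n)
      (0 + (digammaFn (p/2 + 1/2) - digammaFn (q/2 + 1/2))) :=
    HasSum.even_add_odd heven hoddS
  have halt : HasSum (fun n : ℕ => (-1:ℝ)^n * g n)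
      (0 + (digammaFn (p/2 + 1/2) - digammaFn (q/2 + 1/2))
        + (digammaFn q - digammaFn p)) := by
    have h := hsplit.add hD3
    have : (fun n : ℕ => ((-1:ℝ)^n * g n - g n) + g n) = fun n : ℕ => (-1:ℝ)^n * g n := by
      funext n; ring
    rwa [this] at h
  have hIeq : (∫ x in Ioi (0:ℝ), Real.sinh (a*x) / Real.cosh (b*x))
      = 1/(2*b) * (0 + (digammaFn (p/2 + 1/2) - digammaFn (q/2 + 1/2))
        + (digammaFn q - digammaFn p)) := hI0.unique (halt.mul_left _)
  -- digamma argument rewrites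
  have harg1 : (a + 3*b) / (4*b) = q/2 + 1/2 := by rw [hqdef]; field_simp; ring
  have harg2 : (a + b) / (4*b) = q/2 := by rw [hqdef]; field_simp; ring
  -- reflection formulas
  have refl1 : digammaFn (p/2 + 1/2) - digammaFn (q/2)
      = π * Real.cos (π * (q/2)) / Real.sin (π * (q/2)) := by
    have h := digamma_reflection (t := q/2) (by linarith) (by linarith)
    rwa [show 1 - q/2 = p/2 + 1/2 by linarith] at h
  have refl2 : digammaFn p - digammaFn q
      = π * Real.cos (π * q) / Real.sin (π * q) := by
    have h := digamma_reflection (t := q) hq0 hq1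
    rwa [show 1 - q = p by linarith] at h
  -- trigonometry
  have trig1 : Real.cos (π * a / (2*b)) = Real.sin (π * q) := by
    have h : π * a / (2*b) = -(π/2 - π * q) := by rw [hqdef]; field_simp; ring
    rw [h, Real.cos_neg, Real.cos_pi_div_two_sub]
  have hs2 : 0 < Real.sin (π * (q/2)) :=
    Real.sin_pos_of_pos_of_lt_pi (by positivity) (by nlinarith [Real.pi_pos])
  have hc2 : 0 < Real.cos (π * (q/2)) := by
    rw [← Real.sin_pi_div_two_sub]
    exact Real.sin_pos_of_pos_of_lt_pi (by nlinarith [Real.pi_pos]) (by nlinarith [Real.pi_pos])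
  have hsq : 0 < Real.sin (π * q) :=
    Real.sin_pos_of_pos_of_lt_pi (by positivity) (by nlinarith [Real.pi_pos])
  have trig2 : π / Real.sin (π * q)
      = π * Real.cos (π * (q/2)) / Real.sin (π * (q/2))
        - π * Real.cos (π * q) / Real.sin (π * q) := by
    have hdouble : π * q = 2 * (π * (q/2)) := by ring
    rw [hdouble]
    exact csc_identity hs2.ne' hc2.ne'
  -- final assembly
  rw [hIeq, harg1, harg2, trig1]
  have key : 0 + (digammaFn (p/2 + 1/2) - digammaFn (q/2 + 1/2)) + (digammaFn q - digammaFn p)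
      = π / Real.sin (π * q) - (digammaFn (q/2 + 1/2) - digammaFn (q/2)) := by
    rw [trig2]
    linarith [refl1, refl2]
  rw [key]
  field_simp
end

section
/- For real numbers a, b, c, v with c > 0, 0 < v < 2, and |a| + |b| < vc, the integral ∫₀^∞ cosh(ax)·cosh(bx)/cosh^v(cx) dx equals (2^{v−3}/(c·Γ(v)))·[Γ((vc+a+b)/(2c))·Γ((vc−a−b)/(2c)) + Γ((vc+a−b)/(2c))·Γ((vc−a+b)/(2c))]. -/
open Real MeasureTheory

lemma realBeta_integrable {p q : ℝ} (hp : 0 < p) (hq : 0 < q) :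
    IntegrableOn (fun u : ℝ => u ^ (p - 1) * (1 - u) ^ (q - 1)) (Set.Ioo 0 1) := by
  have hC : IntegrableOn (fun x : ℝ => (x : ℂ) ^ ((p : ℂ) - 1) * ((1 : ℂ) - x) ^ ((q : ℂ) - 1))
      (Set.Ioo 0 1) := by
    have := (Complex.betaIntegral_convergent (u := (p : ℂ)) (v := (q : ℂ))
      (by simpa using hp) (by simpa using hq)).1
    exact this.mono_set Set.Ioo_subset_Ioc_self
  have := hC.re
  refine (IntegrableOn.congr_fun this ?_ measurableSet_Ioo)
  intro x hx
  obtain ⟨hx0, hx1⟩ := hx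
  have h1 : (0:ℝ) ≤ x := hx0.le
  have h2 : (0:ℝ) ≤ 1 - x := by linarith
  simp only [Function.comp]
  rw [show ((x : ℂ) ^ ((p:ℂ) - 1) * ((1:ℂ) - x) ^ ((q:ℂ) - 1)) =
      (((x ^ (p-1) * (1-x) ^ (q-1) : ℝ)) : ℂ) by
    push_cast
    rw [Complex.ofReal_cpow h1, Complex.ofReal_cpow h2]
    push_cast
    ring]
  simp

lemma realBeta {p q : ℝ} (hp : 0 < p) (hq : 0 < q) :
    ∫ u in Set.Ioo (0:ℝ) 1, u ^ (p - 1) * (1 - u) ^ (q - 1)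
      = Real.Gamma p * Real.Gamma q / Real.Gamma (p + q) := by
  have hbeta : Complex.betaIntegral p q
      = ((∫ u in Set.Ioo (0:ℝ) 1, u ^ (p - 1) * (1 - u) ^ (q - 1) : ℝ) : ℂ) := by
    rw [Complex.betaIntegral, intervalIntegral.integral_of_le zero_le_one,
      ← MeasureTheory.integral_Ioc_eq_integral_Ioo (f := fun u : ℝ => u ^ (p-1) * (1-u) ^ (q-1))]
    refine (setIntegral_congr_fun measurableSet_Ioc ?_).trans integral_ofReal
    intro x hx
    have h1 : (0:ℝ) ≤ x := hx.1.le
    have h2 : (0:ℝ) ≤ 1 - x := by linarith [hx.2]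
    norm_cast
    norm_cast
    simp_rw [RCLike.ofReal_mul, Complex.coe_algebraMap, Complex.ofReal_cpow h1,
      Complex.ofReal_cpow h2]
  have key := Complex.Gamma_mul_Gamma_eq_betaIntegral (s := (p:ℂ)) (t := (q:ℂ))
    (by simpa using hp) (by simpa using hq)
  rw [hbeta, ← Complex.ofReal_add, Complex.Gamma_ofReal, Complex.Gamma_ofReal,
    Complex.Gamma_ofReal, ← Complex.ofReal_mul, ← Complex.ofReal_mul] at key
  have key' := Complex.ofReal_injective key
  have hG : Real.Gamma (p + q) ≠ 0 := (Real.Gamma_pos_of_pos (by linarith)).ne'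
  field_simp
  linarith [key']

section Subst
variable {c v μ : ℝ}

private noncomputable def fsub (c : ℝ) (u : ℝ) : ℝ := (Real.log (1 - u) - Real.log u) / (2 * c)

private noncomputable def fsub' (c : ℝ) (u : ℝ) : ℝ := (-(1 / (1 - u)) - 1 / u) / (2 * c)

lemma fsub_hasDeriv (hc : 0 < c) {u : ℝ} (hu : u ∈ Set.Ioo (0:ℝ) 1) :
    HasDerivWithinAt (fsub c) (fsub' c u) (Set.Ioo 0 1) u := by
  obtain ⟨h0, h1⟩ := hu
  have hd1 : HasDerivAt (fun u : ℝ => Real.log (1 - u)) (-(1 / (1 - u))) u := by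
    have := (Real.hasDerivAt_log (by linarith : (1:ℝ) - u ≠ 0)).comp u
      ((hasDerivAt_const u (1:ℝ)).sub (hasDerivAt_id u))
    exact this.congr_deriv (by ring)
  have hd2 : HasDerivAt (fun u : ℝ => Real.log u) (1 / u) u := by
    simpa [one_div] using Real.hasDerivAt_log h0.ne'
  have := ((hd1.sub hd2).div_const (2 * c))
  exact this.hasDerivWithinAt

lemma fsub_injOn (hc : 0 < c) : Set.InjOn (fsub c) (Set.Ioo 0 1) := by
  have : StrictAntiOn (fsub c) (Set.Ioo 0 1) := by
    intro u hu w hw huw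
    have l1 : Real.log (1 - w) < Real.log (1 - u) :=
      Real.log_lt_log (by linarith [hw.2]) (by linarith)
    have l2 : Real.log u < Real.log w := Real.log_lt_log hu.1 huw
    have h3 : Real.log (1 - w) - Real.log w < Real.log (1 - u) - Real.log u := by linarith
    exact (div_lt_div_iff_of_pos_right (by linarith)).mpr h3
  exact this.injOn

lemma fsub_image (hc : 0 < c) : fsub c '' Set.Ioo 0 1 = Set.univ := by
  ext x
  simp only [Set.mem_image, Set.mem_univ, iff_true]
  refine ⟨1 / (1 + Real.exp (2 * c * x)), ?_, ?_⟩
  · have hE : 0 < Real.exp (2 * c * x) := Real.exp_pos _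
    constructor
    · positivity
    · rw [div_lt_one (by positivity)]; linarith
  · have hE : 0 < Real.exp (2 * c * x) := Real.exp_pos _
    have hS : 0 < 1 + Real.exp (2 * c * x) := by positivity
    have h1u : 1 - 1 / (1 + Real.exp (2 * c * x))
        = Real.exp (2 * c * x) / (1 + Real.exp (2 * c * x)) := by
      field_simp
      ring
    rw [fsub, h1u, one_div, Real.log_div hE.ne' hS.ne', Real.log_inv, Real.log_exp]
    field_simp
    ring
end Subst

lemma fsub_key {c v : ℝ} (hc : 0 < c) (μ : ℝ) {u : ℝ} (hu : u ∈ Set.Ioo (0:ℝ) 1) :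
    |fsub' c u| * (Real.exp (μ * fsub c u) / Real.cosh (c * fsub c u) ^ v)
      = 2 ^ (v - 1) / c *
          (u ^ ((v * c - μ) / (2 * c) - 1) * (1 - u) ^ ((v * c + μ) / (2 * c) - 1)) := by
  obtain ⟨h0, h1'⟩ := hu
  have h1 : 0 < 1 - u := by linarith
  set m : ℝ := μ / (2 * c) with hm
  -- Step A : absolute value of derivative
  have ha : |fsub' c u| = 1 / (2 * c * (u * (1 - u))) := by
    have haux : fsub' c u = -(1 / (2 * c * (u * (1 - u)))) := by
      unfold fsub'
      field_simp
      ring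
    rw [haux, abs_neg, abs_of_pos (by positivity)]
  -- Step B : exponential factor
  have hb : Real.exp (μ * fsub c u) = (1 - u) ^ m * u ^ (-m) := by
    have e1 : μ * fsub c u = Real.log (1 - u) * m + Real.log u * (-m) := by
      unfold fsub; rw [hm]; field_simp; ring
    rw [e1, Real.exp_add, ← Real.rpow_def_of_pos h1, ← Real.rpow_def_of_pos h0]
  -- Step C : cosh factor
  have hcz : Real.cosh (c * fsub c u)
      = 1 / (2 * (u ^ ((1:ℝ)/2) * (1 - u) ^ ((1:ℝ)/2))) := by
    have e2 : c * fsub c u = Real.log (1 - u) * (1/2) + Real.log u * (-(1/2)) := by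
      unfold fsub; field_simp; ring
    have e3 : -(c * fsub c u) = Real.log (1 - u) * (-(1/2)) + Real.log u * (1/2) := by
      rw [e2]; ring
    rw [Real.cosh_eq, Real.exp_neg]
    rw [e2, Real.exp_add, ← Real.rpow_def_of_pos h1, ← Real.rpow_def_of_pos h0]
    rw [Real.rpow_neg h0.le]
    have hA : u ^ ((1:ℝ)/2) * u ^ ((1:ℝ)/2) = u := by
      rw [← Real.rpow_add h0]; norm_num
    have hB : (1-u) ^ ((1:ℝ)/2) * (1-u) ^ ((1:ℝ)/2) = 1 - u := by
      rw [← Real.rpow_add h1]; norm_num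
    have hApos : 0 < u ^ ((1:ℝ)/2) := Real.rpow_pos_of_pos h0 _
    have hBpos : 0 < (1-u) ^ ((1:ℝ)/2) := Real.rpow_pos_of_pos h1 _
    field_simp
    rw [sq, sq, hA, hB]
    ring
  rw [ha, hb, hcz]
  have hApos : 0 < u ^ ((1:ℝ)/2) := Real.rpow_pos_of_pos h0 _
  have hBpos : 0 < (1-u) ^ ((1:ℝ)/2) := Real.rpow_pos_of_pos h1 _
  rw [one_div (2 * (u ^ ((1:ℝ)/2) * (1 - u) ^ ((1:ℝ)/2))), Real.inv_rpow (by positivity),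
    div_inv_eq_mul]
  rw [Real.mul_rpow (by norm_num) (by positivity), Real.mul_rpow hApos.le hBpos.le]
  rw [← Real.rpow_mul h0.le, ← Real.rpow_mul h1.le]
  rw [show (v * c - μ) / (2 * c) - 1 = 1/2 * v + -m + -1 by rw [hm]; field_simp; ring]
  rw [show (v * c + μ) / (2 * c) - 1 = 1/2 * v + m + -1 by rw [hm]; field_simp; ring]
  rw [Real.rpow_add h0, Real.rpow_add h0, Real.rpow_add h1, Real.rpow_add h1]
  rw [Real.rpow_neg_one, Real.rpow_neg_one]
  rw [Real.rpow_sub two_pos, Real.rpow_one]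
  have h2v : (0:ℝ) < 2 ^ v := Real.rpow_pos_of_pos two_pos v
  field_simp

lemma J_integrable {c v : ℝ} (hc : 0 < c) (hv : 0 < v) {μ : ℝ} (hμ : |μ| < v * c) :
    Integrable (fun x : ℝ => Real.exp (μ * x) / Real.cosh (c * x) ^ v) := by
  obtain ⟨hμ1, hμ2⟩ := abs_lt.mp hμ
  have hq : 0 < (v * c - μ) / (2 * c) := by
    apply div_pos (by linarith) (by linarith)
  have hp : 0 < (v * c + μ) / (2 * c) := by
    apply div_pos (by linarith) (by linarith)
  rw [← integrableOn_univ, ← fsub_image hc,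
    integrableOn_image_iff_integrableOn_abs_deriv_smul measurableSet_Ioo
      (fun u hu => fsub_hasDeriv hc hu) (fsub_injOn hc)]
  refine IntegrableOn.congr_fun
    (((realBeta_integrable hq hp).const_mul ((2:ℝ) ^ (v - 1) / c))) ?_ measurableSet_Ioo
  intro u hu
  simp only [smul_eq_mul]
  exact (fsub_key hc μ hu).symm

lemma J_eq_s15 {c v : ℝ} (hc : 0 < c) (hv : 0 < v) {μ : ℝ} (hμ : |μ| < v * c) :
    ∫ x : ℝ, Real.exp (μ * x) / Real.cosh (c * x) ^ v
      = 2 ^ (v - 1) / c *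
          (Real.Gamma ((v * c - μ) / (2 * c)) * Real.Gamma ((v * c + μ) / (2 * c))
            / Real.Gamma v) := by
  obtain ⟨hμ1, hμ2⟩ := abs_lt.mp hμ
  have hq : 0 < (v * c - μ) / (2 * c) := by
    apply div_pos (by linarith) (by linarith)
  have hp : 0 < (v * c + μ) / (2 * c) := by
    apply div_pos (by linarith) (by linarith)
  have h1 : ∫ x : ℝ, Real.exp (μ * x) / Real.cosh (c * x) ^ v
      = ∫ x in fsub c '' Set.Ioo 0 1, Real.exp (μ * x) / Real.cosh (c * x) ^ v := by
    rw [fsub_image hc, setIntegral_univ]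
  rw [h1, integral_image_eq_integral_abs_deriv_smul measurableSet_Ioo
    (fun u hu => fsub_hasDeriv hc hu) (fsub_injOn hc)]
  rw [setIntegral_congr_fun measurableSet_Ioo
    (show Set.EqOn _ (fun u : ℝ => (2:ℝ) ^ (v - 1) / c *
      (u ^ ((v * c - μ) / (2 * c) - 1) * (1 - u) ^ ((v * c + μ) / (2 * c) - 1))) _ from
      fun u hu => by simpa only [smul_eq_mul] using fsub_key hc μ hu)]
  rw [integral_const_mul, realBeta hq hp]
  rw [show (v * c - μ) / (2 * c) + (v * c + μ) / (2 * c) = v by field_simp; ring]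


theorem cosh_cosh_div_cosh_rpow_integral (a b c v : ℝ) (hc : 0 < c) (hv0 : 0 < v)
    (hv2 : v < 2) (h : |a| + |b| < v * c) :
    ∫ x in Set.Ioi (0:ℝ), Real.cosh (a * x) * Real.cosh (b * x) / (Real.cosh (c * x)) ^ v
      = ((2 : ℝ) ^ (v - 3) / (c * Real.Gamma v)) *
          (Real.Gamma ((v * c + a + b) / (2 * c)) * Real.Gamma ((v * c - a - b) / (2 * c))
            + Real.Gamma ((v * c + a - b) / (2 * c)) *
                Real.Gamma ((v * c - a + b) / (2 * c))) := by
  set F : ℝ → ℝ := fun x => Real.cosh (a * x) * Real.cosh (b * x) / Real.cosh (c * x) ^ v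
    with hF
  set g1 : ℝ → ℝ := fun x => Real.exp ((a + b) * x) / Real.cosh (c * x) ^ v with hg1d
  set g2 : ℝ → ℝ := fun x => Real.exp ((a - b) * x) / Real.cosh (c * x) ^ v with hg2d
  set g3 : ℝ → ℝ := fun x => Real.exp ((b - a) * x) / Real.cosh (c * x) ^ v with hg3d
  set g4 : ℝ → ℝ := fun x => Real.exp ((-a - b) * x) / Real.cosh (c * x) ^ v with hg4d
  have hab1 : |a + b| < v * c := lt_of_le_of_lt (abs_add_le a b) h
  have hab2 : |a - b| < v * c := lt_of_le_of_lt (abs_sub a b) h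
  have hab3 : |b - a| < v * c := by rwa [abs_sub_comm]
  have hab4 : |-a - b| < v * c := by
    rw [show -a - b = -(a + b) by ring, abs_neg]; exact hab1
  have hi1 := J_integrable hc hv0 hab1
  have hi2 := J_integrable hc hv0 hab2
  have hi3 := J_integrable hc hv0 hab3
  have hi4 := J_integrable hc hv0 hab4
  have hFx : ∀ x : ℝ, F x = (g1 x + g2 x + g3 x + g4 x) / 4 := by
    intro x
    have hpos : (0:ℝ) < Real.cosh (c * x) ^ v :=
      Real.rpow_pos_of_pos (Real.cosh_pos _) v
    have hnum : Real.cosh (a * x) * Real.cosh (b * x)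
        = (Real.exp ((a+b)*x) + Real.exp ((a-b)*x) + Real.exp ((b-a)*x)
            + Real.exp ((-a-b)*x)) / 4 := by
      rw [Real.cosh_eq, Real.cosh_eq,
        show (a+b)*x = a*x + b*x by ring, show (a-b)*x = a*x + -(b*x) by ring,
        show (b-a)*x = -(a*x) + b*x by ring, show (-a-b)*x = -(a*x) + -(b*x) by ring,
        Real.exp_add, Real.exp_add, Real.exp_add, Real.exp_add, Real.exp_neg, Real.exp_neg]
      have e1 := Real.exp_ne_zero (a*x)
      have e2 := Real.exp_ne_zero (b*x)
      field_simp
      ring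
    simp only [hF, hg1d, hg2d, hg3d, hg4d]
    rw [hnum]
    field_simp
  have hFint : Integrable F := by
    refine (((((hi1.add hi2).add hi3).add hi4).div_const 4)).congr ?_
    exact Filter.EventuallyEq.of_eq (funext fun x => (hFx x).symm)
  -- evenness
  have habs : ∀ x : ℝ, F |x| = F x := by
    intro x
    rcases le_or_gt 0 x with hx | hx
    · rw [abs_of_nonneg hx]
    · rw [abs_of_neg hx]
      simp only [hF, mul_neg, Real.cosh_neg]
  have heven : 2 * ∫ x in Set.Ioi (0:ℝ), F x = ∫ x : ℝ, F x := by
    rw [← integral_comp_abs (f := F)]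
    exact integral_congr_ae (Filter.EventuallyEq.of_eq (funext habs))
  have hsum : ∫ x : ℝ, F x = ((∫ x : ℝ, g1 x) + (∫ x : ℝ, g2 x) + (∫ x : ℝ, g3 x)
      + (∫ x : ℝ, g4 x)) / 4 := by
    rw [show (fun x : ℝ => F x) = fun x => (g1 x + g2 x + g3 x + g4 x) / 4 from
      funext hFx]
    have s2 : Integrable (fun x : ℝ => g1 x + g2 x) volume := hi1.add hi2
    have s3 : Integrable (fun x : ℝ => g1 x + g2 x + g3 x) volume := s2.add hi3
    rw [integral_div, integral_add s3 hi4, integral_add s2 hi3, integral_add hi1 hi2]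
  have hJ1 := J_eq_s15 hc hv0 hab1
  have hJ2 := J_eq_s15 hc hv0 hab2
  have hJ3 := J_eq_s15 hc hv0 hab3
  have hJ4 := J_eq_s15 hc hv0 hab4
  have hgoal : ∫ x in Set.Ioi (0:ℝ), F x = (∫ x : ℝ, F x) / 2 := by
    rw [← heven]; ring
  rw [hgoal, hsum]
  rw [show (∫ x : ℝ, g1 x) = ∫ x : ℝ, Real.exp ((a+b) * x) / Real.cosh (c * x) ^ v from rfl,
    show (∫ x : ℝ, g2 x) = ∫ x : ℝ, Real.exp ((a-b) * x) / Real.cosh (c * x) ^ v from rfl,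
    show (∫ x : ℝ, g3 x) = ∫ x : ℝ, Real.exp ((b-a) * x) / Real.cosh (c * x) ^ v from rfl,
    show (∫ x : ℝ, g4 x) = ∫ x : ℝ, Real.exp ((-a-b) * x) / Real.cosh (c * x) ^ v from rfl,
    hJ1, hJ2, hJ3, hJ4]
  rw [show (v * c - (a + b)) / (2 * c) = (v * c - a - b) / (2 * c) by ring_nf,
    show (v * c + (a + b)) / (2 * c) = (v * c + a + b) / (2 * c) by ring_nf,
    show (v * c - (a - b)) / (2 * c) = (v * c - a + b) / (2 * c) by ring_nf,
    show (v * c + (a - b)) / (2 * c) = (v * c + a - b) / (2 * c) by ring_nf,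
    show (v * c - (b - a)) / (2 * c) = (v * c + a - b) / (2 * c) by ring_nf,
    show (v * c + (b - a)) / (2 * c) = (v * c - a + b) / (2 * c) by ring_nf,
    show (v * c - (-a - b)) / (2 * c) = (v * c + a + b) / (2 * c) by ring_nf,
    show (v * c + (-a - b)) / (2 * c) = (v * c - a - b) / (2 * c) by ring_nf]
  rw [show v - 1 = (v - 3) + 2 by ring, Real.rpow_add two_pos]
  norm_num
  ring
end

section
/- For real numbers a, c, v with c > 0, 0 < v < 2, and |a| < vc, the integral ∫₀^∞ cosh(ax)/cosh^v(cx) dx equals (2^{v−2}/(c·Γ(v)))·Γ(v/2 + a/(2c))·Γ(v/2 − a/(2c)). -/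
open Real MeasureTheory intervalIntegral


lemma betaReal (p q : ℝ) (hp : 0 < p) (hq : 0 < q) :
    ∫ s in (0:ℝ)..1, s ^ (p-1) * (1-s) ^ (q-1)
      = Real.Gamma p * Real.Gamma q / Real.Gamma (p+q) := by
  have key := Complex.Gamma_mul_Gamma_eq_betaIntegral (s := (p:ℂ)) (t := (q:ℂ))
    (by simpa using hp) (by simpa using hq)
  have hbe : Complex.betaIntegral (p:ℂ) (q:ℂ)
      = ((∫ s in (0:ℝ)..1, s ^ (p-1) * (1-s) ^ (q-1) : ℝ) : ℂ) := by
    rw [Complex.betaIntegral, ← intervalIntegral.integral_ofReal]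
    refine intervalIntegral.integral_congr fun x hx => ?_
    rw [Set.uIcc_of_le (by norm_num : (0:ℝ) ≤ 1)] at hx
    rw [show ((p:ℂ)-1) = ((p-1:ℝ):ℂ) by push_cast; ring,
      show ((q:ℂ)-1) = ((q-1:ℝ):ℂ) by push_cast; ring,
      show (1 - (x:ℂ)) = ((1-x:ℝ):ℂ) by push_cast; ring,
      ← Complex.ofReal_cpow hx.1, ← Complex.ofReal_cpow (by linarith [hx.2]),
      ← Complex.ofReal_mul]
  rw [hbe] at key
  have hG : Real.Gamma (p+q) ≠ 0 := (Real.Gamma_pos_of_pos (by linarith)).ne'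
  have := key
  rw [show ((p:ℂ)+(q:ℂ)) = ((p+q:ℝ):ℂ) by push_cast; ring] at this
  rw [Complex.Gamma_ofReal, Complex.Gamma_ofReal, Complex.Gamma_ofReal] at this
  have h2 : ((Real.Gamma p * Real.Gamma q : ℝ) : ℂ)
      = ((Real.Gamma (p+q) * ∫ s in (0:ℝ)..1, s ^ (p-1) * (1-s) ^ (q-1) : ℝ) : ℂ) := by
    push_cast; exact this
  field_simp
  have := Complex.ofReal_injective h2
  linarith [this]


lemma betaIntegrable (p q : ℝ) (hp : 0 < p) (hq : 0 < q) :
    IntervalIntegrable (fun s : ℝ => s ^ (p-1) * (1-s) ^ (q-1)) volume 0 1 := by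
  have hC := Complex.betaIntegral_convergent (u := (p:ℂ)) (v := (q:ℂ))
    (by simpa using hp) (by simpa using hq)
  rw [intervalIntegrable_iff_integrableOn_Ioc_of_le (by norm_num)] at hC ⊢
  have : IntegrableOn (fun x : ℝ => ((x:ℂ) ^ ((p:ℂ)-1) * (1-(x:ℂ)) ^ ((q:ℂ)-1)).re)
      (Set.Ioc (0:ℝ) 1) volume := hC.re
  refine IntegrableOn.congr_fun this (fun x hx => ?_) measurableSet_Ioc
  rw [show ((p:ℂ)-1) = ((p-1:ℝ):ℂ) by push_cast; ring,
    show ((q:ℂ)-1) = ((q-1:ℝ):ℂ) by push_cast; ring,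
    show (1 - (x:ℂ)) = ((1-x:ℝ):ℂ) by push_cast; ring,
    ← Complex.ofReal_cpow hx.1.le, ← Complex.ofReal_cpow (by linarith [hx.2]),
    ← Complex.ofReal_mul, Complex.ofReal_re]

lemma betaHalf (p q : ℝ) (hp : 0 < p) (hq : 0 < q) :
    ∫ s in (1/2:ℝ)..1, (s ^ (q-1) * (1-s) ^ (p-1) + s ^ (p-1) * (1-s) ^ (q-1))
      = ∫ s in (0:ℝ)..1, s ^ (p-1) * (1-s) ^ (q-1) := by
  have hI := betaIntegrable p q hp hq
  have hI' := betaIntegrable q p hq hp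
  have hsub : Set.uIcc (1/2:ℝ) 1 ⊆ Set.uIcc (0:ℝ) 1 := by
    rw [Set.uIcc_of_le (by norm_num : (1/2:ℝ) ≤ 1), Set.uIcc_of_le (by norm_num : (0:ℝ) ≤ 1)]
    exact Set.Icc_subset_Icc (by norm_num) le_rfl
  have hsub' : Set.uIcc (0:ℝ) (1/2) ⊆ Set.uIcc (0:ℝ) 1 := by
    rw [Set.uIcc_of_le (by norm_num : (0:ℝ) ≤ 1/2), Set.uIcc_of_le (by norm_num : (0:ℝ) ≤ 1)]
    exact Set.Icc_subset_Icc le_rfl (by norm_num)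
  rw [intervalIntegral.integral_add (hI'.mono_set hsub) (hI.mono_set hsub)]
  have h1 : ∫ s in (1/2:ℝ)..1, s ^ (q-1) * (1-s) ^ (p-1)
      = ∫ s in (0:ℝ)..(1/2), s ^ (p-1) * (1-s) ^ (q-1) := by
    have := intervalIntegral.integral_comp_sub_left
      (a := (1/2:ℝ)) (b := 1) (fun s : ℝ => s ^ (p-1) * (1-s) ^ (q-1)) 1
    norm_num at this
    rw [← this]
    refine intervalIntegral.integral_congr fun x hx => ?_
    ring_nf
  rw [h1, intervalIntegral.integral_add_adjacent_intervals
    (hI.mono_set hsub') (hI.mono_set hsub)]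

theorem cosh_div_cosh_rpow_integral (a c v : ℝ) (hc : 0 < c) (hv0 : 0 < v) (hv2 : v < 2)
    (h : |a| < v * c) :
    ∫ x in Set.Ioi (0:ℝ), Real.cosh (a * x) / (Real.cosh (c * x)) ^ v
      = ((2 : ℝ) ^ (v - 2) / (c * Real.Gamma v)) *
          (Real.Gamma (v / 2 + a / (2 * c)) * Real.Gamma (v / 2 - a / (2 * c))) := by
  obtain ⟨ha1, ha2⟩ := abs_lt.mp h
  set P : ℝ := v / 2 - a / (2 * c) with hP
  set Q : ℝ := v / 2 + a / (2 * c) with hQ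
  have hp : 0 < P := by
    rw [hP, sub_pos, div_lt_div_iff₀ (by linarith) (by norm_num)]
    linarith
  have hq : 0 < Q := by
    have : -(v/2) < a / (2*c) := by
      rw [neg_lt, ← neg_div, div_lt_div_iff₀ (by linarith) (by norm_num)]
      linarith
    rw [hQ]; linarith
  have hPQ : P + Q = v := by rw [hP, hQ]; ring
  set g : ℝ → ℝ := fun x => (1 + Real.exp (-(2*c)*x))⁻¹ with hg
  set g' : ℝ → ℝ := fun x => 2*c*Real.exp (-(2*c)*x) / (1 + Real.exp (-(2*c)*x))^2 with hg'
  set F : ℝ → ℝ := fun s =>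
    (2:ℝ)^(v-2)/c * (s ^ (Q-1) * (1-s) ^ (P-1) + s ^ (P-1) * (1-s) ^ (Q-1)) with hF
  have hne : ∀ x : ℝ, 1 + Real.exp (-(2*c)*x) ≠ 0 := fun x => by positivity
  have hderiv : ∀ x ∈ Set.Ioi (0:ℝ), HasDerivWithinAt g (g' x) (Set.Ioi 0) x := by
    intro x _
    have h1 : HasDerivAt (fun y : ℝ => -(2*c)*y) (-(2*c)) x := by
      simpa using (hasDerivAt_id x).const_mul (-(2*c))
    have h2 := h1.exp
    have h3 := (h2.const_add 1).inv (hne x)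
    refine (h3.congr_deriv ?_).hasDerivWithinAt
    rw [hg']; field_simp
  have hinj : Set.InjOn g (Set.Ioi 0) := by
    intro x _ y _ hxy
    simp only [hg] at hxy
    have h1 : (1:ℝ) + Real.exp (-(2*c)*x) = 1 + Real.exp (-(2*c)*y) := inv_injective hxy
    have h2 : Real.exp (-(2*c)*x) = Real.exp (-(2*c)*y) := by linarith
    have h3 := Real.exp_injective h2
    have hc' : -(2*c) ≠ 0 := by intro hh; nlinarith
    exact mul_left_cancel₀ hc' h3
  have himg : g '' Set.Ioi 0 = Set.Ioo (1/2:ℝ) 1 := by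
    ext s
    constructor
    · rintro ⟨x, hx, rfl⟩
      have hx0 : (0:ℝ) < x := hx
      set t : ℝ := Real.exp (-(2*c)*x) with hT
      have ht0 : 0 < t := Real.exp_pos _
      have ht1 : t < 1 := by
        rw [hT, Real.exp_lt_one_iff]; nlinarith
      have ht1p : (0:ℝ) < 1 + t := by positivity
      have hgx : g x = (1+t)⁻¹ := rfl
      rw [hgx]
      constructor
      · rw [show (1/2:ℝ) = 2⁻¹ by norm_num]
        exact inv_strictAnti₀ ht1p (by linarith)
      · rw [inv_lt_one_iff₀]; right; linarith
    · rintro ⟨hs1, hs2⟩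
      have hs0 : 0 < s := by linarith
      have h1s : 0 < 1 - s := by linarith
      refine ⟨Real.log (s/(1-s)) / (2*c), ?_, ?_⟩
      · have h1 : 1 < s / (1-s) := by
          rw [lt_div_iff₀ h1s]; linarith
        exact div_pos (Real.log_pos h1) (by positivity)
      · show (1 + Real.exp (-(2*c) * (Real.log (s/(1-s)) / (2*c))))⁻¹ = s
        have he : -(2*c) * (Real.log (s/(1-s)) / (2*c)) = Real.log ((1-s)/s) := by
          rw [Real.log_div h1s.ne' hs0.ne', Real.log_div hs0.ne' h1s.ne']
          field_simp; ring
        rw [he, Real.exp_log (by positivity)]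
        field_simp
        ring
  have hpoint : ∀ x ∈ Set.Ioi (0:ℝ),
      Real.cosh (a * x) / (Real.cosh (c * x)) ^ v = |g' x| • F (g x) := by
    intro x hx
    set t : ℝ := Real.exp (-(2*c)*x) with hT
    have ht0 : 0 < t := Real.exp_pos _
    have ht1p : (0:ℝ) < 1 + t := by positivity
    set E1 : ℝ := Real.exp ((a - c*v)*x) with hE1d
    set E2 : ℝ := Real.exp ((-a - c*v)*x) with hE2d
    have habs : |g' x| = 2*c*t/(1+t)^2 := by
      rw [hg']; exact abs_of_pos (by positivity)
    have hgx : g x = (1+t)⁻¹ := rfl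
    have h1g : (1:ℝ) - (1+t)⁻¹ = t/(1+t) := by field_simp; ring
    have hu1 : (1+t)^(-(Q-1)) * (1+t)^(-(P-1)) = (1+t)^2 * ((1+t)^v)⁻¹ := by
      rw [← Real.rpow_add ht1p, ← Real.rpow_neg ht1p.le, ← Real.rpow_natCast (1+t) 2,
        ← Real.rpow_add ht1p]
      congr 1
      push_cast
      linarith [hPQ]
    have htp1 : t ^ (P-1) = E1/t := by
      rw [hT, hE1d, ← Real.exp_mul, ← Real.exp_sub]
      congr 1
      rw [hP]; field_simp; ring
    have htq1 : t ^ (Q-1) = E2/t := by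
      rw [hT, hE2d, ← Real.exp_mul, ← Real.exp_sub]
      congr 1
      rw [hQ]; field_simp; ring
    have hFg : F (g x) = (2:ℝ)^(v-2)/c *
        ((E1/t) * ((1+t)^2 * ((1+t)^v)⁻¹) + (E2/t) * ((1+t)^2 * ((1+t)^v)⁻¹)) := by
      simp only [hF, hgx, h1g]
      rw [Real.inv_rpow ht1p.le, Real.inv_rpow ht1p.le,
        Real.div_rpow ht0.le ht1p.le, Real.div_rpow ht0.le ht1p.le,
        ← Real.rpow_neg ht1p.le, ← Real.rpow_neg ht1p.le, htp1, htq1]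
      have hrw1 : ((1+t):ℝ)^(P-1) = ((1+t)^(-(P-1)))⁻¹ := by
        rw [Real.rpow_neg ht1p.le, inv_inv]
      have hrw2 : ((1+t):ℝ)^(Q-1) = ((1+t)^(-(Q-1)))⁻¹ := by
        rw [Real.rpow_neg ht1p.le, inv_inv]
      rw [hrw1, hrw2]
      simp only [div_eq_mul_inv, inv_inv]
      linear_combination (2^(v-2)/c * (E1/t + E2/t)) * hu1
    -- cosh side
    have hcosh : Real.cosh (c*x) = Real.exp (c*x) * (1+t) / 2 := by
      rw [Real.cosh_eq, hT]
      rw [show Real.exp (c*x) * (1 + Real.exp (-(2*c)*x)) = Real.exp (c*x) + Real.exp (-(c*x)) by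
        rw [mul_add, mul_one, ← Real.exp_add]; congr 2; ring]
    have hcoshv : Real.cosh (c*x) ^ v = Real.exp (c*x*v) * (1+t)^v / (2:ℝ)^v := by
      rw [hcosh, Real.div_rpow (by positivity) (by norm_num),
        Real.mul_rpow (Real.exp_pos _).le ht1p.le, ← Real.exp_mul]
    have hexpA : Real.exp (a*x) = E1 * Real.exp (c*x*v) := by
      rw [hE1d, ← Real.exp_add]; congr 1; ring
    have hexpB : Real.exp (-(a*x)) = E2 * Real.exp (c*x*v) := by
      rw [hE2d, ← Real.exp_add]; congr 1; ring
    have h2v : (2:ℝ)^v = (2:ℝ)^(v-2)*4 := by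
      have e : (2:ℝ)^v = 2^(v-2) * 2^(2:ℝ) := by
        rw [← Real.rpow_add (by norm_num)]; ring_nf
      have e2 : (2:ℝ)^(2:ℝ) = 4 := by
        rw [show ((2:ℝ):ℝ) = ((2:ℕ):ℝ) by norm_num, Real.rpow_natCast]; norm_num
      rw [e, e2]
    rw [smul_eq_mul, habs, hFg, Real.cosh_eq, hexpA, hexpB, hcoshv, h2v]
    have hv_ne : ((1+t):ℝ)^v ≠ 0 := by positivity
    have h2_ne : ((2:ℝ))^(v-2) ≠ 0 := by positivity
    field_simp
    ring
  rw [setIntegral_congr_fun measurableSet_Ioi hpoint,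
    ← integral_image_eq_integral_abs_deriv_smul measurableSet_Ioi hderiv hinj F, himg,
    ← MeasureTheory.integral_Ioc_eq_integral_Ioo,
    ← intervalIntegral.integral_of_le (by norm_num : (1/2:ℝ) ≤ 1)]
  simp only [hF]
  rw [intervalIntegral.integral_const_mul, betaHalf P Q hp hq, betaReal P Q hp hq, hPQ]
  ring
end

section
/- For real numbers a, c, v with c > 0, 0 < v < 1, and |a| < vc, the integral ∫₀^∞ cosh(ax)/sinh^v(cx) dx equals (2^{v−2}/(c·Γ(v)))·Γ(v/2 + a/(2c))·Γ(v/2 − a/(2c))·cos(aπ/(2c))/cos(vπ/2). -/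
open Real MeasureTheory

-- Real Beta integral: integrability
lemma my_beta_integrableOn {p q : ℝ} (hp : 0 < p) (hq : 0 < q) :
    MeasureTheory.IntegrableOn (fun t : ℝ => t ^ (p-1) * (1-t) ^ (q-1)) (Set.Ioo 0 1) := by
  have hC := Complex.betaIntegral_convergent (u := (p:ℂ)) (v := (q:ℂ)) (by simpa) (by simpa)
  rw [intervalIntegrable_iff_integrableOn_Ioc_of_le zero_le_one] at hC
  have hre : MeasureTheory.IntegrableOn
      (fun x : ℝ => ((x:ℂ) ^ ((p:ℂ)-1) * (1-(x:ℂ)) ^ ((q:ℂ)-1)).re) (Set.Ioc 0 1) := hC.re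
  refine (hre.congr_fun ?_ measurableSet_Ioc).mono_set Set.Ioo_subset_Ioc_self
  intro x hx
  have h1 : ((x:ℂ) ^ ((p:ℂ)-1) * (1-(x:ℂ)) ^ ((q:ℂ)-1))
      = ((x ^ (p-1) * (1-x) ^ (q-1) : ℝ) : ℂ) := by
    rw [Complex.ofReal_mul, Complex.ofReal_cpow hx.1.le,
      Complex.ofReal_cpow (by linarith [hx.2] : (0:ℝ) ≤ 1 - x)]
    push_cast
    ring
  simp [h1]

lemma my_beta_value {p q : ℝ} (hp : 0 < p) (hq : 0 < q) :
    ∫ t in Set.Ioo (0:ℝ) 1, t ^ (p-1) * (1-t) ^ (q-1)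
      = Real.Gamma p * Real.Gamma q / Real.Gamma (p+q) := by
  have key := Complex.Gamma_mul_Gamma_eq_betaIntegral (s := (p:ℂ)) (t := (q:ℂ))
    (by simpa) (by simpa)
  have hbeta : Complex.betaIntegral p q
      = ((∫ t in Set.Ioo (0:ℝ) 1, t ^ (p-1) * (1-t) ^ (q-1) : ℝ) : ℂ) := by
    rw [Complex.betaIntegral]
    have : ∀ x ∈ Set.uIcc (0:ℝ) 1,
        (x:ℂ) ^ ((p:ℂ)-1) * (1-(x:ℂ)) ^ ((q:ℂ)-1)
          = ((x ^ (p-1) * (1-x) ^ (q-1) : ℝ) : ℂ) := by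
      intro x hx
      rw [Set.uIcc_of_le zero_le_one] at hx
      rw [Complex.ofReal_mul, Complex.ofReal_cpow hx.1,
        Complex.ofReal_cpow (by linarith [hx.2] : (0:ℝ) ≤ 1 - x)]
      push_cast
      ring
    rw [intervalIntegral.integral_congr this, intervalIntegral.integral_ofReal,
      intervalIntegral.integral_of_le zero_le_one, MeasureTheory.integral_Ioc_eq_integral_Ioo]
  rw [hbeta, ← Complex.ofReal_add, Complex.Gamma_ofReal, Complex.Gamma_ofReal,
    Complex.Gamma_ofReal, ← Complex.ofReal_mul, ← Complex.ofReal_mul] at key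
  have hreal : Real.Gamma p * Real.Gamma q
      = Real.Gamma (p+q) * ∫ t in Set.Ioo (0:ℝ) 1, t ^ (p-1) * (1-t) ^ (q-1) :=
    Complex.ofReal_injective key
  have hG : Real.Gamma (p+q) ≠ 0 := (Real.Gamma_pos_of_pos (by positivity)).ne'
  field_simp [hG] at hreal ⊢
  linarith [hreal]

lemma exp_neg_image {b : ℝ} (hb : 0 < b) :
    (fun x : ℝ => Real.exp ((-b)*x)) '' Set.Ioi 0 = Set.Ioo 0 1 := by
  ext y
  constructor
  · rintro ⟨x, hx, rfl⟩
    simp only [Set.mem_Ioi] at hx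
    exact ⟨Real.exp_pos _, Real.exp_lt_one_iff.mpr (by nlinarith)⟩
  · rintro ⟨hy0, hy1⟩
    refine ⟨-Real.log y / b, ?_, ?_⟩
    · have : Real.log y < 0 := Real.log_neg hy0 hy1
      simp only [Set.mem_Ioi]
      exact div_pos (by linarith) hb
    · simp only
      rw [show (-b) * (-Real.log y / b) = Real.log y by field_simp]
      exact Real.exp_log hy0

lemma gamma_sum_identity {p q : ℝ} (hp : 0 < p) (hq : 0 < q) (hpq : p + q < 1) :
    Real.Gamma p * Real.Gamma (1-(p+q)) / Real.Gamma (1-q)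
      + Real.Gamma q * Real.Gamma (1-(p+q)) / Real.Gamma (1-p)
      = Real.Gamma p * Real.Gamma q * Real.cos ((q-p)*π/2)
        / (Real.Gamma (p+q) * Real.cos ((p+q)*π/2)) := by
  have pi_pos := Real.pi_pos
  have hv0 : 0 < p + q := by positivity
  have hq1 : q < 1 := by linarith
  have hp1 : p < 1 := by linarith
  have gp := Real.Gamma_pos_of_pos hp
  have gq := Real.Gamma_pos_of_pos hq
  have gv := Real.Gamma_pos_of_pos hv0
  have sp : 0 < Real.sin (π*p) :=
    Real.sin_pos_of_pos_of_lt_pi (by positivity) (by nlinarith)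
  have sq : 0 < Real.sin (π*q) :=
    Real.sin_pos_of_pos_of_lt_pi (by positivity) (by nlinarith)
  have s2 : 0 < Real.sin (π*(p+q)/2) :=
    Real.sin_pos_of_pos_of_lt_pi (by positivity) (by nlinarith)
  have c2 : 0 < Real.cos (π*(p+q)/2) :=
    Real.cos_pos_of_mem_Ioo ⟨by nlinarith, by nlinarith⟩
  have rp := Real.Gamma_mul_Gamma_one_sub p
  have rq := Real.Gamma_mul_Gamma_one_sub q
  have rv := Real.Gamma_mul_Gamma_one_sub (p+q)
  have hsv : Real.sin (π*(p+q)) = 2 * Real.sin (π*(p+q)/2) * Real.cos (π*(p+q)/2) := by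
    have h2 := Real.sin_two_mul (π*(p+q)/2)
    rw [show 2*(π*(p+q)/2) = π*(p+q) by ring] at h2
    exact h2
  have hsum : Real.sin (π*p) + Real.sin (π*q)
      = 2 * Real.sin (π*(p+q)/2) * Real.cos ((π*p - π*q)/2) := by
    have e3 : Real.sin (π*p) = Real.sin (π*(p+q)/2 + (π*p-π*q)/2) := congrArg Real.sin (by ring)
    have e4 : Real.sin (π*q) = Real.sin (π*(p+q)/2 - (π*p-π*q)/2) := congrArg Real.sin (by ring)
    rw [e3, e4, Real.sin_add, Real.sin_sub]
    ring
  have hGq : Real.Gamma (1-q) = π / (Real.sin (π*q) * Real.Gamma q) := by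
    rw [eq_div_iff (by positivity : (Real.sin (π*q) * Real.Gamma q) ≠ 0)]
    rw [eq_div_iff sq.ne'] at rq
    linear_combination rq
  have hGp : Real.Gamma (1-p) = π / (Real.sin (π*p) * Real.Gamma p) := by
    rw [eq_div_iff (by positivity : (Real.sin (π*p) * Real.Gamma p) ≠ 0)]
    rw [eq_div_iff sp.ne'] at rp
    linear_combination rp
  have sv : 0 < Real.sin (π*(p+q)) :=
    Real.sin_pos_of_pos_of_lt_pi (by positivity) (by nlinarith)
  have hGv : Real.Gamma (1-(p+q)) = π / (Real.sin (π*(p+q)) * Real.Gamma (p+q)) := by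
    rw [eq_div_iff (by positivity : (Real.sin (π*(p+q)) * Real.Gamma (p+q)) ≠ 0)]
    rw [eq_div_iff sv.ne'] at rv
    linear_combination rv
  have e1 : Real.cos ((q-p)*π/2) = Real.cos ((π*p - π*q)/2) := by
    rw [show (q-p)*π/2 = -((π*p-π*q)/2) by ring, Real.cos_neg]
  have e2 : Real.cos ((p+q)*π/2) = Real.cos (π*(p+q)/2) := by ring_nf
  rw [hGq, hGp, hGv, e1, e2, hsv]
  field_simp
  rw [show (π*p - π*q)/2 = π*(p-q)/2 by ring] at hsum
  linear_combination hsum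

lemma my_pointwise (a c v : ℝ) (hc : 0 < c) {x : ℝ} (hx : 0 < x) :
    |(-(2*c)) * Real.exp ((-(2*c))*x)| *
      ((2:ℝ)^(v-2)/c * (Real.exp ((-(2*c))*x) ^ (v/2 - a/(2*c) - 1) * (1 - Real.exp ((-(2*c))*x)) ^ (1-v-1)
        + Real.exp ((-(2*c))*x) ^ (v/2 + a/(2*c) - 1) * (1 - Real.exp ((-(2*c))*x)) ^ (1-v-1)))
      = Real.cosh (a*x) / Real.sinh (c*x) ^ v := by
  have hc2 : (0:ℝ) < 2*c := by linarith
  set t := Real.exp ((-(2*c))*x) with ht_def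
  have ht0 : 0 < t := Real.exp_pos _
  have ht1 : t < 1 := by
    rw [ht_def]
    exact Real.exp_lt_one_iff.mpr (by nlinarith)
  have h1t : 0 < 1 - t := by linarith
  have habs : |(-(2*c)) * t| = 2*c*t := by
    rw [abs_of_neg (by nlinarith)]; ring
  have htp : t ^ (v/2 - a/(2*c) - 1)
      = Real.exp (a*x) * (Real.exp (c*x*v))⁻¹ * Real.exp (2*c*x) := by
    rw [ht_def, ← Real.exp_mul, ← Real.exp_neg, ← Real.exp_add, ← Real.exp_add]
    congr 1
    field_simp
    ring
  have htq : t ^ (v/2 + a/(2*c) - 1)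
      = (Real.exp (a*x))⁻¹ * (Real.exp (c*x*v))⁻¹ * Real.exp (2*c*x) := by
    rw [ht_def, ← Real.exp_mul, ← Real.exp_neg, ← Real.exp_neg, ← Real.exp_add, ← Real.exp_add]
    congr 1
    field_simp
    ring
  have hneg : (1-t) ^ ((1:ℝ)-v-1) = ((1-t) ^ v)⁻¹ := by
    rw [show (1:ℝ)-v-1 = -v by ring, Real.rpow_neg h1t.le]
  have hsinh : Real.sinh (c*x) ^ v = (1-t) ^ v * Real.exp (c*x*v) / 2 ^ v := by
    have hs : Real.sinh (c*x) = (1-t) * Real.exp (c*x) / 2 := by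
      rw [Real.sinh_eq, ht_def, show (-(2*c))*x = -(c*x) + -(c*x) by ring, Real.exp_add,
        Real.exp_neg]
      field_simp
    rw [hs, Real.div_rpow (by positivity) (by norm_num),
      Real.mul_rpow h1t.le (Real.exp_pos _).le, ← Real.exp_mul]
  have hcosh : Real.cosh (a*x) = (Real.exp (a*x) + (Real.exp (a*x))⁻¹)/2 := by
    rw [Real.cosh_eq, Real.exp_neg]
  have h2v : (2:ℝ)^(v-2) = 2^v / 4 := by
    rw [Real.rpow_sub two_pos]
    norm_num
  have htW : t = (Real.exp (2*c*x))⁻¹ := by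
    rw [ht_def, ← Real.exp_neg]
    congr 1
    ring
  have hWt : Real.exp (2*c*x) = t⁻¹ := by
    rw [ht_def, ← Real.exp_neg]
    congr 1
    ring
  rw [habs, htp, htq, hneg, hsinh, hcosh, h2v, hWt]
  have hB : (0:ℝ) < (1-t) ^ v := Real.rpow_pos_of_pos h1t v
  have h2vpos : (0:ℝ) < (2:ℝ) ^ v := Real.rpow_pos_of_pos two_pos v
  have e1 : Real.exp (a*x) ≠ 0 := (Real.exp_pos _).ne'
  have e2 : Real.exp (c*x*v) ≠ 0 := (Real.exp_pos _).ne'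
  have e3 : Real.exp (2*c*x) ≠ 0 := (Real.exp_pos _).ne'
  field_simp
  ring

theorem cosh_div_sinh_rpow_integral (a c v : ℝ) (hc : 0 < c) (hv0 : 0 < v) (hv1 : v < 1)
    (h : |a| < v * c) :
    ∫ x in Set.Ioi (0:ℝ), Real.cosh (a * x) / (Real.sinh (c * x)) ^ v
      = ((2 : ℝ) ^ (v - 2) / (c * Real.Gamma v)) *
          (Real.Gamma (v / 2 + a / (2 * c)) * Real.Gamma (v / 2 - a / (2 * c))) *
          (Real.cos (a * π / (2 * c)) / Real.cos (v * π / 2)) := by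
  rw [abs_lt] at h
  have hc2 : (0:ℝ) < 2*c := by linarith
  have hp : 0 < v/2 - a/(2*c) := by
    rw [sub_pos, div_lt_div_iff₀ hc2 two_pos]
    nlinarith [h.2]
  have hq : 0 < v/2 + a/(2*c) := by
    have : -(v/2) < a/(2*c) := by
      rw [neg_lt, ← neg_div, div_lt_div_iff₀ hc2 two_pos]
      nlinarith [h.1]
    linarith
  have hu : (0:ℝ) < 1 - v := by linarith
  have hderiv : ∀ x ∈ Set.Ioi (0:ℝ),
      HasDerivWithinAt (fun x : ℝ => Real.exp ((-(2*c))*x))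
        ((-(2*c)) * Real.exp ((-(2*c))*x)) (Set.Ioi 0) x := by
    intro x _
    have h1 : HasDerivAt (fun x : ℝ => (-(2*c))*x) (-(2*c)) x := by
      have h0 := (hasDerivAt_id x).const_mul (-(2*c))
      rwa [mul_one] at h0
    have h2 := h1.exp
    rw [mul_comm (Real.exp ((-(2*c))*x)) (-(2*c))] at h2
    exact h2.hasDerivWithinAt
  have hinj : Set.InjOn (fun x : ℝ => Real.exp ((-(2*c))*x)) (Set.Ioi 0) := by
    intro x _ y _ hxy
    have hxy' := Real.exp_injective hxy
    exact mul_left_cancel₀ (neg_ne_zero.mpr hc2.ne') hxy'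
  have hsub := MeasureTheory.integral_image_eq_integral_abs_deriv_smul measurableSet_Ioi hderiv hinj
      (fun t : ℝ => (2:ℝ)^(v-2)/c *
        (t ^ (v/2 - a/(2*c) - 1) * (1-t) ^ (1-v-1) + t ^ (v/2 + a/(2*c) - 1) * (1-t) ^ (1-v-1)))
  rw [exp_neg_image hc2] at hsub
  simp only [smul_eq_mul] at hsub
  have heq : ∀ x ∈ Set.Ioi (0:ℝ),
      Real.cosh (a*x) / Real.sinh (c*x) ^ v
        = |(-(2*c)) * Real.exp ((-(2*c))*x)| *
          ((2:ℝ)^(v-2)/c *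
            (Real.exp ((-(2*c))*x) ^ (v/2 - a/(2*c) - 1) * (1 - Real.exp ((-(2*c))*x)) ^ (1-v-1)
              + Real.exp ((-(2*c))*x) ^ (v/2 + a/(2*c) - 1)
                * (1 - Real.exp ((-(2*c))*x)) ^ (1-v-1))) :=
    fun x hx => (my_pointwise a c v hc hx).symm
  rw [MeasureTheory.setIntegral_congr_fun measurableSet_Ioi heq, ← hsub]
  have hint : ∫ t in Set.Ioo (0:ℝ) 1, (2:ℝ)^(v-2)/c *
        (t ^ (v/2 - a/(2*c) - 1) * (1-t) ^ (1-v-1) + t ^ (v/2 + a/(2*c) - 1) * (1-t) ^ (1-v-1))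
      = (2:ℝ)^(v-2)/c *
        ((∫ t in Set.Ioo (0:ℝ) 1, t ^ (v/2 - a/(2*c) - 1) * (1-t) ^ (1-v-1))
          + ∫ t in Set.Ioo (0:ℝ) 1, t ^ (v/2 + a/(2*c) - 1) * (1-t) ^ (1-v-1)) := by
    rw [MeasureTheory.integral_const_mul _ _,
      MeasureTheory.integral_add (my_beta_integrableOn hp hu) (my_beta_integrableOn hq hu)]
  rw [hint, my_beta_value hp hu, my_beta_value hq hu]
  rw [show (v/2 - a/(2*c)) + (1-v) = 1 - (v/2 + a/(2*c)) by ring,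
    show (v/2 + a/(2*c)) + (1-v) = 1 - (v/2 - a/(2*c)) by ring,
    show (1:ℝ) - v = 1 - ((v/2 - a/(2*c)) + (v/2 + a/(2*c))) by ring]
  rw [gamma_sum_identity hp hq (by nlinarith [h.1, h.2])]
  rw [show ((v/2 + a/(2*c)) - (v/2 - a/(2*c)))*π/2 = a*π/(2*c) by field_simp; ring,
    show (v/2 - a/(2*c)) + (v/2 + a/(2*c)) = v by ring]
  have hGv : Real.Gamma v ≠ 0 := (Real.Gamma_pos_of_pos hv0).ne'
  have hcos : Real.cos (v*π/2) ≠ 0 := by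
    have := Real.pi_pos
    exact (Real.cos_pos_of_mem_Ioo ⟨by nlinarith, by nlinarith⟩).ne'
  field_simp
end
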